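/- arXiv:2505.07048 — 8 statements merged into one kernel-verified Lean document; each statement's English description precedes it below -/
import Mathlib

section
/- Let Ω be a nonempty open subset of ℂ. Then the set S_uc \ S_u is strongly 𝔠-algebrable in H(Ω)^ℕ: there exists a subset B of H(Ω)^ℕ of cardinality 𝔠 (the continuum) such that for every m ≥ 1, every choice of pairwise distinct elements b_1, …, b_m of B, and every nonzero complex polynomial P in m variables with zero constant term, the sequence P(b_1, …, b_m) (where products of sequences are taken coordinatewise, (f_n)·(g_n) = (f_n·g_n)) is a nonzero element of S_uc \ S_u. -/
open Filter Topology

set_option synthInstance.maxHeartbeats 1000000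
set_option maxHeartbeats 1000000

noncomputable section

/-- The subalgebra of `C(Ω, ℂ)` consisting of (restrictions to `Ω` of) functions
holomorphic on `Ω`. -/
def Hol (Ω : Set ℂ) : Subalgebra ℂ C(Ω, ℂ) where
  carrier := {f | ∃ g : ℂ → ℂ, DifferentiableOn ℂ g Ω ∧ ∀ z : Ω, f z = g z}
  mul_mem' := by
    rintro f₁ f₂ ⟨g₁, hg₁, he₁⟩ ⟨g₂, hg₂, he₂⟩
    exact ⟨g₁ * g₂, hg₁.mul hg₂, fun z => by simp [he₁ z, he₂ z]⟩
  add_mem' := by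
    rintro f₁ f₂ ⟨g₁, hg₁, he₁⟩ ⟨g₂, hg₂, he₂⟩
    exact ⟨g₁ + g₂, hg₁.add hg₂, fun z => by simp [he₁ z, he₂ z]⟩
  algebraMap_mem' := fun c => ⟨fun _ => c, differentiableOn_const c, fun _ => rfl⟩

/-- The space `H(Ω)^ℕ` of sequences of holomorphic functions on `Ω`, with the
product topology (each factor carrying the compact-open topology). -/
abbrev HSeq (Ω : Set ℂ) := ℕ → Hol Ω

/-- Sequences tending to `0` pointwise on `Ω`. -/
def Sp (Ω : Set ℂ) : Set (HSeq Ω) :=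
  {F | ∀ z : Ω, Tendsto (fun n => (F n : C(Ω, ℂ)) z) atTop (𝓝 0)}

/-- Sequences tending to `0` uniformly on each compact subset of `Ω`. -/
def Suc (Ω : Set ℂ) : Set (HSeq Ω) :=
  {F | ∀ K : Set Ω, IsCompact K →
    TendstoUniformlyOn (fun n (z : Ω) => (F n : C(Ω, ℂ)) z) 0 atTop K}

/-- Sequences tending to `0` uniformly on `Ω`. -/
def Su (Ω : Set ℂ) : Set (HSeq Ω) :=
  {F | TendstoUniformly (fun n (z : Ω) => (F n : C(Ω, ℂ)) z) 0 atTop}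

/-- Restriction of a holomorphic function on `Ω₂` to a subset `Ω₁ ⊆ Ω₂`. -/
def holRestrict {Ω₁ Ω₂ : Set ℂ} (h : Ω₁ ⊆ Ω₂) (f : Hol Ω₂) : Hol Ω₁ := by
  refine ⟨(f : C(Ω₂, ℂ)).comp ⟨Set.inclusion h, continuous_inclusion h⟩, ?_⟩
  obtain ⟨g, hg, he⟩ := f.2
  exact ⟨g, hg.mono h, fun z => he ⟨z, h z.2⟩⟩

end

/- ### Auxiliary lemmas -/

/-- On a nonempty open `Ω ⊆ ℂ` there is a holomorphic function whose real part is
unbounded above. -/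
lemma aux_exists_phi (Ω : Set ℂ) (hΩ : IsOpen Ω) (hne : Ω.Nonempty) :
    ∃ φ : ℂ → ℂ, DifferentiableOn ℂ φ Ω ∧ ∀ M : ℝ, ∃ z ∈ Ω, M ≤ (φ z).re := by
  by_cases hU : Ω = Set.univ
  · exact ⟨id, differentiableOn_id, fun M => ⟨M, by simp [hU]⟩⟩
  · have hfr : (frontier Ω).Nonempty := by
      rw [Set.nonempty_iff_ne_empty]
      intro h
      have hclopen : IsClopen Ω := isClopen_iff_frontier_eq_empty.mpr h
      rcases isClopen_iff.mp hclopen with h1 | h1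
      · exact hne.ne_empty h1
      · exact hU h1
    obtain ⟨w, hw⟩ := hfr
    have hwcl : w ∈ closure Ω := hw.1
    have hwΩ : w ∉ Ω := by
      rw [hΩ.frontier_eq] at hw
      exact hw.2
    set ψ : ℂ → ℂ := fun z => (z - w)⁻¹ with hψ
    have hψd : DifferentiableOn ℂ ψ Ω := by
      apply DifferentiableOn.inv
      · exact (differentiable_id.sub_const w).differentiableOn
      · intro z hz
        exact sub_ne_zero.mpr (fun h => hwΩ (h ▸ hz))
    have hψu : ∀ M : ℝ, ∃ z ∈ Ω, M ≤ ‖ψ z‖ := by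
      intro M
      have hM : (0:ℝ) < (max M 1)⁻¹ := by positivity
      obtain ⟨z, hzΩ, hz⟩ := Metric.mem_closure_iff.mp hwcl _ hM
      refine ⟨z, hzΩ, ?_⟩
      have hzw : z ≠ w := fun h => hwΩ (h ▸ hzΩ)
      have hd : 0 < ‖z - w‖ := by
        simpa using sub_ne_zero.mpr hzw
      have hlt : ‖z - w‖ < (max M 1)⁻¹ := by
        rw [dist_comm] at hz
        simpa [Complex.dist_eq] using hz
      have : max M 1 < (‖z - w‖)⁻¹ := by
        rw [lt_inv_comm₀ (by positivity) hd]
        exact hlt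
      have habs : ‖ψ z‖ = (‖z - w‖)⁻¹ := by
        simp [hψ, map_inv₀]
      rw [habs]
      exact le_of_lt (lt_of_le_of_lt (le_max_left M 1) this)
    have key : ∃ ι : ℂ, ∀ M : ℝ, ∃ z ∈ Ω, M ≤ (ι * ψ z).re := by
      by_contra h
      push_neg at h
      obtain ⟨M₁, hM₁⟩ := h 1
      obtain ⟨M₂, hM₂⟩ := h (-1)
      obtain ⟨M₃, hM₃⟩ := h Complex.I
      obtain ⟨M₄, hM₄⟩ := h (-Complex.I)
      obtain ⟨z, hzΩ, hz⟩ := hψu (|M₁| + |M₂| + |M₃| + |M₄| + 1)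
      have h1 : (ψ z).re < M₁ := by simpa using hM₁ z hzΩ
      have h2 : -(ψ z).re < M₂ := by simpa using hM₂ z hzΩ
      have h3 : -(ψ z).im < M₃ := by
        have := hM₃ z hzΩ
        simpa [Complex.mul_re] using this
      have h4 : (ψ z).im < M₄ := by
        have := hM₄ z hzΩ
        simpa [Complex.mul_re] using this
      have habs : ‖ψ z‖ ≤ |(ψ z).re| + |(ψ z).im| :=
        Complex.norm_le_abs_re_add_abs_im _
      rcases abs_cases (ψ z).re with ⟨hre, _⟩ | ⟨hre, _⟩ <;>
        rcases abs_cases (ψ z).im with ⟨him, _⟩ | ⟨him, _⟩ <;>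
        rcases abs_cases M₁ with ⟨e1, _⟩ | ⟨e1, _⟩ <;>
        rcases abs_cases M₂ with ⟨e2, _⟩ | ⟨e2, _⟩ <;>
        rcases abs_cases M₃ with ⟨e3, _⟩ | ⟨e3, _⟩ <;>
        rcases abs_cases M₄ with ⟨e4, _⟩ | ⟨e4, _⟩ <;>
        linarith
    obtain ⟨ι, hι⟩ := key
    exact ⟨fun z => ι * ψ z, hψd.const_mul ι, hι⟩

/-- A finite nonzero combination of exponentials `∑ aⱼ exp(tⱼ w)` with distinct positive
frequencies is eventually of norm at least `1` on far-right half-planes. -/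
lemma aux_exp_lower {ι : Type*} [DecidableEq ι] (S : Finset ι) (hS : S.Nonempty)
    (a : ι → ℂ) (t : ι → ℝ) (ha : ∀ j ∈ S, a j ≠ 0) (ht : ∀ j ∈ S, 0 < t j)
    (hinj : Set.InjOn t S) :
    ∃ R₀ : ℝ, ∀ w : ℂ, R₀ ≤ w.re →
      1 ≤ ‖∑ j ∈ S, a j * Complex.exp ((t j : ℂ) * w)‖ := by
  obtain ⟨j₀, hj₀S, hj₀max⟩ := S.exists_max_image t hS
  set T := t j₀ with hT
  set α := ‖a j₀‖ with hα
  have hαpos : 0 < α := norm_pos_iff.mpr (ha j₀ hj₀S)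
  set g : ℝ → ℝ := fun R => ∑ j ∈ S.erase j₀, ‖a j‖ * Real.exp ((t j - T) * R) with hg
  have hgt : Tendsto g atTop (𝓝 0) := by
    have h0 : (0:ℝ) = ∑ j ∈ S.erase j₀, (0:ℝ) := by simp
    rw [h0]
    apply tendsto_finset_sum
    intro j hj
    have hjS := Finset.mem_of_mem_erase hj
    have hlt : t j - T < 0 := by
      refine sub_neg.mpr (lt_of_le_of_ne (hj₀max j hjS) ?_)
      intro h
      exact (Finset.ne_of_mem_erase hj) (hinj hjS hj₀S h)
    have hlin : Tendsto (fun R : ℝ => (t j - T) * R) atTop atBot :=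
      (tendsto_const_mul_atBot_of_neg hlt).mpr tendsto_id
    have hexp : Tendsto (fun R : ℝ => Real.exp ((t j - T) * R)) atTop (𝓝 0) :=
      Real.tendsto_exp_atBot.comp hlin
    simpa using hexp.const_mul ‖a j‖
  have hTpos : 0 < T := ht j₀ hj₀S
  have hexpT : Tendsto (fun R : ℝ => Real.exp (T * R)) atTop atTop :=
    Real.tendsto_exp_atTop.comp ((tendsto_const_mul_atTop_of_pos hTpos).mpr tendsto_id)
  have hev1 : ∀ᶠ R in atTop, g R < α / 2 :=
    hgt.eventually (gt_mem_nhds (by positivity))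
  have hev2 : ∀ᶠ R in atTop, 2 / α ≤ Real.exp (T * R) :=
    hexpT.eventually_ge_atTop (2 / α)
  obtain ⟨R₀, hR₀⟩ := eventually_atTop.mp (hev1.and hev2)
  refine ⟨R₀, fun w hw => ?_⟩
  set R := w.re with hR
  obtain ⟨hgR, hER⟩ := hR₀ R hw
  set E := Real.exp (T * R) with hE
  have hEpos : 0 < E := Real.exp_pos _
  set f : ι → ℂ := fun j => a j * Complex.exp ((t j : ℂ) * w) with hf
  have hsplit : ∑ j ∈ S, f j = f j₀ + ∑ j ∈ S.erase j₀, f j :=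
    (Finset.add_sum_erase S f hj₀S).symm
  have hnorm_exp : ∀ s : ℝ, ‖Complex.exp ((s : ℂ) * w)‖ = Real.exp (s * R) := by
    intro s
    rw [Complex.norm_exp]
    congr 1
    simp [Complex.mul_re, hR]
  have hfj₀ : ‖f j₀‖ = α * E := by
    rw [hf]
    simp only [norm_mul]
    rw [hnorm_exp T]
  have hrest : ‖∑ j ∈ S.erase j₀, f j‖ ≤ g R * E := by
    calc ‖∑ j ∈ S.erase j₀, f j‖ ≤ ∑ j ∈ S.erase j₀, ‖f j‖ := norm_sum_le _ _
      _ = ∑ j ∈ S.erase j₀, ‖a j‖ * Real.exp ((t j - T) * R) * E := by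
          refine Finset.sum_congr rfl fun j hj => ?_
          rw [hf]
          simp only [norm_mul]
          rw [hnorm_exp (t j), hE, mul_assoc, ← Real.exp_add]
          ring_nf
      _ = g R * E := by rw [hg, Finset.sum_mul]
  have hlow : α * E - g R * E ≤ ‖∑ j ∈ S, f j‖ := by
    have htri := norm_add_le (∑ j ∈ S, f j) (-(∑ j ∈ S.erase j₀, f j))
    rw [hsplit] at htri
    simp only [add_neg_cancel_right, norm_neg] at htri
    rw [← hsplit] at htri
    rw [hfj₀] at htri
    linarith [hrest]
  have h1 : 1 ≤ (α / 2) * E := by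
    have h2 : (α / 2) * (2 / α) ≤ (α / 2) * E :=
      mul_le_mul_of_nonneg_left hER (by positivity)
    have h3 : (α / 2) * (2 / α) = 1 := by field_simp
    linarith
  have h4 : (α / 2) * E ≤ (α - g R) * E :=
    mul_le_mul_of_nonneg_right (by linarith) hEpos.le
  calc (1:ℝ) ≤ (α / 2) * E := h1
    _ ≤ (α - g R) * E := h4
    _ = α * E - g R * E := by ring
    _ ≤ ‖∑ j ∈ S, f j‖ := hlow

/-- There is a set of positive reals of continuum cardinality that is linearly
independent over `ℚ`. -/
lemma aux_linIndep_pos : ∃ C : Set ℝ, Cardinal.mk C = Cardinal.continuum ∧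
    (∀ x ∈ C, 0 < x) ∧ LinearIndependent ℚ ((↑) : C → ℝ) := by
  set s := Module.Basis.ofVectorSpaceIndex ℚ ℝ with hs
  have hli : LinearIndependent ℚ ((↑) : s → ℝ) :=
    Module.Basis.ofVectorSpaceIndex.linearIndependent ℚ ℝ
  have hcard : Cardinal.mk s = Cardinal.continuum := by
    rw [← Real.rank_rat_real]
    exact (Module.Basis.ofVectorSpace ℚ ℝ).mk_eq_rank''
  set f : s → ℝ := fun x => |(x : ℝ)| with hf
  have hne : ∀ x : s, (x : ℝ) ≠ 0 := fun x => hli.ne_zero x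
  have hinj : Function.Injective f := by
    intro x y hxy
    rcases abs_eq_abs.mp hxy with h | h
    · exact Subtype.ext h
    · by_cases hxy' : x = y
      · exact hxy'
      · exfalso
        have hsum : ∑ i ∈ ({x, y} : Finset s), (1:ℚ) • (i : ℝ) = 0 := by
          rw [Finset.sum_insert (by simp [hxy']), Finset.sum_singleton]
          simp [h]
        have := linearIndependent_iff'.mp hli {x, y} (fun _ => 1) hsum x (by simp)
        norm_num at this
  have hfli : LinearIndependent ℚ f := by
    rw [linearIndependent_iff']
    intro S g hsum i hi
    set g' : s → ℚ := fun j => if 0 ≤ (j : ℝ) then g j else -g j with hg'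
    have hsum' : ∑ j ∈ S, g' j • (j : ℝ) = 0 := by
      rw [← hsum]
      refine Finset.sum_congr rfl fun j _ => ?_
      by_cases hj : 0 ≤ (j : ℝ)
      · simp [hg', hj, hf, abs_of_nonneg hj]
      · push_neg at hj
        simp only [hg', hf, if_neg (not_le.mpr hj), abs_of_neg hj]
        rw [neg_smul, smul_neg]
    have := linearIndependent_iff'.mp hli S g' hsum' i hi
    by_cases hj : 0 ≤ (i : ℝ)
    · simpa [hg', hj] using this
    · simp only [hg', if_neg (not_le.mpr (not_le.mp hj))] at this
      simpa using neg_eq_zero.mp this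
  refine ⟨Set.range f, ?_, ?_, ?_⟩
  · rw [Cardinal.mk_range_eq _ hinj, hcard]
  · rintro x ⟨y, rfl⟩
    exact abs_pos.mpr (hne y)
  · exact (linearIndepOn_id_range_iff hinj).mpr hfli

/-- Evaluation of a sequence of holomorphic functions at an index and a point, as an
algebra homomorphism. -/
noncomputable def evalHom (Ω : Set ℂ) (n : ℕ) (z : Ω) : HSeq Ω →ₐ[ℂ] ℂ :=
  ((ContinuousMap.evalAlgHom ℂ ℂ z).comp (Hol Ω).val).comp
    (Pi.evalAlgHom ℂ (fun _ : ℕ => Hol Ω) n)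

lemma evalHom_apply (Ω : Set ℂ) (n : ℕ) (z : Ω) (F : HSeq Ω) :
    evalHom Ω n z F = (F n : C(Ω, ℂ)) z := rfl

lemma aux_prod (m : ℕ) (c : Fin m → ℝ) (k : Fin m → ℕ) (w N : ℂ) :
    ∏ i, (Complex.exp ((c i : ℂ) * w) / N) ^ (k i) =
      Complex.exp (((∑ i, (k i : ℝ) * c i : ℝ) : ℂ) * w) / N ^ (∑ i, k i) := by
  simp_rw [div_pow, ← Complex.exp_nat_mul]
  rw [Finset.prod_div_distrib, Finset.prod_pow_eq_pow_sum, ← Complex.exp_sum]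
  congr 1
  push_cast
  rw [Finset.sum_mul]
  exact congrArg Complex.exp (Finset.sum_congr rfl fun i _ => by ring)

/-- `S_uc \ S_u` is strongly `𝔠`-algebrable in `H(Ω)^ℕ`: there is a set
`B ⊆ H(Ω)^ℕ` of cardinality `𝔠` such that for all `m ≥ 1`, all pairwise distinct
`b_1, …, b_m ∈ B` and every nonzero polynomial `P` in `m` variables with zero constant
term, `P(b_1, …, b_m)` (products taken coordinatewise) is a nonzero element of
`S_uc \ S_u`. -/
theorem Suc_diff_Su_strongly_continuum_algebrable
    (Ω : Set ℂ) (hΩ : IsOpen Ω) (hne : Ω.Nonempty) :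
    ∃ B : Set (HSeq Ω), Cardinal.mk B = Cardinal.continuum ∧
      ∀ (m : ℕ), 1 ≤ m → ∀ b : Fin m → HSeq Ω,
        Function.Injective b → (∀ i, b i ∈ B) →
        ∀ P : MvPolynomial (Fin m) ℂ, P ≠ 0 → MvPolynomial.coeff 0 P = 0 →
          MvPolynomial.aeval b P ≠ 0 ∧ MvPolynomial.aeval b P ∈ Suc Ω \ Su Ω := by
  classical
  obtain ⟨φ, hφd, hφu⟩ := aux_exists_phi Ω hΩ hne
  obtain ⟨C, hCcard, hCpos, hCli⟩ := aux_linIndep_pos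
  have hφc : Continuous (fun z : Ω => φ z) := hφd.continuousOn.restrict
  have hcont : ∀ (c : ℝ) (n : ℕ),
      Continuous (fun z : Ω => Complex.exp ((c : ℂ) * φ z) / ((n : ℂ) + 1)) := by
    intro c n
    exact (Complex.continuous_exp.comp (continuous_const.mul hφc)).div_const _
  have hmem : ∀ (c : ℝ) (n : ℕ), (⟨_, hcont c n⟩ : C(Ω, ℂ)) ∈ Hol Ω := by
    intro c n
    refine ⟨fun w => Complex.exp ((c : ℂ) * φ w) / ((n : ℂ) + 1), ?_, fun z => rfl⟩
    exact ((hφd.const_mul _).cexp).div_const _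
  set e : ℝ → HSeq Ω := fun c n => ⟨⟨_, hcont c n⟩, hmem c n⟩ with he
  have heval : ∀ (c : ℝ) (n : ℕ) (z : Ω),
      ((e c n : C(Ω, ℂ)) z) = Complex.exp ((c : ℂ) * φ z) / ((n : ℂ) + 1) :=
    fun _ _ _ => rfl
  have heinj : Set.InjOn e C := by
    intro c hc c' hc' hee
    obtain ⟨z, hzΩ, hz⟩ := hφu 1
    have h0 : ((e c 0 : C(Ω, ℂ)) ⟨z, hzΩ⟩) = ((e c' 0 : C(Ω, ℂ)) ⟨z, hzΩ⟩) := by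
      rw [congrFun hee 0]
    rw [heval, heval] at h0
    have h1 : Complex.exp ((c : ℂ) * φ z) = Complex.exp ((c' : ℂ) * φ z) := by
      simpa using h0
    have h2 : Real.exp (c * (φ z).re) = Real.exp (c' * (φ z).re) := by
      have := congrArg (‖·‖) h1
      simpa [Complex.norm_exp, Complex.mul_re] using this
    have h3 : c * (φ z).re = c' * (φ z).re := Real.exp_eq_exp.mp h2
    have hzpos : (0 : ℝ) < (φ z).re := lt_of_lt_of_le one_pos hz
    exact mul_right_cancel₀ (ne_of_gt hzpos) h3
  refine ⟨e '' C, ?_, ?_⟩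
  · rw [Cardinal.mk_image_eq_of_injOn _ _ heinj, hCcard]
  intro m hm b hbinj hbB P hP hP0
  choose c hcC hce using fun i => hbB i
  have hcinj : Function.Injective c := by
    intro i j h
    apply hbinj
    rw [← hce i, ← hce j, h]
  have hcpos : ∀ i, 0 < c i := fun i => hCpos _ (hcC i)
  have hcli : LinearIndependent ℚ c := by
    have hceq : c = (fun x : C => (x : ℝ)) ∘ (fun i => (⟨c i, hcC i⟩ : C)) := rfl
    rw [hceq]
    exact hCli.comp _ (fun i j h => hcinj (congrArg Subtype.val h))
  set t : (Fin m →₀ ℕ) → ℝ := fun k => ∑ i, (k i : ℝ) * c i with hts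
  have hsupp0 : ∀ k ∈ P.support, k ≠ 0 := by
    intro k hk h
    rw [h] at hk
    exact (MvPolynomial.mem_support_iff.mp hk) hP0
  have htpos : ∀ k ∈ P.support, 0 < t k := by
    intro k hk
    obtain ⟨i, hi⟩ := Finsupp.ne_iff.mp (hsupp0 k hk)
    simp only [Finsupp.coe_zero, Pi.zero_apply] at hi
    apply Finset.sum_pos' (fun i _ => mul_nonneg (Nat.cast_nonneg _) (hcpos i).le)
    exact ⟨i, Finset.mem_univ i,
      mul_pos (by exact_mod_cast Nat.pos_of_ne_zero hi) (hcpos i)⟩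
  have htinj : Function.Injective t := by
    intro k k' h
    have hq : ∀ (j : ℕ) (r : ℝ), (j : ℚ) • r = (j : ℝ) * r := by
      intro j r
      rw [Rat.smul_def]
      norm_num
    have hsum : ∑ i ∈ Finset.univ, ((k i : ℚ) - (k' i : ℚ)) • (c i) = 0 := by
      simp only [sub_smul, hq]
      rw [Finset.sum_sub_distrib, sub_eq_zero]
      exact h
    have hz := linearIndependent_iff'.mp hcli Finset.univ _ hsum
    ext i
    have h2 := hz i (Finset.mem_univ i)
    have h3 : (k i : ℚ) = (k' i : ℚ) := by linarith [sub_eq_zero.mp h2]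
    exact_mod_cast h3
  have hd1 : ∀ k ∈ P.support, 1 ≤ ∑ i, k i := by
    intro k hk
    obtain ⟨i, hi⟩ := Finsupp.ne_iff.mp (hsupp0 k hk)
    simp only [Finsupp.coe_zero, Pi.zero_apply] at hi
    calc 1 ≤ k i := Nat.pos_of_ne_zero hi
      _ ≤ ∑ j, k j := Finset.single_le_sum (fun j _ => Nat.zero_le _) (Finset.mem_univ i)
  have hval : ∀ (n : ℕ) (z : Ω), ((MvPolynomial.aeval b P n : C(Ω, ℂ)) z) =
      ∑ k ∈ P.support, MvPolynomial.coeff k P *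
        Complex.exp (((t k : ℝ) : ℂ) * φ z) / ((n : ℂ) + 1) ^ (∑ i, k i) := by
    intro n z
    have h1 : ((MvPolynomial.aeval b P n : C(Ω, ℂ)) z)
        = evalHom Ω n z (MvPolynomial.aeval b P) := rfl
    rw [h1, ← AlgHom.comp_apply, MvPolynomial.comp_aeval, MvPolynomial.aeval_def,
      MvPolynomial.eval₂_eq']
    refine Finset.sum_congr rfl fun k hk => ?_
    have h2 : ∀ i, evalHom Ω n z (b i) = Complex.exp ((c i : ℂ) * φ z) / ((n : ℂ) + 1) := by
      intro i
      rw [← hce i]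
      rfl
    simp only [h2, hts]
    rw [aux_prod m c (fun i => k i) (φ z) ((n : ℂ) + 1), Algebra.algebraMap_self_apply,
      mul_div_assoc]
  have hbig : ∀ n : ℕ, ∃ z : Ω, 1 ≤ ‖((MvPolynomial.aeval b P n : C(Ω, ℂ)) z)‖ := by
    intro n
    have hSne : P.support.Nonempty := MvPolynomial.support_nonempty.mpr hP
    have hN : ((n : ℂ) + 1) ≠ 0 := by
      exact_mod_cast Nat.succ_ne_zero n
    obtain ⟨R₀, hR₀⟩ := aux_exp_lower P.support hSne
      (fun k => MvPolynomial.coeff k P / ((n : ℂ) + 1) ^ (∑ i, k i)) t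
      (fun k hk => div_ne_zero (MvPolynomial.mem_support_iff.mp hk) (pow_ne_zero _ hN))
      htpos htinj.injOn
    obtain ⟨z, hzΩ, hz⟩ := hφu R₀
    refine ⟨⟨z, hzΩ⟩, ?_⟩
    rw [hval n ⟨z, hzΩ⟩]
    have hsum_eq : ∑ k ∈ P.support, MvPolynomial.coeff k P *
          Complex.exp (((t k : ℝ) : ℂ) * φ z) / ((n : ℂ) + 1) ^ (∑ i, k i)
        = ∑ k ∈ P.support, (MvPolynomial.coeff k P / ((n : ℂ) + 1) ^ (∑ i, k i)) *
          Complex.exp (((t k : ℝ) : ℂ) * φ z) :=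
      Finset.sum_congr rfl fun k _ => by ring
    rw [hsum_eq]
    exact hR₀ (φ z) hz
  have hne0 : MvPolynomial.aeval b P ≠ 0 := by
    intro h0
    obtain ⟨z, hz⟩ := hbig 0
    rw [h0] at hz
    simp at hz
    linarith
  have hSuc : MvPolynomial.aeval b P ∈ Suc Ω := by
    intro K hK
    rw [Metric.tendstoUniformlyOn_iff]
    intro ε hε
    have hρ : Continuous (fun z : Ω => (φ z).re) := Complex.continuous_re.comp hφc
    obtain ⟨M, hM⟩ := (hK.image hρ).bddAbove
    rw [mem_upperBounds] at hM
    have hM' : ∀ z ∈ K, (φ (z : Ω)).re ≤ M := fun z hz => hM _ (Set.mem_image_of_mem _ hz)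
    set A := ∑ k ∈ P.support, ‖MvPolynomial.coeff k P‖ * Real.exp (t k * M) with hA
    have hbound : ∀ (n : ℕ), ∀ z ∈ K,
        ‖((MvPolynomial.aeval b P n : C(Ω, ℂ)) z)‖ ≤ A / ((n : ℝ) + 1) := by
      intro n z hzK
      rw [hval n z]
      have hn1 : (1 : ℝ) ≤ (n : ℝ) + 1 := by
        have := Nat.cast_nonneg (α := ℝ) n
        linarith
      calc ‖∑ k ∈ P.support, MvPolynomial.coeff k P *
              Complex.exp (((t k : ℝ) : ℂ) * φ z) / ((n : ℂ) + 1) ^ (∑ i, k i)‖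
          ≤ ∑ k ∈ P.support, ‖MvPolynomial.coeff k P *
              Complex.exp (((t k : ℝ) : ℂ) * φ z) / ((n : ℂ) + 1) ^ (∑ i, k i)‖ :=
            norm_sum_le _ _
        _ ≤ ∑ k ∈ P.support,
              (‖MvPolynomial.coeff k P‖ * Real.exp (t k * M)) / ((n : ℝ) + 1) := by
            refine Finset.sum_le_sum fun k hk => ?_
            rw [norm_div, norm_mul, norm_pow]
            have hnorm_exp : ‖Complex.exp (((t k : ℝ) : ℂ) * φ z)‖
                = Real.exp (t k * (φ (z : Ω)).re) := by
              rw [Complex.norm_exp]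
              congr 1
              simp [Complex.mul_re]
            have hNnorm : ‖((n : ℂ) + 1)‖ = (n : ℝ) + 1 := by
              rw [show ((n : ℂ) + 1) = ((n + 1 : ℕ) : ℂ) by push_cast; ring,
                Complex.norm_natCast]
              push_cast
              ring
            rw [hnorm_exp, hNnorm]
            have h1 : Real.exp (t k * (φ (z : Ω)).re) ≤ Real.exp (t k * M) :=
              Real.exp_le_exp.mpr (mul_le_mul_of_nonneg_left (hM' z hzK) (htpos k hk).le)
            have h2 : ((n : ℝ) + 1) ≤ ((n : ℝ) + 1) ^ (∑ i, k i) :=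
              le_self_pow₀ (by linarith) (Nat.one_le_iff_ne_zero.mp (hd1 k hk))
            exact div_le_div₀ (mul_nonneg (norm_nonneg _) (Real.exp_pos _).le)
              (mul_le_mul_of_nonneg_left h1 (norm_nonneg _)) (by linarith) h2
        _ = A / ((n : ℝ) + 1) := by rw [hA, Finset.sum_div]
    have htend : Tendsto (fun n : ℕ => A / ((n : ℝ) + 1)) atTop (𝓝 0) := by
      have h := (tendsto_const_div_atTop_nhds_zero_nat A).comp (tendsto_add_atTop_nat 1)
      convert h using 2 with n
      simp [Function.comp]
    filter_upwards [htend.eventually (gt_mem_nhds hε)] with n hn z hzK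
    rw [Pi.zero_apply, dist_zero_left]
    exact lt_of_le_of_lt (hbound n z hzK) hn
  have hSu : MvPolynomial.aeval b P ∉ Su Ω := by
    intro hs
    rw [Su, Set.mem_setOf_eq, Metric.tendstoUniformly_iff] at hs
    obtain ⟨n, hn⟩ := (hs 1 one_pos).exists
    obtain ⟨z, hz⟩ := hbig n
    have h2 := hn z
    rw [Pi.zero_apply, dist_zero_left] at h2
    linarith
  exact ⟨hne0, hSuc, hSu⟩
end

section
/- Let Ω be a nonempty open subset of ℂ. Then there exists an infinite-dimensional vector subspace X of H(Ω)^ℕ together with a complete norm ‖·‖ on X such that X \ {0} ⊆ S_p \ S_uc and the norm topology on X is stronger than the topology inherited from H(Ω)^ℕ (i.e., the inclusion map (X, ‖·‖) → H(Ω)^ℕ is continuous). -/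
open Filter Topology

set_option synthInstance.maxHeartbeats 1000000
set_option maxHeartbeats 1000000

/-! ### Auxiliary constructions for the proof -/

namespace SpSucAux

open Polynomial

noncomputable section

/-- Polynomials approximate `(z - b)⁻¹` uniformly on `S`. -/
def ApproxOn (S : Set ℂ) (b : ℂ) : Prop :=
  ∀ ε > 0, ∃ P : Polynomial ℂ, ∀ z ∈ S, ‖P.eval z - (z - b)⁻¹‖ ≤ ε

/-- resolvent-type identity, far version -/
lemma far_identity (z b : ℂ) (hzb : z - b ≠ 0) (hb : b ≠ 0) (N : ℕ) :
    (z - b)⁻¹ + ∑ t ∈ Finset.range N, z ^ t * (b⁻¹) ^ (t + 1)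
      = (z * b⁻¹) ^ N * (z - b)⁻¹ := by
  induction N with
  | zero => simp
  | succ N ih =>
      rw [Finset.sum_range_succ, ← add_assoc, ih]
      have key : (z - b)⁻¹ + b⁻¹ = (z * b⁻¹) * (z - b)⁻¹ := by
        have h1 : z * b⁻¹ * (z - b)⁻¹
            = (b * b⁻¹) * (z - b)⁻¹ + ((z - b) * (z - b)⁻¹) * b⁻¹ := by ring
        rw [mul_inv_cancel₀ hb, mul_inv_cancel₀ hzb] at h1
        rw [h1]; ring
      calc (z * b⁻¹) ^ N * (z - b)⁻¹ + z ^ N * b⁻¹ ^ (N + 1)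
          = (z * b⁻¹) ^ N * ((z - b)⁻¹ + b⁻¹) := by ring
        _ = (z * b⁻¹) ^ (N + 1) * (z - b)⁻¹ := by rw [key]; ring

/-- resolvent-type identity, step version -/
lemma step_identity (z b b' : ℂ) (hzb : z - b ≠ 0) (hzb' : z - b' ≠ 0) (N : ℕ) :
    (z - b')⁻¹ - ∑ t ∈ Finset.range N, (b' - b) ^ t * ((z - b)⁻¹) ^ (t + 1)
      = ((b' - b) * (z - b)⁻¹) ^ N * (z - b')⁻¹ := by
  induction N with
  | zero => simp
  | succ N ih =>
      rw [Finset.sum_range_succ, ← sub_sub, ih]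
      have key : (z - b')⁻¹ - (z - b)⁻¹ = (b' - b) * (z - b)⁻¹ * (z - b')⁻¹ := by
        have h1 : (b' - b) * (z - b)⁻¹ * (z - b')⁻¹
            = ((z - b) * (z - b)⁻¹) * (z - b')⁻¹ - ((z - b') * (z - b')⁻¹) * (z - b)⁻¹ := by
          ring
        rw [mul_inv_cancel₀ hzb, mul_inv_cancel₀ hzb'] at h1
        rw [h1]; ring
      set q := b' - b with hqdef
      set u := (z - b)⁻¹ with hudef
      set v := (z - b')⁻¹ with hvdef
      clear_value q u v
      calc (q * u) ^ N * v - q ^ N * u ^ (N + 1)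
          = (q * u) ^ N * (v - u) := by ring
        _ = (q * u) ^ (N + 1) * v := by rw [key]; ring

lemma pow_sub_pow_norm_le (x y : ℂ) (B δ : ℝ) (hx : ‖x‖ ≤ B) (hy : ‖y‖ ≤ B)
    (hδ : ‖x - y‖ ≤ δ) (hB : 0 ≤ B) (hδ0 : 0 ≤ δ) (m : ℕ) :
    ‖x ^ m - y ^ m‖ ≤ m * (B + 1) ^ m * δ := by
  induction m with
  | zero => simp [hδ0]
  | succ m ih =>
      have h1 : x ^ (m + 1) - y ^ (m + 1) = x ^ m * (x - y) + (x ^ m - y ^ m) * y := by ring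
      have hxm : ‖x ^ m‖ ≤ (B + 1) ^ m := by
        rw [norm_pow]; exact pow_le_pow_left₀ (norm_nonneg _) (by linarith) m
      have h2 : ‖x ^ (m + 1) - y ^ (m + 1)‖ ≤ ‖x ^ m‖ * ‖x - y‖ + ‖x ^ m - y ^ m‖ * ‖y‖ := by
        rw [h1]; exact (norm_add_le _ _).trans (by rw [norm_mul, norm_mul])
      have h3 : ‖x ^ m‖ * ‖x - y‖ ≤ (B + 1) ^ m * δ :=
        mul_le_mul hxm hδ (norm_nonneg _) (by positivity)
      have h4 : ‖x ^ m - y ^ m‖ * ‖y‖ ≤ (m * (B + 1) ^ m * δ) * B :=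
        mul_le_mul ih hy (norm_nonneg _) (by positivity)
      have hBp : (0:ℝ) ≤ (B+1) ^ m := by positivity
      have hkey : ((m:ℝ)+1) * (B+1)^(m+1) * δ
          = (B+1)^m*δ + (m:ℝ)*(B+1)^m*δ*B + (B+1)^m*δ*((m:ℝ)+B) := by
        rw [pow_succ]; ring
      have : ‖x ^ (m + 1) - y ^ (m + 1)‖ ≤ ((m:ℝ)+1) * (B + 1) ^ (m + 1) * δ := by
        have hnn : (0:ℝ) ≤ (B+1)^m*δ*((m:ℝ)+B) :=
          mul_nonneg (mul_nonneg hBp hδ0) (add_nonneg (Nat.cast_nonneg m) hB)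
        linarith
      simpa using this

lemma approx_far (S : Set ℂ) (R : ℝ) (b : ℂ) (hR0 : 0 ≤ R)
    (hS : ∀ z ∈ S, ‖z‖ ≤ R) (hb : 2 * R + 1 ≤ ‖b‖) : ApproxOn S b := by
  intro ε hε
  obtain ⟨N, hN⟩ : ∃ N : ℕ, (1/2 : ℝ) ^ N < ε := exists_pow_lt_of_lt_one hε (by norm_num)
  refine ⟨-∑ t ∈ Finset.range N, Polynomial.C (b⁻¹ ^ (t + 1)) * Polynomial.X ^ t,
    fun z hz => ?_⟩
  have hb1 : (1 : ℝ) ≤ ‖b‖ := by linarith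
  have hb0 : b ≠ 0 := by
    intro h; rw [h, norm_zero] at hb1; linarith
  have hzR := hS z hz
  have hzb1 : (1 : ℝ) ≤ ‖z - b‖ := by
    have h2 : ‖b‖ - ‖z‖ ≤ ‖z - b‖ := by
      rw [norm_sub_rev]; exact norm_sub_norm_le b z
    linarith
  have hzb : z - b ≠ 0 := by
    intro h; rw [h, norm_zero] at hzb1; linarith
  have heval : Polynomial.eval z (-∑ t ∈ Finset.range N, Polynomial.C (b⁻¹ ^ (t + 1)) * Polynomial.X ^ t)
      = -∑ t ∈ Finset.range N, z ^ t * (b⁻¹) ^ (t + 1) := by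
    rw [Polynomial.eval_neg, Polynomial.eval_finset_sum]
    congr 1
    refine Finset.sum_congr rfl fun t _ => ?_
    rw [Polynomial.eval_mul, Polynomial.eval_C, Polynomial.eval_pow, Polynomial.eval_X]
    ring
  rw [heval]
  have hdiff : -(∑ t ∈ Finset.range N, z ^ t * (b⁻¹) ^ (t + 1)) - (z - b)⁻¹
      = -((z * b⁻¹) ^ N * (z - b)⁻¹) := by
    rw [← far_identity z b hzb hb0 N]; ring
  rw [hdiff, norm_neg, norm_mul, norm_pow]
  have h3 : ‖z * b⁻¹‖ ≤ 1 / 2 := by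
    rw [norm_mul, norm_inv]
    rw [mul_inv_le_iff₀ (by linarith : (0:ℝ) < ‖b‖)]
    linarith
  have h4 : ‖(z - b)⁻¹‖ ≤ 1 := by
    rw [norm_inv]
    exact inv_le_one_of_one_le₀ hzb1
  calc ‖z * b⁻¹‖ ^ N * ‖(z - b)⁻¹‖ ≤ (1/2 : ℝ) ^ N * 1 := by
        exact mul_le_mul (pow_le_pow_left₀ (norm_nonneg _) h3 N) h4 (norm_nonneg _)
          (by positivity)
    _ ≤ ε := by rw [mul_one]; linarith

lemma approx_step (S : Set ℂ) (d : ℝ) (b b' : ℂ) (hd : 0 < d)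
    (hb : ∀ z ∈ S, d ≤ ‖z - b‖) (hb' : ∀ z ∈ S, d / 2 ≤ ‖z - b'‖)
    (hq : ‖b' - b‖ ≤ d / 2) (hA : ApproxOn S b) : ApproxOn S b' := by
  intro ε hε
  obtain ⟨N, hN0⟩ : ∃ N : ℕ, (1/2 : ℝ) ^ N < ε / 2 * (d / 2) :=
    exists_pow_lt_of_lt_one (by positivity) (by norm_num)
  have hN : (1/2 : ℝ) ^ N * (2 / d) ≤ ε / 2 := by
    have h := mul_le_mul_of_nonneg_right hN0.le (show (0:ℝ) ≤ 2 / d by positivity)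
    have hdd : (d / 2) * (2 / d) = (1:ℝ) := by field_simp
    have h2 : ε / 2 * (d / 2) * (2 / d) = ε / 2 := by rw [mul_assoc, hdd, mul_one]
    linarith
  set B : ℝ := 1 / d + 1 with hBdef
  have hB0 : 0 < B := by positivity
  set Cc : ℝ := (d / 2 + 1) ^ N * ((N : ℝ) * (B + 1) ^ N) * N + 1 with hCcdef
  have hCc0 : (0 : ℝ) < Cc := by positivity
  set δ : ℝ := min 1 (ε / (2 * Cc)) with hδdef
  have hδ0 : 0 < δ := by
    apply lt_min one_pos; positivity
  obtain ⟨P, hP⟩ := hA δ hδ0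
  refine ⟨∑ t ∈ Finset.range N, Polynomial.C ((b' - b) ^ t) * P ^ (t + 1), fun z hz => ?_⟩
  have hdzb := hb z hz
  have hdzb' := hb' z hz
  have hzb : z - b ≠ 0 := by
    intro h; rw [h, norm_zero] at hdzb; linarith
  have hzb' : z - b' ≠ 0 := by
    intro h; rw [h, norm_zero] at hdzb'; linarith
  set u : ℂ := (z - b)⁻¹ with hudef
  have hu : ‖u‖ ≤ 1 / d := by
    rw [hudef, norm_inv, inv_le_comm₀ (by linarith) (by positivity)]
    simpa [one_div, inv_inv] using hdzb
  have hPz : ‖P.eval z - u‖ ≤ δ := hP z hz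
  have hPzB : ‖P.eval z‖ ≤ B := by
    have := norm_le_norm_add_norm_sub' (P.eval z) u
    have hδ1 : δ ≤ 1 := min_le_left _ _
    have h5 : ‖P.eval z - u‖ ≤ 1 := le_trans hPz hδ1
    calc ‖P.eval z‖ ≤ ‖u‖ + ‖P.eval z - u‖ := by
          have h := norm_add_le u (P.eval z - u)
          simpa [add_sub_cancel] using h
      _ ≤ 1 / d + 1 := add_le_add hu h5
  have huB : ‖u‖ ≤ B := le_trans hu (by rw [hBdef]; linarith)
  have heval : Polynomial.eval z (∑ t ∈ Finset.range N, Polynomial.C ((b' - b) ^ t) * P ^ (t + 1))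
      = ∑ t ∈ Finset.range N, (b' - b) ^ t * (P.eval z) ^ (t + 1) := by
    rw [Polynomial.eval_finset_sum]
    exact Finset.sum_congr rfl fun t _ => by simp
  rw [heval]
  have key := step_identity z b b' hzb hzb' N
  rw [← hudef] at key
  clear_value u
  have hsum : (∑ t ∈ Finset.range N, (b' - b) ^ t * ((P.eval z) ^ (t + 1) - u ^ (t + 1)))
      = (∑ t ∈ Finset.range N, (b' - b) ^ t * (P.eval z) ^ (t + 1))
        - ∑ t ∈ Finset.range N, (b' - b) ^ t * u ^ (t + 1) := by
    rw [← Finset.sum_sub_distrib]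
    exact Finset.sum_congr rfl fun t _ => by ring
  have hsplit : ∑ t ∈ Finset.range N, (b' - b) ^ t * (P.eval z) ^ (t + 1) - (z - b')⁻¹
      = (∑ t ∈ Finset.range N, (b' - b) ^ t * ((P.eval z) ^ (t + 1) - u ^ (t + 1)))
        - (((b' - b) * u) ^ N * (z - b')⁻¹) := by
    rw [hsum, ← key]; ring
  rw [hsplit]
  have hterm : ∀ t ∈ Finset.range N,
      ‖(b' - b) ^ t * ((P.eval z) ^ (t + 1) - u ^ (t + 1))‖
        ≤ (d / 2 + 1) ^ N * ((N : ℝ) * (B + 1) ^ N) * δ := by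
    intro t ht
    have htN : t + 1 ≤ N := Nat.succ_le_of_lt (Finset.mem_range.mp ht)
    rw [norm_mul, norm_pow]
    have h1 : ‖b' - b‖ ^ t ≤ (d / 2 + 1) ^ N := by
      have hle : ‖b' - b‖ ≤ d / 2 + 1 := by linarith
      calc ‖b' - b‖ ^ t ≤ (d / 2 + 1) ^ t := pow_le_pow_left₀ (norm_nonneg _) hle t
        _ ≤ (d / 2 + 1) ^ N := pow_le_pow_right₀ (by linarith) (by omega)
    have h2 := pow_sub_pow_norm_le (P.eval z) u B δ hPzB huB hPz hB0.le hδ0.le (t + 1)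
    have h3 : ((t + 1 : ℕ) : ℝ) * (B + 1) ^ (t + 1) * δ ≤ (N : ℝ) * (B + 1) ^ N * δ := by
      have hc1 : ((t + 1 : ℕ) : ℝ) ≤ (N : ℝ) := by exact_mod_cast htN
      have hc2 : (B + 1) ^ (t + 1) ≤ (B + 1) ^ N := pow_le_pow_right₀ (by linarith) htN
      have : ((t + 1 : ℕ) : ℝ) * (B + 1) ^ (t + 1) ≤ (N : ℝ) * (B + 1) ^ N :=
        mul_le_mul hc1 hc2 (by positivity) (by positivity)
      exact mul_le_mul_of_nonneg_right this hδ0.le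
    calc ‖b' - b‖ ^ t * ‖(P.eval z) ^ (t + 1) - u ^ (t + 1)‖
        ≤ (d / 2 + 1) ^ N * ((N : ℝ) * (B + 1) ^ N * δ) := by
          apply mul_le_mul h1 (le_trans h2 h3) (norm_nonneg _) (by positivity)
      _ = (d / 2 + 1) ^ N * ((N : ℝ) * (B + 1) ^ N) * δ := by ring
  have hfirst : ‖∑ t ∈ Finset.range N, (b' - b) ^ t * ((P.eval z) ^ (t + 1) - u ^ (t + 1))‖
      ≤ ε / 2 := by
    have hs1 := norm_sum_le (Finset.range N)
      (fun t => (b' - b) ^ t * ((P.eval z) ^ (t + 1) - u ^ (t + 1)))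
    have hs2 := Finset.sum_le_sum hterm
    have hs3 : ∑ _t ∈ Finset.range N, (d / 2 + 1) ^ N * ((N : ℝ) * (B + 1) ^ N) * δ
        = (N : ℝ) * ((d / 2 + 1) ^ N * ((N : ℝ) * (B + 1) ^ N) * δ) := by
      rw [Finset.sum_const, Finset.card_range, nsmul_eq_mul]
    have hs4 : (N : ℝ) * ((d / 2 + 1) ^ N * ((N : ℝ) * (B + 1) ^ N) * δ) ≤ Cc * δ := by
      rw [hCcdef]
      have : (N : ℝ) * ((d / 2 + 1) ^ N * ((N : ℝ) * (B + 1) ^ N) * δ)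
          = ((d / 2 + 1) ^ N * ((N : ℝ) * (B + 1) ^ N) * (N : ℝ)) * δ := by ring
      rw [this]
      have hX : (0:ℝ) ≤ (d / 2 + 1) ^ N * ((N : ℝ) * (B + 1) ^ N) * (N : ℝ) := by positivity
      nlinarith [hδ0.le]
    have hs5 : Cc * δ ≤ ε / 2 := by
      have hδle : δ ≤ ε / (2 * Cc) := min_le_right _ _
      have := mul_le_mul_of_nonneg_left hδle hCc0.le
      have heq : Cc * (ε / (2 * Cc)) = ε / 2 := by field_simp
      linarith
    linarith
  have hsecond : ‖((b' - b) * u) ^ N * (z - b')⁻¹‖ ≤ ε / 2 := by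
    rw [norm_mul, norm_pow]
    have h1 : ‖(b' - b) * u‖ ≤ 1 / 2 := by
      rw [norm_mul]
      have := mul_le_mul hq hu (norm_nonneg _) (by positivity : (0:ℝ) ≤ d / 2)
      have heq : d / 2 * (1 / d) = (1:ℝ) / 2 := by field_simp
      linarith
    have h2 : ‖(z - b')⁻¹‖ ≤ 2 / d := by
      rw [norm_inv, inv_le_comm₀ (by linarith) (by positivity)]
      have : (2 / d : ℝ)⁻¹ = d / 2 := by field_simp
      rw [this]; exact hdzb'
    calc ‖(b' - b) * u‖ ^ N * ‖(z - b')⁻¹‖ ≤ (1 / 2 : ℝ) ^ N * (2 / d) := by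
          apply mul_le_mul (pow_le_pow_left₀ (norm_nonneg _) h1 N) h2 (norm_nonneg _)
            (by positivity)
      _ ≤ ε / 2 := hN
  calc ‖(∑ t ∈ Finset.range N, (b' - b) ^ t * ((P.eval z) ^ (t + 1) - u ^ (t + 1)))
        - ((b' - b) * u) ^ N * (z - b')⁻¹‖
      ≤ ‖∑ t ∈ Finset.range N, (b' - b) ^ t * ((P.eval z) ^ (t + 1) - u ^ (t + 1))‖
        + ‖((b' - b) * u) ^ N * (z - b')⁻¹‖ := norm_sub_le _ _
    _ ≤ ε / 2 + ε / 2 := add_le_add hfirst hsecond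
    _ = ε := by ring

lemma approx_chain (S : Set ℂ) (a : ℂ) (η R : ℝ) (hη : 0 < η) (hR0 : 0 ≤ R)
    (hS : ∀ z ∈ S, ‖z‖ ≤ R)
    (hpath : ∀ t : ℝ, 0 ≤ t → ∀ z ∈ S, η ≤ ‖z - (a + (t : ℂ))‖) : ApproxOn S a := by
  obtain ⟨T, hT⟩ : ∃ T : ℕ, 2 * R + 1 + ‖a‖ ≤ (T : ℝ) * (η / 2) := by
    obtain ⟨T, hT⟩ := exists_nat_ge ((2 * R + 1 + ‖a‖) / (η / 2))
    refine ⟨T, ?_⟩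
    rw [div_le_iff₀ (by positivity)] at hT
    linarith
  have main : ∀ k : ℕ, k ≤ T → ApproxOn S (a + ((((T : ℝ) - k) * (η / 2) : ℝ) : ℂ)) := by
    intro k
    induction k with
    | zero =>
        intro _
        simp only [Nat.cast_zero, sub_zero]
        apply approx_far S R _ hR0 hS
        have hx : (0:ℝ) ≤ (T : ℝ) * (η / 2) := by positivity
        have htri : (T : ℝ) * (η / 2) ≤ ‖a + ((((T : ℝ) * (η / 2) : ℝ)) : ℂ)‖ + ‖a‖ := by
          have h := norm_sub_le (a + ((((T : ℝ) * (η / 2) : ℝ)) : ℂ)) a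
          have h2 : ‖((((T : ℝ) * (η / 2) : ℝ)) : ℂ)‖ = (T : ℝ) * (η / 2) := by
            rw [Complex.norm_real, Real.norm_eq_abs, abs_of_nonneg hx]
          calc (T : ℝ) * (η / 2) = ‖((((T : ℝ) * (η / 2) : ℝ)) : ℂ)‖ := h2.symm
            _ = ‖a + ((((T : ℝ) * (η / 2) : ℝ)) : ℂ) - a‖ := by rw [add_sub_cancel_left]
            _ ≤ ‖a + ((((T : ℝ) * (η / 2) : ℝ)) : ℂ)‖ + ‖a‖ := h
        linarith
    | succ k ih =>
        intro hk1
        have hk : k ≤ T := le_trans (Nat.le_succ k) hk1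
        have hprev := ih hk
        have hTk : (0:ℝ) ≤ (T : ℝ) - k := by
          rw [sub_nonneg]; exact_mod_cast hk
        have hTk1 : (0:ℝ) ≤ (T : ℝ) - (k + 1) := by
          rw [sub_nonneg]; exact_mod_cast hk1
        apply approx_step S η (a + ((((T : ℝ) - k) * (η / 2) : ℝ) : ℂ)) _ hη
        · intro z hz
          exact hpath _ (by positivity) z hz
        · intro z hz
          have h := hpath (((T : ℝ) - ((k : ℝ) + 1)) * (η / 2))
            (mul_nonneg hTk1 (by positivity)) z hz
          push_cast at h ⊢
          linarith
        · have hdiff : (a + ((((T : ℝ) - (k + 1 : ℕ)) * (η / 2) : ℝ) : ℂ))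
              - (a + ((((T : ℝ) - k) * (η / 2) : ℝ) : ℂ)) = ((-(η / 2) : ℝ) : ℂ) := by
            push_cast
            ring
          rw [hdiff, Complex.norm_real, Real.norm_eq_abs, abs_neg, abs_of_nonneg (by positivity)]
        · exact hprev
  have hfin := main T le_rfl
  simpa using hfin



def yj (j : ℕ) : ℝ := (4:ℝ)⁻¹ ^ (j + 1)
def wj (j : ℕ) : ℝ := yj j / 8
def qj (j : ℕ) : ℝ := (2:ℝ)⁻¹ ^ j
def ηj (j : ℕ) : ℝ := wj j * qj j / 4
def Rj (j : ℕ) : ℝ := (j : ℝ) + 4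
def aj (j : ℕ) : ℂ := 2 + (yj j : ℝ) * Complex.I
def pj (j : ℕ) : ℂ := ((2 - ηj j : ℝ) : ℂ) + (yj j : ℝ) * Complex.I
def Kj (j : ℕ) : Set ℂ := {z : ℂ | ‖z‖ ≤ Rj j ∧ (z.re ≤ 1 ∨ wj j ≤ |z.im - yj j|)}
def Sj (j : ℕ) : Set ℂ := Kj j ∪ {pj j}

lemma yj_pos (j : ℕ) : 0 < yj j := by unfold yj; positivity
lemma yj_le (j : ℕ) : yj j ≤ 4⁻¹ := by
  have h : (4:ℝ)⁻¹ ^ (j+1) ≤ (4:ℝ)⁻¹ ^ 1 :=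
    pow_le_pow_of_le_one (by norm_num) (by norm_num) (by omega)
  unfold yj
  simpa using h
lemma wj_pos (j : ℕ) : 0 < wj j := by
  have := yj_pos j; unfold wj; linarith
lemma wj_le (j : ℕ) : wj j ≤ 1 := by
  have := yj_le j; unfold wj; linarith
lemma qj_pos (j : ℕ) : 0 < qj j := by unfold qj; positivity
lemma qj_le (j : ℕ) : qj j ≤ 1 := pow_le_one₀ (by norm_num) (by norm_num)
lemma ηj_pos (j : ℕ) : 0 < ηj j := by
  have := wj_pos j; have := qj_pos j; unfold ηj; positivity
lemma ηj_le_w (j : ℕ) : ηj j ≤ wj j := by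
  have hw := wj_pos j; have hq := qj_le j; have hq0 := qj_pos j
  unfold ηj; nlinarith
lemma ηj_le_one (j : ℕ) : ηj j ≤ 1 := le_trans (ηj_le_w j) (wj_le j)
lemma Rj_ge (j : ℕ) : (4:ℝ) ≤ Rj j := by
  unfold Rj; linarith [Nat.cast_nonneg (α := ℝ) j]

lemma aj_re (j : ℕ) : (aj j).re = 2 := by simp [aj]
lemma aj_im (j : ℕ) : (aj j).im = yj j := by simp [aj]
lemma pj_re (j : ℕ) : (pj j).re = 2 - ηj j := by simp [pj]
lemma pj_im (j : ℕ) : (pj j).im = yj j := by simp [pj]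

lemma pj_norm_le (j : ℕ) : ‖pj j‖ ≤ 3 := by
  have h := Complex.norm_le_abs_re_add_abs_im (pj j)
  rw [pj_re, pj_im] at h
  have h1 : |2 - ηj j| ≤ 2 := by
    rw [abs_le]; constructor <;> [linarith [ηj_le_one j, ηj_pos j]; linarith [ηj_pos j]]
  have h2 : |yj j| ≤ 4⁻¹ := by
    rw [abs_of_pos (yj_pos j)]; exact yj_le j
  linarith

lemma pj_sub_aj (j : ℕ) (t : ℝ) : pj j - (aj j + (t : ℂ)) = ((-(ηj j) - t : ℝ) : ℂ) := by
  apply Complex.ext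
  · simp [pj, aj]; ring
  · simp [pj, aj]

lemma hS_bound (j : ℕ) : ∀ z ∈ Sj j, ‖z‖ ≤ Rj j := by
  rintro z (hz | hz)
  · exact hz.1
  · rw [Set.mem_singleton_iff] at hz
    subst hz
    linarith [pj_norm_le j, Rj_ge j]

lemma hpath_bound (j : ℕ) : ∀ t : ℝ, 0 ≤ t → ∀ z ∈ Sj j, ηj j ≤ ‖z - (aj j + (t : ℂ))‖ := by
  intro t ht z hz
  rcases hz with hz | hz
  · rcases hz.2 with hre | him
    · -- real part bound
      have h1 : |(z - (aj j + (t:ℂ))).re| ≤ ‖z - (aj j + (t:ℂ))‖ := by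
        exact Complex.abs_re_le_norm _
      have h2 : (z - (aj j + (t:ℂ))).re = z.re - (2 + t) := by
        simp [Complex.sub_re, Complex.add_re, aj_re]
      have h3 : |z.re - (2 + t)| ≥ 1 := by
        rw [abs_sub_comm, abs_of_nonneg (by linarith)]
        linarith
      rw [h2] at h1
      linarith [ηj_le_one j]
    · -- imaginary part bound
      have h1 : |(z - (aj j + (t:ℂ))).im| ≤ ‖z - (aj j + (t:ℂ))‖ := by
        exact Complex.abs_im_le_norm _
      have h2 : (z - (aj j + (t:ℂ))).im = z.im - yj j := by
        simp [Complex.sub_im, Complex.add_im, aj_im]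
      rw [h2] at h1
      linarith [ηj_le_w j]
  · rw [Set.mem_singleton_iff] at hz
    subst hz
    rw [pj_sub_aj, Complex.norm_real, Real.norm_eq_abs,
      abs_of_nonpos (by linarith [ηj_pos j])]
    linarith

lemma Kj_dist (j : ℕ) : ∀ z ∈ Kj j, wj j ≤ ‖z - aj j‖ := by
  intro z hz
  rcases hz.2 with hre | him
  · have h1 : |(z - aj j).re| ≤ ‖z - aj j‖ := by
      exact Complex.abs_re_le_norm _
    have h2 : (z - aj j).re = z.re - 2 := by simp [Complex.sub_re, aj_re]
    rw [h2] at h1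
    have h3 : |z.re - 2| ≥ 1 := by
      rw [abs_sub_comm, abs_of_nonneg (by linarith)]
      linarith
    linarith [wj_le j]
  · have h1 : |(z - aj j).im| ≤ ‖z - aj j‖ := by
      exact Complex.abs_im_le_norm _
    have h2 : (z - aj j).im = z.im - yj j := by simp [Complex.sub_im, aj_im]
    rw [h2] at h1
    linarith

theorem exists_Q'' : ∃ (Q : ℕ → Polynomial ℂ) (p : ℕ → ℂ),
    (∀ j, ‖p j‖ ≤ 3) ∧ (∀ j, 1 ≤ ‖(Q j).eval (p j)‖) ∧
    (∀ w : ℂ, Tendsto (fun j => (Q j).eval w) atTop (𝓝 0)) := by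
  have H : ∀ j, ∃ P : Polynomial ℂ, ∀ z ∈ Sj j, ‖P.eval z - (z - aj j)⁻¹‖ ≤ 1/2 := by
    intro j
    exact approx_chain (Sj j) (aj j) (ηj j) (Rj j) (ηj_pos j)
      (by linarith [Rj_ge j]) (hS_bound j) (hpath_bound j) (1/2) (by norm_num)
  choose P hP using H
  refine ⟨fun j => Polynomial.C ((2 * ηj j : ℝ) : ℂ) * P j, pj, pj_norm_le, ?_, ?_⟩
  · -- peak value
    intro j
    have hpmem : pj j ∈ Sj j := Or.inr rfl
    have hPp := hP j (pj j) hpmem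
    have h0 : pj j - aj j = ((-(ηj j) : ℝ) : ℂ) := by
      have h := pj_sub_aj j 0
      simpa using h
    have hnorm : ‖(pj j - aj j)⁻¹‖ = (ηj j)⁻¹ := by
      rw [h0, ← Complex.ofReal_inv, Complex.norm_real, Real.norm_eq_abs, abs_inv, abs_neg,
        abs_of_pos (ηj_pos j)]
    have hPlow : (ηj j)⁻¹ - 1/2 ≤ ‖(P j).eval (pj j)‖ := by
      have htri : ‖(pj j - aj j)⁻¹‖ ≤ ‖(P j).eval (pj j)‖ + ‖(P j).eval (pj j) - (pj j - aj j)⁻¹‖ := by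
        have h := norm_add_le ((P j).eval (pj j) - (pj j - aj j)⁻¹) (-(((P j).eval (pj j) - (pj j - aj j)⁻¹) - (P j).eval (pj j)))
        calc ‖(pj j - aj j)⁻¹‖ = ‖(P j).eval (pj j) + ((pj j - aj j)⁻¹ - (P j).eval (pj j))‖ := by ring_nf
          _ ≤ ‖(P j).eval (pj j)‖ + ‖(pj j - aj j)⁻¹ - (P j).eval (pj j)‖ := norm_add_le _ _
          _ = ‖(P j).eval (pj j)‖ + ‖(P j).eval (pj j) - (pj j - aj j)⁻¹‖ := by rw [norm_sub_rev]
      rw [hnorm] at htri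
      linarith
    rw [Polynomial.eval_mul, Polynomial.eval_C, norm_mul, Complex.norm_real,
      Real.norm_eq_abs, abs_of_pos (by linarith [ηj_pos j] : (0:ℝ) < 2 * ηj j)]
    have hη := ηj_pos j
    have hη1 := ηj_le_one j
    have hinv : 2 * ηj j * (ηj j)⁻¹ = 2 := by field_simp
    calc (1:ℝ) ≤ 2 - ηj j := by linarith
      _ = 2 * ηj j * ((ηj j)⁻¹ - 1/2) := by field_simp
      _ ≤ 2 * ηj j * ‖(P j).eval (pj j)‖ := by
          apply mul_le_mul_of_nonneg_left hPlow (by linarith)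
  · -- pointwise convergence
    intro w
    have hbound : ∀ j, w ∈ Kj j → ‖((Polynomial.C ((2 * ηj j : ℝ) : ℂ)) * P j).eval w‖ ≤ qj j := by
      intro j hw
      have hmem : w ∈ Sj j := Or.inl hw
      have hPw := hP j w hmem
      have hdist := Kj_dist j w hw
      have hwa : w - aj j ≠ 0 := by
        intro h
        rw [h, norm_zero] at hdist
        linarith [wj_pos j]
      have hinvb : ‖(w - aj j)⁻¹‖ ≤ (wj j)⁻¹ := by
        rw [norm_inv]
        exact inv_anti₀ (wj_pos j) hdist
      have hPwb : ‖(P j).eval w‖ ≤ (wj j)⁻¹ + 1/2 := by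
        calc ‖(P j).eval w‖ = ‖(w - aj j)⁻¹ + ((P j).eval w - (w - aj j)⁻¹)‖ := by ring_nf
          _ ≤ ‖(w - aj j)⁻¹‖ + ‖(P j).eval w - (w - aj j)⁻¹‖ := norm_add_le _ _
          _ ≤ (wj j)⁻¹ + 1/2 := add_le_add hinvb hPw
      rw [Polynomial.eval_mul, Polynomial.eval_C, norm_mul, Complex.norm_real,
        Real.norm_eq_abs, abs_of_pos (by linarith [ηj_pos j] : (0:ℝ) < 2 * ηj j)]
      have hη := ηj_pos j
      have hw0 := wj_pos j
      have hw1 := wj_le j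
      have hq0 := qj_pos j
      have key : 2 * ηj j * ((wj j)⁻¹ + 1/2) ≤ qj j := by
        have hηw : ηj j = wj j * qj j / 4 := rfl
        rw [hηw]
        have h1 : 2 * (wj j * qj j / 4) * (wj j)⁻¹ = qj j / 2 := by field_simp; ring
        have h2 : 2 * (wj j * qj j / 4) * (1/2 : ℝ) = wj j * qj j / 4 := by ring
        have h3 : wj j * qj j / 4 ≤ qj j / 4 := by nlinarith
        calc 2 * (wj j * qj j / 4) * ((wj j)⁻¹ + 1/2)
            = qj j / 2 + wj j * qj j / 4 := by rw [mul_add, h1, h2]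
          _ ≤ qj j / 2 + qj j / 4 := by linarith
          _ ≤ qj j := by linarith
      calc 2 * ηj j * ‖(P j).eval w‖ ≤ 2 * ηj j * ((wj j)⁻¹ + 1/2) :=
            mul_le_mul_of_nonneg_left hPwb (by linarith [ηj_pos j])
        _ ≤ qj j := key
    -- eventually w ∈ Kj j
    have hev : ∀ᶠ j in atTop, w ∈ Kj j := by
      have hev1 : ∀ᶠ j in atTop, ‖w‖ ≤ Rj j := by
        have h := tendsto_natCast_atTop_atTop (R := ℝ)
        filter_upwards [h.eventually_ge_atTop ‖w‖] with j hj
        unfold Rj; linarith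
      have hev2 : ∀ᶠ j in atTop, w.re ≤ 1 ∨ wj j ≤ |w.im - yj j| := by
        by_cases hre : w.re ≤ 1
        · exact Filter.Eventually.of_forall fun j => Or.inl hre
        · by_cases him : w.im ≤ 0
          · refine Filter.Eventually.of_forall fun j => Or.inr ?_
            have hy := yj_pos j
            have hwy : wj j = yj j / 8 := rfl
            rw [abs_of_nonpos (by linarith)]
            linarith
          · push_neg at him
            have hy0 : Tendsto yj atTop (𝓝 0) := by
              have h1 : Tendsto (fun n : ℕ => (4⁻¹:ℝ) ^ n) atTop (𝓝 0) :=
                tendsto_pow_atTop_nhds_zero_of_lt_one (by norm_num) (by norm_num)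
              have h2 : Tendsto (fun j : ℕ => j + 1) atTop atTop := tendsto_add_atTop_nat 1
              exact h1.comp h2
            filter_upwards [hy0.eventually_lt_const (show (0:ℝ) < w.im/2 by linarith)]
              with j hj
            refine Or.inr ?_
            have hy := yj_pos j
            have hwy : wj j = yj j / 8 := rfl
            rw [abs_of_nonneg (by linarith)]
            linarith
      filter_upwards [hev1, hev2] with j h1 h2
      exact ⟨h1, h2⟩
    have hq0 : Tendsto qj atTop (𝓝 0) :=
      tendsto_pow_atTop_nhds_zero_of_lt_one (by norm_num) (by norm_num)
    apply squeeze_zero_norm' _ hq0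
    filter_upwards [hev] with j hj
    exact hbound j hj




theorem exists_Q' : ∃ (Q : ℕ → Polynomial ℂ) (p : ℕ → ℂ),
    (∀ j, ‖p j‖ ≤ 3) ∧ (∀ j, 1 ≤ ‖(Q j).eval (p j)‖) ∧
    (∀ w : ℂ, Tendsto (fun j => (Q j).eval w) atTop (𝓝 0)) := exists_Q''

end

end SpSucAux

/-- There is an infinite-dimensional Banach space continuously and
linearly embedded in `H(Ω)^ℕ` whose image, except for zero, lies in `S_p \ S_uc`. -/
theorem exists_banach_in_Sp_diff_Suc
    (Ω : Set ℂ) (hΩ : IsOpen Ω) (hne : Ω.Nonempty) :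
    ∃ (E : Type) (_ : NormedAddCommGroup E) (_ : NormedSpace ℂ E)
      (T : E →ₗ[ℂ] HSeq Ω),
      CompleteSpace E ∧ ¬ Module.Finite ℂ E ∧
      Function.Injective T ∧ Continuous T ∧
      Set.range T \ {0} ⊆ Sp Ω \ Suc Ω := by
  classical
  obtain ⟨c, hc⟩ := hne
  obtain ⟨ε, hε, hball⟩ := Metric.isOpen_iff.mp hΩ c hc
  set r : ℝ := ε / 2 with hrdef
  have hr0 : 0 < r := by positivity
  have hball' : Metric.closedBall c r ⊆ Ω := by
    intro x hx
    apply hball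
    rw [Metric.mem_ball]
    rw [Metric.mem_closedBall] at hx
    linarith
  obtain ⟨Q, p, hp3, hpeak, hptwise⟩ := SpSucAux.exists_Q'
  set ψ : ℂ → ℂ := fun z => ((3 / r : ℝ) : ℂ) * (z - c) with hψdef
  set zP : ℕ → ℂ := fun j => c + ((r / 3 : ℝ) : ℂ) * p j with hzPdef
  have hψzP : ∀ j, ψ (zP j) = p j := by
    intro j
    show ((3 / r : ℝ) : ℂ) * (c + ((r / 3 : ℝ) : ℂ) * p j - c) = p j
    have : ((3 / r : ℝ) : ℂ) * ((r / 3 : ℝ) : ℂ) = 1 := by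
      rw [← Complex.ofReal_mul]
      have hre : (3 / r) * (r / 3) = (1:ℝ) := by field_simp
      rw [hre, Complex.ofReal_one]
    calc ((3 / r : ℝ) : ℂ) * (c + ((r / 3 : ℝ) : ℂ) * p j - c)
        = (((3 / r : ℝ) : ℂ) * ((r / 3 : ℝ) : ℂ)) * p j := by ring
      _ = p j := by rw [this, one_mul]
  have hzPball : ∀ j, zP j ∈ Metric.closedBall c r := by
    intro j
    rw [Metric.mem_closedBall, dist_eq_norm]
    have h1 : c + ((r / 3 : ℝ) : ℂ) * p j - c = ((r / 3 : ℝ) : ℂ) * p j := by ring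
    show ‖c + ((r / 3 : ℝ) : ℂ) * p j - c‖ ≤ r
    rw [h1, norm_mul, Complex.norm_real, Real.norm_eq_abs, abs_of_pos (by positivity)]
    calc r / 3 * ‖p j‖ ≤ r / 3 * 3 :=
          mul_le_mul_of_nonneg_left (hp3 j) (by positivity)
      _ = r := by ring
  have hzPΩ : ∀ j, zP j ∈ Ω := fun j => hball' (hzPball j)
  -- the holomorphic elements
  have hψdiff : Differentiable ℂ ψ := by
    apply Differentiable.const_mul
    exact differentiable_id.sub (differentiable_const c)
  have hFdiff : ∀ j, Differentiable ℂ (fun z : ℂ => (Q j).eval (ψ z)) :=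
    fun j => ((Q j).differentiable).comp hψdiff
  have hFcont : ∀ j, Continuous (fun z : Ω => (Q j).eval (ψ (z : ℂ))) :=
    fun j => ((hFdiff j).continuous).comp continuous_subtype_val
  set F : ℕ → Hol Ω := fun j =>
    (⟨ContinuousMap.mk (fun z : Ω => (Q j).eval (ψ (z : ℂ))) (hFcont j),
      ⟨fun w => (Q j).eval (ψ w), (hFdiff j).differentiableOn, fun z => rfl⟩⟩ : Hol Ω) with hFdef
  -- the Banach space
  haveI : Fact ((1 : ENNReal) ≤ 1) := ⟨le_rfl⟩
  set E : Type := ↥(lp (fun _ : ℕ => ℂ) 1) with hEdef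

  have hmem : ∀ (s : ℂ) (j : ℕ), s • ((F j : C(Ω, ℂ))) ∈ Hol Ω :=
    fun s j => (Hol Ω).smul_mem (F j).2 s
  -- coordinate evaluation facts for lp
  have hcoe_add : ∀ (α β : E) (k : ℕ), (↑(α + β) : ∀ _ : ℕ, ℂ) k = α k + β k := by
    intro α β k
    rw [lp.coeFn_add]
    rfl
  have hcoe_smul : ∀ (s : ℂ) (α : E) (k : ℕ), (↑(s • α) : ∀ _ : ℕ, ℂ) k = s * α k := by
    intro s α k
    rw [lp.coeFn_smul]
    rfl
  set T : E →ₗ[ℂ] HSeq Ω :=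
    { toFun := fun α n =>
        (⟨(α ((Nat.unpair n).1) : ℂ) • ((F ((Nat.unpair n).2) : C(Ω, ℂ))),
          hmem _ _⟩ : Hol Ω)
      map_add' := by
        intro α β
        funext n
        apply Subtype.ext
        apply ContinuousMap.ext
        intro x
        have h := hcoe_add α β ((Nat.unpair n).1)
        show ((↑(α + β) : ∀ _ : ℕ, ℂ) ((Nat.unpair n).1))
            • ((F ((Nat.unpair n).2) : C(Ω, ℂ))) x
          = ((((α ((Nat.unpair n).1) : ℂ) • ((F ((Nat.unpair n).2) : C(Ω, ℂ)))) : C(Ω, ℂ))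
            + (((β ((Nat.unpair n).1) : ℂ) • ((F ((Nat.unpair n).2) : C(Ω, ℂ)))) : C(Ω, ℂ))) x
        rw [h]
        simp only [ContinuousMap.add_apply, ContinuousMap.smul_apply, smul_eq_mul]
        ring
      map_smul' := by
        intro s α
        funext n
        apply Subtype.ext
        apply ContinuousMap.ext
        intro x
        have h := hcoe_smul s α ((Nat.unpair n).1)
        show ((↑(s • α) : ∀ _ : ℕ, ℂ) ((Nat.unpair n).1))
            • ((F ((Nat.unpair n).2) : C(Ω, ℂ))) x
          = (s • (((α ((Nat.unpair n).1) : ℂ) • ((F ((Nat.unpair n).2) : C(Ω, ℂ)))) : C(Ω, ℂ))) x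
        rw [h]
        simp only [ContinuousMap.smul_apply, smul_eq_mul]
        ring }
    with hTdef
  -- evaluation of T
  have hTeval : ∀ (α : E) (n : ℕ) (z : Ω),
      ((T α n : C(Ω, ℂ)) z) = α ((Nat.unpair n).1) * (Q ((Nat.unpair n).2)).eval (ψ (z : ℂ)) := by
    intro α n z
    show ((α ((Nat.unpair n).1) : ℂ) • ((F ((Nat.unpair n).2) : C(Ω, ℂ)))) z = _
    rw [ContinuousMap.smul_apply]
    rfl
  refine ⟨E, inferInstance, inferInstance, T, inferInstance, ?_, ?_, ?_, ?_⟩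
  · -- not finite dimensional
    intro hfin
    have hli : LinearIndependent ℂ (fun k : ℕ => (lp.single 1 k (1 : ℂ) : E)) := by
      rw [linearIndependent_iff']
      intro s g hsum i hi
      have hcoe := congrArg (fun f : E => (↑f : ∀ _ : ℕ, ℂ) i) hsum
      simp only at hcoe
      rw [lp.coeFn_sum] at hcoe
      have hzero : (↑(0 : E) : ∀ _ : ℕ, ℂ) i = 0 := rfl
      rw [Finset.sum_apply] at hcoe
      have hterm : ∀ k ∈ s, (↑(g k • (lp.single 1 k (1 : ℂ) : E)) : ∀ _ : ℕ, ℂ) i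
          = if k = i then g k else 0 := by
        intro k _
        rw [lp.coeFn_smul]
        show g k • ((lp.single 1 k (1 : ℂ) : E) : ∀ _ : ℕ, ℂ) i = _
        by_cases h : i = k
        · subst h
          rw [lp.single_apply_self]
          simp
        · rw [lp.single_apply_ne 1 k _ h]
          simp [Ne.symm h]
      rw [Finset.sum_congr rfl hterm] at hcoe
      rw [Finset.sum_ite_eq' s i g] at hcoe
      rw [if_pos hi] at hcoe
      exact hcoe.trans hzero
    exact absurd (Module.rank_lt_aleph0 ℂ E) (not_lt.mpr hli.aleph0_le_rank)
  · -- injective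
    have hQp0 : ∀ j, (Q j).eval (p j) ≠ 0 := by
      intro j h
      have := hpeak j
      rw [h, norm_zero] at this
      linarith
    intro α β h
    apply lp.ext
    funext k
    have h1 := congrFun h (Nat.pair k 0)
    have h2 := congrArg (fun G : Hol Ω => (G : C(Ω, ℂ)) ⟨zP 0, hzPΩ 0⟩) h1
    have h2 : (T α (Nat.pair k 0) : C(Ω, ℂ)) ⟨zP 0, hzPΩ 0⟩
        = (T β (Nat.pair k 0) : C(Ω, ℂ)) ⟨zP 0, hzPΩ 0⟩ := h2
    rw [hTeval, hTeval] at h2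
    rw [Nat.unpair_pair] at h2
    simp only at h2
    rw [hψzP 0] at h2
    exact mul_right_cancel₀ (hQp0 0) h2
  · -- continuous
    apply continuous_pi
    intro n
    have h1 : Continuous (fun α : E => (α ((Nat.unpair n).1) : ℂ)) := by
      apply LipschitzWith.continuous (K := 1)
      apply LipschitzWith.of_dist_le_mul
      intro α β
      simp only [NNReal.coe_one, one_mul, dist_eq_norm]
      have : α ((Nat.unpair n).1) - β ((Nat.unpair n).1) = (α - β) ((Nat.unpair n).1) := by
        rw [lp.coeFn_sub]; rfl
      rw [this]
      exact (lp.norm_apply_le_norm one_ne_zero (α - β) ((Nat.unpair n).1)).trans_eq (dist_eq_norm α β).symm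
    have h2 : Continuous (fun s : ℂ =>
        (⟨s • ((F ((Nat.unpair n).2) : C(Ω, ℂ))), hmem _ _⟩ : Hol Ω)) := by
      apply Continuous.subtype_mk
      apply ContinuousMap.continuous_of_continuous_uncurry
      have huncurry : (Function.uncurry fun (s : ℂ) (y : Ω) =>
          (s • ((F ((Nat.unpair n).2) : C(Ω, ℂ)))) y)
          = fun q : ℂ × Ω => q.1 * ((F ((Nat.unpair n).2) : C(Ω, ℂ)) q.2) := by
        funext q
        simp [Function.uncurry, ContinuousMap.smul_apply, smul_eq_mul]
      rw [huncurry]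
      exact continuous_fst.mul
        (((F ((Nat.unpair n).2) : C(Ω, ℂ)).continuous).comp continuous_snd)
    exact h2.comp h1
  · -- range T \ {0} ⊆ Sp \ Suc
    rintro G ⟨⟨α, rfl⟩, hG0⟩
    have hα0 : ∃ k, α k ≠ 0 := by
      by_contra hno
      push_neg at hno
      apply hG0
      have : α = 0 := by
        apply lp.ext
        funext k
        exact hno k
      rw [this, map_zero T]
      rfl
    constructor
    · -- Sp
      intro z
      have hqv : Tendsto (fun j => (Q j).eval (ψ (z : ℂ))) atTop (𝓝 0) := hptwise _
      obtain ⟨Cb, hCb⟩ : ∃ Cb : ℝ, ∀ j, ‖(Q j).eval (ψ (z : ℂ))‖ ≤ Cb := by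
        obtain ⟨Cb, hCb⟩ := (hqv.norm.bddAbove_range)
        exact ⟨Cb, fun j => hCb (Set.mem_range_self j)⟩
      have hCb0 : 0 ≤ Cb := le_trans (norm_nonneg _) (hCb 0)
      have hαsum : Summable (fun k => ‖α k‖) := by
        have h := (lp.memℓp α).summable (by norm_num : 0 < (1 : ENNReal).toReal)
        simpa using h
      have hαtend : Tendsto (fun k => (α k : ℂ)) cofinite (𝓝 0) :=
        (hαsum.of_norm).tendsto_cofinite_zero
      have hαbd : ∀ k, ‖α k‖ ≤ ‖α‖ := fun k => lp.norm_apply_le_norm one_ne_zero α k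
      show Tendsto (fun n => ((T α n : C(Ω, ℂ)) z)) atTop (𝓝 0)
      simp only [hTeval]
      rw [← Nat.cofinite_eq_atTop]
      rw [NormedAddCommGroup.tendsto_nhds_zero]
      intro δ hδ
      rw [Filter.eventually_cofinite]
      have hA : {k : ℕ | ¬ ‖α k‖ < δ / (Cb + 1)}.Finite := by
        have h := NormedAddCommGroup.tendsto_nhds_zero.mp hαtend (δ / (Cb + 1))
          (by positivity)
        rwa [Filter.eventually_cofinite] at h
      have hB : {j : ℕ | ¬ ‖(Q j).eval (ψ (z : ℂ))‖ < δ / (‖α‖ + 1)}.Finite := by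
        have h := NormedAddCommGroup.tendsto_nhds_zero.mp hqv (δ / (‖α‖ + 1))
          (by positivity)
        rw [← Nat.cofinite_eq_atTop] at h
        rwa [Filter.eventually_cofinite] at h
      apply Set.Finite.subset ((hA.prod hB).image (fun kj : ℕ × ℕ => Nat.pair kj.1 kj.2))
      intro n hn
      simp only [Set.mem_setOf_eq] at hn
      have hα1 : (0:ℝ) ≤ ‖α‖ := norm_nonneg _
      refine ⟨((Nat.unpair n).1, (Nat.unpair n).2), ⟨?_, ?_⟩, Nat.pair_unpair n⟩
      · simp only [Set.mem_setOf_eq]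
        intro hlt
        apply hn
        rw [norm_mul]
        calc ‖α ((Nat.unpair n).1)‖ * ‖(Q ((Nat.unpair n).2)).eval (ψ (z : ℂ))‖
            ≤ (δ / (Cb + 1)) * Cb := by
              apply mul_le_mul hlt.le (hCb _) (norm_nonneg _) (by positivity)
          _ < δ := by
              rw [div_mul_eq_mul_div, div_lt_iff₀ (by positivity)]
              nlinarith
      · simp only [Set.mem_setOf_eq]
        intro hlt
        apply hn
        rw [norm_mul]
        calc ‖α ((Nat.unpair n).1)‖ * ‖(Q ((Nat.unpair n).2)).eval (ψ (z : ℂ))‖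
            ≤ ‖α‖ * (δ / (‖α‖ + 1)) := by
              apply mul_le_mul (hαbd _) hlt.le (norm_nonneg _) hα1
          _ < δ := by
              rw [mul_div_assoc']
              rw [div_lt_iff₀ (by positivity)]
              nlinarith
    · -- not in Suc
      intro hSuc
      obtain ⟨k, hk⟩ := hα0
      have hKcomp : IsCompact (Subtype.val ⁻¹' Metric.closedBall c r : Set Ω) := by
        rw [IsEmbedding.subtypeVal.isCompact_iff]
        rw [Set.image_preimage_eq_inter_range, Subtype.range_val]
        rw [Set.inter_eq_self_of_subset_left hball']
        exact isCompact_closedBall c r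
      have hS := hSuc _ hKcomp
      rw [Metric.tendstoUniformlyOn_iff] at hS
      have hkpos : 0 < ‖α k‖ := norm_pos_iff.mpr hk
      obtain ⟨N, hN⟩ := Filter.eventually_atTop.mp (hS ‖α k‖ hkpos)
      have hn : N ≤ Nat.pair k N := Nat.right_le_pair k N
      have hx : (⟨zP N, hzPΩ N⟩ : Ω) ∈ (Subtype.val ⁻¹' Metric.closedBall c r : Set Ω) := by
        show zP N ∈ Metric.closedBall c r
        exact hzPball N
      have hcontra := hN (Nat.pair k N) hn _ hx
      rw [Pi.zero_apply, dist_zero_left] at hcontra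
      rw [hTeval] at hcontra
      rw [Nat.unpair_pair] at hcontra
      simp only at hcontra
      rw [hψzP N] at hcontra
      rw [norm_mul] at hcontra
      have hpk := hpeak N
      nlinarith
end

section
/- Let Ω be a nonempty open subset of ℂ. Then there exists an infinite-dimensional vector subspace X of H(Ω)^ℕ together with a complete norm ‖·‖ on X such that X \ {0} ⊆ S_uc \ S_u and the norm topology on X is stronger than the topology inherited from H(Ω)^ℕ (i.e., the inclusion map (X, ‖·‖) → H(Ω)^ℕ is continuous). -/
open Filter Topology

set_option synthInstance.maxHeartbeats 1000000
set_option maxHeartbeats 1000000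

section AuxBan
open BoundedContinuousFunction

noncomputable def ccoef (a : ℕ →ᵇ ℂ) (n : ℕ) : ℂ :=
  ∑' k, a k * ((2 : ℂ)⁻¹ ^ (n + 1)) ^ k

lemma norm_q_le (n : ℕ) : ‖(2 : ℂ)⁻¹ ^ (n + 1)‖ ≤ 2⁻¹ := by
  rw [norm_pow, norm_inv]
  calc ‖(2:ℂ)‖⁻¹ ^ (n+1) = (2:ℝ)⁻¹ ^ (n+1) := by norm_num
  _ ≤ (2:ℝ)⁻¹ ^ 1 := by
      apply pow_le_pow_of_le_one (by norm_num) (by norm_num) (by omega)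
  _ = 2⁻¹ := pow_one _

lemma ccoef_summable (a : ℕ →ᵇ ℂ) (n : ℕ) :
    Summable (fun k => ‖a k * ((2 : ℂ)⁻¹ ^ (n + 1)) ^ k‖) := by
  apply Summable.of_nonneg_of_le (fun k => norm_nonneg _) (fun k => ?_)
    ((summable_geometric_of_lt_one (by norm_num) (by norm_num : (2⁻¹:ℝ) < 1)).mul_left ‖a‖)
  rw [norm_mul, norm_pow]
  exact mul_le_mul (a.norm_coe_le_norm k) (pow_le_pow_left₀ (norm_nonneg _) (norm_q_le n) k)
    (pow_nonneg (norm_nonneg _) k) (norm_nonneg a)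

lemma ccoef_summable' (a : ℕ →ᵇ ℂ) (n : ℕ) :
    Summable (fun k => a k * ((2 : ℂ)⁻¹ ^ (n + 1)) ^ k) :=
  (ccoef_summable a n).of_norm

lemma ccoef_norm (a : ℕ →ᵇ ℂ) (n : ℕ) : ‖ccoef a n‖ ≤ 2 * ‖a‖ := by
  have hgeo : Summable (fun k : ℕ => ‖a‖ * (2⁻¹:ℝ) ^ k) :=
    (summable_geometric_of_lt_one (by norm_num) (by norm_num)).mul_left ‖a‖
  calc ‖ccoef a n‖ ≤ ∑' k, ‖a k * ((2 : ℂ)⁻¹ ^ (n + 1)) ^ k‖ :=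
        norm_tsum_le_tsum_norm (ccoef_summable a n)
  _ ≤ ∑' k, ‖a‖ * (2⁻¹:ℝ) ^ k := by
      apply Summable.tsum_le_tsum _ (ccoef_summable a n) hgeo
      intro k
      rw [norm_mul, norm_pow]
      exact mul_le_mul (a.norm_coe_le_norm k) (pow_le_pow_left₀ (norm_nonneg _) (norm_q_le n) k)
        (pow_nonneg (norm_nonneg _) k) (norm_nonneg a)
  _ = ‖a‖ * (1 - 2⁻¹)⁻¹ := by
      rw [tsum_mul_left, tsum_geometric_of_lt_one (by norm_num) (by norm_num)]
  _ = 2 * ‖a‖ := by ring_nf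

lemma ccoef_add (a b : ℕ →ᵇ ℂ) (n : ℕ) : ccoef (a + b) n = ccoef a n + ccoef b n := by
  unfold ccoef
  rw [← Summable.tsum_add (ccoef_summable' a n) (ccoef_summable' b n)]
  exact tsum_congr fun k => by simp [add_mul]

lemma ccoef_smul (m : ℂ) (a : ℕ →ᵇ ℂ) (n : ℕ) : ccoef (m • a) n = m * ccoef a n := by
  unfold ccoef
  rw [← tsum_mul_left]
  exact tsum_congr fun k => by simp [mul_assoc]

lemma ccoef_eq_zero (a : ℕ →ᵇ ℂ) (h : ∀ᶠ n in atTop, ccoef a n = 0) : a = 0 := by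
  set p := FormalMultilinearSeries.ofScalars ℂ (fun k => (a k : ℂ)) with hp
  have hrad : ((2⁻¹ : NNReal) : ENNReal) ≤ p.radius := by
    apply p.le_radius_of_bound ‖a‖
    intro k
    rw [hp, FormalMultilinearSeries.ofScalars_norm]
    calc ‖a k‖ * ((2⁻¹ : NNReal) : ℝ) ^ k ≤ ‖a‖ * 1 := by
          apply mul_le_mul (a.norm_coe_le_norm k) _ (pow_nonneg (by norm_num) k) (norm_nonneg a)
          apply pow_le_one₀ (by norm_num) (by norm_num)
    _ = ‖a‖ := mul_one _
  have hpos : (0 : ENNReal) < p.radius :=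
    lt_of_lt_of_le (by norm_num : (0:ENNReal) < ((2⁻¹ : NNReal) : ENNReal)) hrad
  have hball := p.hasFPowerSeriesOnBall hpos
  have han : AnalyticAt ℂ p.sum 0 := hball.hasFPowerSeriesAt.analyticAt
  have hsum_eq : ∀ x : ℂ, p.sum x = ∑' k, a k * x ^ k := by
    intro x
    show FormalMultilinearSeries.ofScalarsSum _ x = _
    rw [FormalMultilinearSeries.ofScalars_sum_eq]
    exact tsum_congr fun k => by rw [smul_eq_mul]
  have hrc : Tendsto (fun n : ℕ => (2 : ℂ)⁻¹ ^ (n + 1)) atTop (𝓝[≠] (0 : ℂ)) := by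
    apply tendsto_nhdsWithin_of_tendsto_nhds_of_eventually_within
    · have h2 : Tendsto (fun n : ℕ => (2 : ℂ)⁻¹ ^ n) atTop (𝓝 0) := by
        apply tendsto_pow_atTop_nhds_zero_of_norm_lt_one
        rw [norm_inv]; norm_num
      exact h2.comp (tendsto_add_atTop_nat 1)
    · exact Eventually.of_forall fun n => by
        simp only [Set.mem_compl_iff, Set.mem_singleton_iff]
        exact pow_ne_zero _ (inv_ne_zero two_ne_zero)
  have hsum0 : ∀ᶠ n in atTop, p.sum ((2 : ℂ)⁻¹ ^ (n + 1)) = 0 := by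
    filter_upwards [h] with n hn
    rw [hsum_eq]; exact hn
  have hfreq : ∃ᶠ z in 𝓝[≠] (0 : ℂ), p.sum z = 0 := hrc.frequently hsum0.frequently
  have hev : ∀ᶠ z in 𝓝 (0 : ℂ), p.sum z = 0 := han.frequently_zero_iff_eventually_zero.mp hfreq
  have h0 : HasFPowerSeriesAt (0 : ℂ → ℂ) p 0 := by
    apply hball.hasFPowerSeriesAt.congr
    filter_upwards [hev] with z hz
    simpa using hz
  have hp0 : p = 0 := h0.eq_zero
  ext k
  have hk : p k = 0 := by rw [hp0]; rfl
  have := (FormalMultilinearSeries.ofScalars_eq_zero ℂ k).mp (hp ▸ hk)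
  simpa using this

lemma exists_unbounded (Ω : Set ℂ) (hΩ : IsOpen Ω) (hne : Ω.Nonempty) :
    ∃ g : ℂ → ℂ, DifferentiableOn ℂ g Ω ∧ ∀ M : ℝ, ∃ z ∈ Ω, M < ‖g z‖ := by
  by_cases huniv : Ω = Set.univ
  · refine ⟨id, differentiableOn_id, fun M => ⟨((max M 0 + 1 : ℝ) : ℂ), by simp [huniv], ?_⟩⟩
    rw [id_eq, Complex.norm_real, Real.norm_eq_abs, abs_of_nonneg (by positivity)]
    have := le_max_left M 0; linarith
  · obtain ⟨w, hw⟩ : (frontier Ω).Nonempty := by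
      rw [Set.nonempty_iff_ne_empty]
      intro hfe
      have hclopen : IsClopen Ω := isClopen_iff_frontier_eq_empty.mpr hfe
      rcases isClopen_iff.mp hclopen with h | h
      · exact hne.ne_empty h
      · exact huniv h
    rw [hΩ.frontier_eq] at hw
    obtain ⟨hwcl, hwo⟩ := hw
    refine ⟨fun z => (z - w)⁻¹, ?_, ?_⟩
    · apply DifferentiableOn.inv (differentiableOn_id.sub (differentiableOn_const w))
      exact fun z hz => sub_ne_zero.mpr (fun h => hwo ((show z = w from h) ▸ hz))
    · intro M
      set M' : ℝ := max M 0 + 1 with hM'def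
      have hM' : 0 < M' := by positivity
      obtain ⟨b, hb, hdist⟩ := Metric.mem_closure_iff.mp hwcl M'⁻¹ (by positivity)
      have hpos : 0 < dist w b := dist_pos.mpr (fun h => hwo (h ▸ hb))
      refine ⟨b, hb, ?_⟩
      have h2 : 1 / M'⁻¹ < 1 / dist w b := one_div_lt_one_div_of_lt hpos hdist
      rw [one_div, one_div, inv_inv] at h2
      have h3 : ‖(b - w)⁻¹‖ = (dist w b)⁻¹ := by
        rw [norm_inv, ← dist_eq_norm, dist_comm]
      rw [h3]
      have := le_max_left M 0
      linarith

end AuxBan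

open BoundedContinuousFunction in
/-- There is an infinite-dimensional Banach space continuously and
linearly embedded in `H(Ω)^ℕ` whose image, except for zero, lies in `S_uc \ S_u`. -/
theorem exists_banach_in_Suc_diff_Su
    (Ω : Set ℂ) (hΩ : IsOpen Ω) (hne : Ω.Nonempty) :
    ∃ (E : Type) (_ : NormedAddCommGroup E) (_ : NormedSpace ℂ E)
      (T : E →ₗ[ℂ] HSeq Ω),
      CompleteSpace E ∧ ¬ Module.Finite ℂ E ∧
      Function.Injective T ∧ Continuous T ∧
      Set.range T \ {0} ⊆ Suc Ω \ Su Ω := by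
  classical
  obtain ⟨g, hgd, hub⟩ := exists_unbounded Ω hΩ hne
  have hgcont : Continuous fun z : Ω => g z :=
    continuousOn_iff_continuous_restrict.mp hgd.continuousOn
  set gH : Hol Ω := ⟨⟨fun z : Ω => g z, hgcont⟩, g, hgd, fun _ => rfl⟩ with hgH
  have happ : ∀ (s : ℂ) (z : Ω), ((s • gH : Hol Ω) : C(Ω, ℂ)) z = s * g z := fun s z => rfl
  have hnorm_inv : ∀ n : ℕ, ‖((n : ℂ) + 1)⁻¹‖ = 1 / ((n : ℝ) + 1) := by
    intro n
    rw [norm_inv, one_div]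
    congr 1
    rw [show ((n : ℂ) + 1) = ((n + 1 : ℕ) : ℂ) by push_cast; ring, Complex.norm_natCast]
    push_cast; ring
  set T : (ℕ →ᵇ ℂ) →ₗ[ℂ] HSeq Ω :=
    { toFun := fun a n => (((n : ℂ) + 1)⁻¹ * ccoef a n) • gH
      map_add' := fun a b => funext fun n => by
        show (((n : ℂ) + 1)⁻¹ * ccoef (a + b) n) • gH
            = (((n : ℂ) + 1)⁻¹ * ccoef a n) • gH + (((n : ℂ) + 1)⁻¹ * ccoef b n) • gH
        rw [ccoef_add, mul_add, add_smul]
      map_smul' := fun m a => funext fun n => by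
        show (((n : ℂ) + 1)⁻¹ * ccoef (m • a) n) • gH
            = m • ((((n : ℂ) + 1)⁻¹ * ccoef a n) • gH)
        rw [ccoef_smul, smul_smul, mul_left_comm] } with hT
  refine ⟨ℕ →ᵇ ℂ, inferInstance, inferInstance, T, inferInstance, ?_, ?_, ?_, ?_⟩
  · -- not finite dimensional
    intro hfin
    set e : ℕ → (ℕ →ᵇ ℂ) := fun i =>
      BoundedContinuousFunction.ofNormedAddCommGroupDiscrete (Pi.single i 1) 1 (fun x => by
        rcases eq_or_ne x i with h | h <;> simp [Pi.single_apply, h]) with he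
    have hlin : LinearIndependent ℂ e := by
      rw [linearIndependent_iff']
      intro s c hsum i hi
      have h1 : (∑ j ∈ s, c j • e j) i = 0 := by rw [hsum]; rfl
      rw [BoundedContinuousFunction.coe_sum, Finset.sum_apply] at h1
      simp only [BoundedContinuousFunction.coe_smul, Pi.smul_apply, he,
        BoundedContinuousFunction.coe_ofNormedAddCommGroupDiscrete, Pi.single_apply,
        smul_eq_mul, mul_ite, mul_one, mul_zero] at h1
      simpa [Finset.sum_ite_eq, hi] using h1
    exact Module.Finite.not_linearIndependent_of_infinite e hlin
  · -- injective
    rw [injective_iff_map_eq_zero]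
    intro a ha
    obtain ⟨z₀, hz₀, hgz₀⟩ := hub 0
    have hgz₀' : g z₀ ≠ 0 := fun h => by rw [h, norm_zero] at hgz₀; exact lt_irrefl _ hgz₀
    apply ccoef_eq_zero a
    apply Filter.Eventually.of_forall
    intro n
    have h1 : (((n : ℂ) + 1)⁻¹ * ccoef a n) • gH = 0 := congrFun ha n
    have h2 : (((n : ℂ) + 1)⁻¹ * ccoef a n) * g z₀ = 0 := by
      calc (((n : ℂ) + 1)⁻¹ * ccoef a n) * g z₀
          = (((((n : ℂ) + 1)⁻¹ * ccoef a n) • gH : Hol Ω) : C(Ω, ℂ)) ⟨z₀, hz₀⟩ := rfl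
        _ = ((0 : Hol Ω) : C(Ω, ℂ)) ⟨z₀, hz₀⟩ := by rw [h1]
        _ = 0 := rfl
    rcases mul_eq_zero.mp h2 with h | h
    · rcases mul_eq_zero.mp h with h' | h'
      · exact absurd h' (inv_ne_zero (Nat.cast_add_one_ne_zero n))
      · exact h'
    · exact absurd h hgz₀'
  · -- continuous
    apply continuous_pi
    intro n
    have hccont : Continuous fun a : ℕ →ᵇ ℂ => ccoef a n := by
      let φ : (ℕ →ᵇ ℂ) →ₗ[ℂ] ℂ :=
        { toFun := fun a => ccoef a n
          map_add' := fun a b => ccoef_add a b n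
          map_smul' := fun m a => ccoef_smul m a n }
      exact (φ.mkContinuous 2 fun a => ccoef_norm a n).continuous
    have hsmul : Continuous fun s : ℂ => s • gH := by
      apply continuous_induced_rng.mpr
      have hcoe : (Subtype.val ∘ fun s : ℂ => s • gH) = fun s : ℂ => s • (gH : C(Ω, ℂ)) := rfl
      rw [hcoe]
      apply ContinuousMap.continuous_of_continuous_uncurry
      have huncur : (Function.uncurry fun (s : ℂ) (z : Ω) => (s • (gH : C(Ω, ℂ))) z)
          = fun p : ℂ × Ω => p.1 * g p.2 := rfl
      rw [huncur]
      exact continuous_fst.mul (hgcont.comp continuous_snd)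
    exact hsmul.comp (continuous_const.mul hccont)
  · -- range condition
    rintro F ⟨⟨a, rfl⟩, hF0⟩
    have ha : a ≠ 0 := by
      rintro rfl
      exact hF0 (by simp only [Set.mem_singleton_iff]; exact map_zero T)
    constructor
    · -- membership in Suc
      intro K hK
      rw [Metric.tendstoUniformlyOn_iff]
      intro ε hε
      obtain ⟨M, hM⟩ := hK.exists_bound_of_continuousOn hgcont.continuousOn
      set M' : ℝ := max M 0 + 1 with hM'def
      have hM' : (0 : ℝ) < M' := by positivity
      have hten : Filter.Tendsto (fun n : ℕ => (2 * ‖a‖ * M') * (1 / ((n : ℝ) + 1)))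
          Filter.atTop (nhds 0) := by
        simpa using tendsto_one_div_add_atTop_nhds_zero_nat.const_mul (2 * ‖a‖ * M')
      filter_upwards [hten.eventually (gt_mem_nhds hε)] with n hn z hz
      simp only [Pi.zero_apply]
      rw [dist_zero_left]
      have heq : ((T a n : C(Ω, ℂ)) z) = (((n : ℂ) + 1)⁻¹ * ccoef a n) * g z := rfl
      rw [heq]
      have h1 : ‖ccoef a n‖ ≤ 2 * ‖a‖ := ccoef_norm a n
      have h2 : ‖g z‖ ≤ M' := le_trans (hM z hz) (by rw [hM'def]; nlinarith [le_max_left M 0])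
      calc ‖(((n : ℂ) + 1)⁻¹ * ccoef a n) * g z‖
          = (1 / ((n : ℝ) + 1)) * ‖ccoef a n‖ * ‖g ↑z‖ := by
            rw [norm_mul, norm_mul, hnorm_inv]
        _ ≤ (1 / ((n : ℝ) + 1)) * (2 * ‖a‖) * M' := by
            apply mul_le_mul _ h2 (norm_nonneg _) (by positivity)
            exact mul_le_mul le_rfl h1 (norm_nonneg _) (by positivity)
        _ = (2 * ‖a‖ * M') * (1 / ((n : ℝ) + 1)) := by ring
        _ < ε := hn
    · -- not in Su
      intro hSu
      have hfreq : ∃ᶠ n in Filter.atTop, ccoef a n ≠ 0 := by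
        by_contra hc
        rw [Filter.not_frequently] at hc
        exact ha (ccoef_eq_zero a (hc.mono fun n hn => not_not.mp hn))
      have hev := Metric.tendstoUniformly_iff.mp hSu 1 one_pos
      obtain ⟨n, hn1, hn2⟩ := (hfreq.and_eventually hev).exists
      obtain ⟨z, hz, hgz⟩ := hub (((n : ℝ) + 1) * ‖ccoef a n‖⁻¹)
      have hlt := hn2 ⟨z, hz⟩
      simp only [Pi.zero_apply] at hlt
      rw [dist_zero_left] at hlt
      have heq : ((T a n : C(Ω, ℂ)) ⟨z, hz⟩) = (((n : ℂ) + 1)⁻¹ * ccoef a n) * g z := rfl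
      rw [heq, norm_mul, norm_mul, hnorm_inv] at hlt
      have ht : 0 < ‖ccoef a n‖ := norm_pos_iff.mpr hn1
      have hn1' : (0 : ℝ) < (n : ℝ) + 1 := by positivity
      have key : (1 / ((n : ℝ) + 1) * ‖ccoef a n‖) * (((n : ℝ) + 1) * ‖ccoef a n‖⁻¹) = 1 := by
        have habs : ‖ccoef a n‖ ≠ 0 := by
          exact ne_of_gt ht
        field_simp [habs, ne_of_gt hn1']
      have h5 : (1 / ((n : ℝ) + 1) * ‖ccoef a n‖) * (((n : ℝ) + 1) * ‖ccoef a n‖⁻¹)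
          < 1 / ((n : ℝ) + 1) * ‖ccoef a n‖ * ‖g z‖ :=
        mul_lt_mul_of_pos_left hgz (mul_pos (by positivity) ht)
      rw [key] at h5
      linarith
end

section
/- Let Ω be a nonempty open subset of ℂ. If (f_n) ∈ S_p \ S_uc, then there exist α > 0, a connected component Ω_i of Ω, a sequence (z_k) of pairwise distinct points of Ω_i converging to a point z_0 ∈ Ω_i, and a strictly increasing sequence m(1) < m(2) < m(3) < ⋯ of positive integers such that |f_{m(k)}(z_k)| ≥ α for all k ∈ ℕ. -/
open Filter Topology

/-- If `(f_n)` tends to `0` pointwise on `Ω` but not uniformly on every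
compact subset of `Ω`, then there are `α > 0`, a point `z₀` of `Ω`, a sequence `(z_k)` of
pairwise distinct points of the connected component of `Ω` containing `z₀` converging to
`z₀`, and a strictly increasing sequence `(m_k)` with `|f_{m_k}(z_k)| ≥ α` for all `k`. -/
theorem exists_subseq_of_mem_Sp_not_Suc
    (Ω : Set ℂ) (hΩ : IsOpen Ω) (hne : Ω.Nonempty)
    (f : ℕ → ℂ → ℂ) (hf : ∀ n, DifferentiableOn ℂ (f n) Ω)
    (hp : ∀ z ∈ Ω, Tendsto (fun n => f n z) atTop (𝓝 (0 : ℂ)))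
    (huc : ¬ ∀ K ⊆ Ω, IsCompact K → TendstoUniformlyOn f 0 atTop K) :
    ∃ α : ℝ, 0 < α ∧ ∃ (z : ℕ → ℂ) (z₀ : ℂ) (m : ℕ → ℕ),
      Function.Injective z ∧ StrictMono m ∧ z₀ ∈ Ω ∧
      (∀ k, z k ∈ connectedComponentIn Ω z₀) ∧
      Tendsto z atTop (𝓝 z₀) ∧
      ∀ k, α ≤ ‖f (m k) (z k)‖ := by
  push_neg at huc
  obtain ⟨K, hKΩ, hKc, hKnu⟩ := huc
  rw [Metric.tendstoUniformlyOn_iff] at hKnu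
  push_neg at hKnu
  obtain ⟨ε, hε, hfreq⟩ := hKnu
  simp only [not_forall, not_lt, exists_prop, Pi.zero_apply] at hfreq
  obtain ⟨m', hm', hw⟩ := Filter.extraction_of_frequently_atTop hfreq
  choose w hwK hwε using hw
  obtain ⟨z₀, hz₀K, φ, hφ, hconv⟩ := hKc.tendsto_subseq hwK
  have hz₀Ω : z₀ ∈ Ω := hKΩ hz₀K
  set g : ℕ → ℂ := fun j => w (φ j) with hg
  set U : Set ℂ := connectedComponentIn Ω z₀ with hUdef
  have hU : IsOpen U := hΩ.connectedComponentIn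
  have hz₀U : z₀ ∈ U := mem_connectedComponentIn hz₀Ω
  have hP : ∀ᶠ j in atTop, g j ∈ U := hconv (hU.mem_nhds hz₀U)
  -- each fiber of g is finite
  have habs : ∀ j, ε ≤ ‖f (m' (φ j)) (g j)‖ := by
    intro j
    have := hwε (φ j)
    simpa [Complex.dist_eq] using this
  have hfib : ∀ c : ℂ, {j : ℕ | g j = c}.Finite := by
    intro c
    by_contra hinf
    replace hinf : {j : ℕ | g j = c}.Infinite := hinf
    have hcΩ : c ∈ Ω := by
      obtain ⟨j, hj⟩ := hinf.nonempty
      exact hKΩ (hj ▸ hwK (φ j))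
    have htend := (hp c hcΩ)
    rw [Metric.tendsto_atTop] at htend
    obtain ⟨N, hN⟩ := htend ε hε
    obtain ⟨j, hjmem, hjN⟩ := hinf.exists_gt N
    have h1 : N ≤ m' (φ j) :=
      le_trans hjN.le ((hm'.comp hφ).le_apply)
    have h2 := hN _ h1
    rw [Complex.dist_eq, sub_zero] at h2
    have := habs j
    rw [hjmem] at this
    linarith
  obtain ⟨a, ha⟩ := Filter.eventually_atTop.mp hP
  have key : ∀ N : ℕ, ∃ j, N < j ∧ g j ∉ g '' Set.Iic N ∧ g j ∈ U := by
    intro N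
    have h1 : {j : ℕ | g j ∈ g '' Set.Iic N}.Finite := by
      have heq : {j : ℕ | g j ∈ g '' Set.Iic N} = ⋃ c ∈ g '' Set.Iic N, {j | g j = c} := by
        ext j; simp [eq_comm]
      rw [heq]
      exact Set.Finite.biUnion ((Set.finite_Iic N).image g) (fun c _ => hfib c)
    obtain ⟨B, hB⟩ := h1.bddAbove
    refine ⟨max (N + 1) (max (B + 1) a), ?_, ?_, ?_⟩
    · exact lt_of_lt_of_le (Nat.lt_succ_self N) (le_max_left _ _)
    · intro hmem
      have hle : max (N + 1) (max (B + 1) a) ≤ B := hB hmem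
      have : B + 1 ≤ B := le_trans (le_trans (le_max_left _ _) (le_max_right _ _)) hle
      omega
    · exact ha _ (le_trans (le_max_right _ _) (le_max_right _ _))
  choose F hF1 hF2 hF3 using key
  set ψ : ℕ → ℕ := fun k => F^[k + 1] 0 with hψdef
  have hψ_succ : ∀ k, ψ (k + 1) = F (ψ k) := by
    intro k
    simp only [hψdef]
    exact Function.iterate_succ_apply' F (k + 1) 0
  have hψF : ∀ k, ∃ n, ψ k = F n := by
    intro k
    cases k with
    | zero => exact ⟨0, rfl⟩
    | succ l => exact ⟨ψ l, hψ_succ l⟩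
  have hψ_mono : StrictMono ψ := by
    apply strictMono_nat_of_lt_succ
    intro k
    rw [hψ_succ]
    exact hF1 (ψ k)
  have hgU : ∀ k, g (ψ k) ∈ U := by
    intro k
    obtain ⟨n, hn⟩ := hψF k
    rw [hn]
    exact hF3 n
  have hne' : ∀ i k, i < k → g (ψ i) ≠ g (ψ k) := by
    intro i k hik h
    obtain ⟨l, rfl⟩ : ∃ l, k = (i + l) + 1 := by
      refine ⟨k - i - 1, by omega⟩
    apply hF2 (ψ (i + l))
    rw [← hψ_succ]
    exact ⟨ψ i, Set.mem_Iic.mpr (hψ_mono.monotone (Nat.le_add_right i l)), h⟩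
  have hinj : Function.Injective (fun k => g (ψ k)) := by
    intro i k h
    by_contra hik
    rcases lt_or_gt_of_ne hik with h' | h'
    · exact hne' i k h' h
    · exact hne' k i h' h.symm
  refine ⟨ε, hε, fun k => g (ψ k), z₀, fun k => m' (φ (ψ k)), hinj,
    hm'.comp (hφ.comp hψ_mono), hz₀Ω, hgU, ?_, fun k => habs (ψ k)⟩
  exact hconv.comp hψ_mono.tendsto_atTop
end

section
/- Let Ω be a nonempty open subset of ℂ. If (f_n) ∈ S_uc \ S_u, then there exist α > 0, a sequence (z_k) of pairwise distinct points of Ω, and a strictly increasing sequence m(1) < m(2) < m(3) < ⋯ of positive integers with |f_{m(k)}(z_k)| ≥ α for all k ∈ ℕ, satisfying at least one of the following: (i) there is a connected component Ω_i of Ω such that every z_k belongs to Ω_i and (z_k) tends to the boundary of Ω_i (that is, for each compact K ⊆ Ω_i there is k_0 with z_k ∉ K for all k ≥ k_0); or (ii) Ω has infinitely many connected components and there are pairwise distinct connected components C_1, C_2, C_3, … of Ω with z_k ∈ C_k for all k ∈ ℕ. -/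
open Filter Topology

/-- If `(f_n)` tends to `0` uniformly on each compact subset of `Ω` but
not uniformly on `Ω`, then there are `α > 0`, pairwise distinct points `(z_k)` of `Ω` and a
strictly increasing sequence `(m_k)` with `|f_{m_k}(z_k)| ≥ α` for all `k`, such that either
all `z_k` lie in one connected component of `Ω` and tend to its boundary, or `Ω` has
infinitely many connected components and the `z_k` lie in pairwise distinct components. -/
theorem exists_subseq_of_mem_Suc_not_Su
    (Ω : Set ℂ) (hΩ : IsOpen Ω) (hne : Ω.Nonempty)
    (f : ℕ → ℂ → ℂ) (hf : ∀ n, DifferentiableOn ℂ (f n) Ω)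
    (huc : ∀ K ⊆ Ω, IsCompact K → TendstoUniformlyOn f 0 atTop K)
    (hu : ¬ TendstoUniformlyOn f 0 atTop Ω) :
    ∃ α : ℝ, 0 < α ∧ ∃ (z : ℕ → ℂ) (m : ℕ → ℕ),
      Function.Injective z ∧ StrictMono m ∧ (∀ k, z k ∈ Ω) ∧
      (∀ k, α ≤ ‖f (m k) (z k)‖) ∧
      ((∃ w ∈ Ω, (∀ k, z k ∈ connectedComponentIn Ω w) ∧
          ∀ K ⊆ connectedComponentIn Ω w, IsCompact K →
            ∃ k₀ : ℕ, ∀ k ≥ k₀, z k ∉ K) ∨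
        ({C : Set ℂ | ∃ x ∈ Ω, C = connectedComponentIn Ω x}.Infinite ∧
          ∀ j k, j ≠ k →
            connectedComponentIn Ω (z j) ≠ connectedComponentIn Ω (z k))) := by
  classical
  -- Step 1: extract `α` and frequent bad points
  rw [Metric.tendstoUniformlyOn_iff] at hu
  push_neg at hu
  obtain ⟨α, hα, hu⟩ := hu
  rw [Filter.frequently_atTop] at hu
  have hfreq : ∀ N : ℕ, ∃ n ≥ N, ∃ x ∈ Ω, α ≤ ‖f n x‖ := by
    intro N
    obtain ⟨n, hn, hx⟩ := hu N
    obtain ⟨x, hxΩ, hxd⟩ := hx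
    refine ⟨n, hn, x, hxΩ, ?_⟩
    simpa [dist_eq_norm] using hxd
  -- Step 2: compact exhaustion of Ω
  haveI : LocallyCompactSpace Ω := hΩ.isLocallyClosed.locallyCompactSpace
  let E := CompactExhaustion.choice Ω
  let K : ℕ → Set ℂ := fun n => (↑) '' (E n : Set Ω)
  have hKc : ∀ n, IsCompact (K n) := fun n =>
    (E.isCompact n).image continuous_subtype_val
  have hKΩ : ∀ n, K n ⊆ Ω := by
    rintro n _ ⟨x, _, rfl⟩; exact x.2
  have hKmono : Monotone K := fun a b h => Set.image_mono (E.subset h)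
  have hKcov : ∀ T ⊆ Ω, IsCompact T → ∃ n, T ⊆ K n := by
    intro T hTΩ hT
    have hpre : IsCompact (((↑) : Ω → ℂ) ⁻¹' T) := by
      refine Topology.IsEmbedding.subtypeVal.isInducing.isCompact_preimage' hT ?_
      rwa [Subtype.range_val]
    obtain ⟨n, hn⟩ := E.exists_superset_of_isCompact hpre
    refine ⟨n, fun x hx => ?_⟩
    exact ⟨⟨x, hTΩ hx⟩, hn hx, rfl⟩
  -- Step 3: selection function
  have key : ∀ (C : Set ℂ) (N : ℕ), ∃ p : ℕ × ℂ, C ⊆ Ω → IsCompact C →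
      N < p.1 ∧ p.2 ∈ Ω ∧ p.2 ∉ C ∧ α ≤ ‖f p.1 p.2‖ := by
    intro C N
    by_cases hC : C ⊆ Ω ∧ IsCompact C
    · have := (Metric.tendstoUniformlyOn_iff.1 (huc C hC.1 hC.2)) α hα
      rw [Filter.eventually_atTop] at this
      obtain ⟨N', hN'⟩ := this
      obtain ⟨n, hn, x, hxΩ, hxa⟩ := hfreq (max (N + 1) N')
      refine ⟨(n, x), fun _ _ => ⟨lt_of_lt_of_le (Nat.lt_succ_self N)
        (le_trans (le_max_left _ _) hn), hxΩ, ?_, hxa⟩⟩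
      intro hxC
      have := hN' n (le_trans (le_max_right _ _) hn) x hxC
      rw [dist_eq_norm] at this
      simp only [Pi.zero_apply, zero_sub, norm_neg] at this
      exact absurd hxa (not_le.2 this)
    · exact ⟨(0, 0), fun h1 h2 => absurd ⟨h1, h2⟩ hC⟩
  choose pick hpick using key
  -- Step 4: recursive construction
  let st : ℕ → ℕ × Finset ℂ := fun k => Nat.rec ((0 : ℕ), (∅ : Finset ℂ))
    (fun k s => ((pick (K k ∪ ↑s.2) s.1).1, insert (pick (K k ∪ ↑s.2) s.1).2 s.2)) k
  let z : ℕ → ℂ := fun k => (pick (K k ∪ ↑(st k).2) (st k).1).2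
  let m : ℕ → ℕ := fun k => (pick (K k ∪ ↑(st k).2) (st k).1).1
  have hst_succ : ∀ k, st (k + 1) = (m k, insert (z k) (st k).2) := fun k => rfl
  have hsub : ∀ k, (↑(st k).2 : Set ℂ) ⊆ Ω ∧ (st k).1 < m k ∧ z k ∈ Ω ∧
      z k ∉ K k ∪ ↑(st k).2 ∧ α ≤ ‖f (m k) (z k)‖ := by
    intro k
    induction k with
    | zero =>
        have h0 : (↑(st 0).2 : Set ℂ) ⊆ Ω := by
          simp [st]
        have := hpick (K 0 ∪ ↑(st 0).2) (st 0).1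
          (Set.union_subset (hKΩ 0) h0)
          ((hKc 0).union (st 0).2.finite_toSet.isCompact)
        exact ⟨h0, this.1, this.2.1, this.2.2.1, this.2.2.2⟩
    | succ k ih =>
        have hsub' : (↑(st (k + 1)).2 : Set ℂ) ⊆ Ω := by
          rw [hst_succ]
          simp only [Finset.coe_insert]
          exact Set.insert_subset ih.2.2.1 ih.1
        have := hpick (K (k + 1) ∪ ↑(st (k + 1)).2) (st (k + 1)).1
          (Set.union_subset (hKΩ (k + 1)) hsub')
          ((hKc (k + 1)).union (st (k + 1)).2.finite_toSet.isCompact)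
        exact ⟨hsub', this.1, this.2.1, this.2.2.1, this.2.2.2⟩
  have hzΩ : ∀ k, z k ∈ Ω := fun k => (hsub k).2.2.1
  have halpha : ∀ k, α ≤ ‖f (m k) (z k)‖ := fun k => (hsub k).2.2.2.2
  have hm : StrictMono m := by
    apply strictMono_nat_of_lt_succ
    intro k
    have := (hsub (k + 1)).2.1
    rwa [hst_succ] at this
  have hmemst : ∀ j k, j < k → z j ∈ (st k).2 := by
    intro j k hjk
    induction k with
    | zero => omega
    | succ k ih =>
        rw [hst_succ]
        rcases Nat.lt_succ_iff_lt_or_eq.1 hjk with h | h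
        · exact Finset.mem_insert_of_mem (ih h)
        · subst h; exact Finset.mem_insert_self _ _
  have hne' : ∀ j k, j < k → z j ≠ z k := by
    intro j k hjk he
    have := (hsub k).2.2.2.1
    exact this (Set.mem_union_right _ (by rw [← he] at *; exact_mod_cast hmemst j k hjk))
  have hinj : Function.Injective z := by
    intro a b hab
    by_contra h
    rcases lt_or_gt_of_ne h with h' | h'
    · exact hne' a b h' hab
    · exact hne' b a h' hab.symm
  have hesc : ∀ T ⊆ Ω, IsCompact T → ∃ k₀ : ℕ, ∀ k ≥ k₀, z k ∉ T := by
    intro T hTΩ hT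
    obtain ⟨n, hn⟩ := hKcov T hTΩ hT
    refine ⟨n, fun k hk hzT => ?_⟩
    exact (hsub k).2.2.2.1 (Set.mem_union_left _ (hKmono hk (hn hzT)))
  -- Step 5: dichotomy
  by_cases hcase : ∃ w ∈ Ω, {k | z k ∈ connectedComponentIn Ω w}.Infinite
  · -- Case (i): one component, tends to boundary
    obtain ⟨w, hw, hinf⟩ := hcase
    set p : ℕ → Prop := fun k => z k ∈ connectedComponentIn Ω w with hp
    have hφ : StrictMono (Nat.nth p) := Nat.nth_strictMono hinf
    have hφmem : ∀ k, z (Nat.nth p k) ∈ connectedComponentIn Ω w := fun k =>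
      Nat.nth_mem_of_infinite hinf k
    refine ⟨α, hα, z ∘ Nat.nth p, m ∘ Nat.nth p, hinj.comp hφ.injective,
      hm.comp hφ, fun k => hzΩ _, fun k => halpha _, Or.inl ⟨w, hw, hφmem, ?_⟩⟩
    intro T hT hTc
    obtain ⟨k₀, hk₀⟩ := hesc T (hT.trans (connectedComponentIn_subset Ω w)) hTc
    exact ⟨k₀, fun k hk => hk₀ (Nat.nth p k) (le_trans hk hφ.le_apply)⟩
  · -- Case (ii): infinitely many components
    push_neg at hcase
    have hfin : ∀ w ∈ Ω, {k | z k ∈ connectedComponentIn Ω w}.Finite := by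
      intro w hw
      exact hcase w hw
    have hfib : ∀ a : ℕ,
        {i | connectedComponentIn Ω (z i) = connectedComponentIn Ω (z a)}.Finite := by
      intro a
      refine (hfin (z a) (hzΩ a)).subset ?_
      intro i hi
      have : z i ∈ connectedComponentIn Ω (z i) := mem_connectedComponentIn (hzΩ i)
      rw [Set.mem_setOf_eq] at hi ⊢
      rwa [hi] at this
    have key2 : ∀ q : ℕ × Finset ℕ, ∃ j, q.1 < j ∧ ∀ a ∈ q.2,
        connectedComponentIn Ω (z j) ≠ connectedComponentIn Ω (z a) := by
      intro q
      have hB : ((⋃ a ∈ (q.2 : Set ℕ),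
          {i | connectedComponentIn Ω (z i) = connectedComponentIn Ω (z a)}) ∪
          Set.Iic q.1).Finite :=
        ((q.2.finite_toSet.biUnion fun a _ => hfib a).union (Set.finite_Iic _))
      obtain ⟨j, hj⟩ := hB.infinite_compl.nonempty
      rw [Set.mem_compl_iff, Set.mem_union, not_or] at hj
      refine ⟨j, by simpa using hj.2, fun a ha hc => ?_⟩
      exact hj.1 (Set.mem_biUnion (by exact_mod_cast ha) hc)
    choose nxt hnxt using key2
    let t : ℕ → ℕ × Finset ℕ := fun k => Nat.rec ((0 : ℕ), ({0} : Finset ℕ))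
      (fun _ s => (nxt s, insert (nxt s) s.2)) k
    have ht_succ : ∀ k, t (k + 1) = (nxt (t k), insert (nxt (t k)) (t k).2) :=
      fun k => rfl
    set φ : ℕ → ℕ := fun k => (t k).1 with hφdef
    have hφmono : StrictMono φ := by
      apply strictMono_nat_of_lt_succ
      intro k
      show φ k < nxt (t k)
      exact (hnxt (t k)).1
    have hφmem : ∀ j k, j ≤ k → φ j ∈ (t k).2 := by
      intro j k hjk
      induction k with
      | zero =>
          have : j = 0 := Nat.le_zero.1 hjk
          subst this
          exact Finset.mem_singleton_self 0
      | succ k ih =>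
          rcases Nat.le_succ_iff_eq_or_le.1 hjk with h | h
          · subst h
            rw [show φ (k+1) = nxt (t k) from rfl, ht_succ]
            exact Finset.mem_insert_self _ _
          · rw [ht_succ]
            exact Finset.mem_insert_of_mem (ih h)
    have hccne : ∀ j k, j < k →
        connectedComponentIn Ω (z (φ k)) ≠ connectedComponentIn Ω (z (φ j)) := by
      intro j k hjk
      cases k with
      | zero => omega
      | succ k =>
          have hjk' : j ≤ k := Nat.lt_succ_iff.1 hjk
          have : φ (k + 1) = nxt (t k) := rfl
          rw [this]
          exact (hnxt (t k)).2 (φ j) (hφmem j k hjk')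
    have hccinj : ∀ j k, j ≠ k →
        connectedComponentIn Ω (z (φ j)) ≠ connectedComponentIn Ω (z (φ k)) := by
      intro j k hjk
      rcases lt_or_gt_of_ne hjk with h | h
      · exact fun he => hccne j k h he.symm
      · exact hccne k j h
    refine ⟨α, hα, z ∘ φ, m ∘ φ, hinj.comp hφmono.injective, hm.comp hφmono,
      fun k => hzΩ _, fun k => halpha _, Or.inr ⟨?_, hccinj⟩⟩
    refine Set.infinite_of_injective_forall_mem
      (f := fun k => connectedComponentIn Ω (z (φ k))) ?_ ?_
    · intro a b hab
      by_contra h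
      exact hccinj a b h hab
    · intro k
      exact ⟨z (φ k), hzΩ _, rfl⟩
end

section
/- Let U be a domain (nonempty open connected subset) in ℂ, let (F_n) be a sequence of holomorphic functions on U, let (z_n) be a sequence of points of U converging to a point z_0 ∈ U, and suppose there is α > 0 with |F_n(z_n)| ≥ α for all n ∈ ℕ. Let φ be a holomorphic function on U that is not identically zero. Then the sequence (F_n·φ) does not converge to 0 uniformly on every compact subset of U; more precisely, there exist a compact subset K of U (which may be taken to be a circle ∂D ⊆ U centered at z_0) and β > 0 such that sup_{z∈K} |F_n(z)·φ(z)| ≥ αβ for all sufficiently large n. -/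
open Filter Topology

/-- If `U` is a domain, `(F_n)` are holomorphic on `U`, `(z_n) ⊆ U`
converges to `z₀ ∈ U`, `|F_n(z_n)| ≥ α > 0` for all `n`, and `φ` is holomorphic on `U` and
not identically zero, then there are a circle `∂D ⊆ U` centered at `z₀` and `β > 0` such
that `sup_{z ∈ ∂D} |F_n(z)·φ(z)| ≥ αβ` for all sufficiently large `n`; in particular,
`(F_n·φ)` does not tend to `0` uniformly on every compact subset of `U`. -/
theorem not_tendstoUniformlyOn_compact_mul
    (U : Set ℂ) (hU : IsOpen U) (hUconn : IsConnected U)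
    (F : ℕ → ℂ → ℂ) (hF : ∀ n, DifferentiableOn ℂ (F n) U)
    (z : ℕ → ℂ) (hz : ∀ n, z n ∈ U)
    (z₀ : ℂ) (hz₀ : z₀ ∈ U) (hlim : Tendsto z atTop (𝓝 z₀))
    (α : ℝ) (hα : 0 < α) (hbig : ∀ n, α ≤ ‖F n (z n)‖)
    (φ : ℂ → ℂ) (hφ : DifferentiableOn ℂ φ U)
    (hφne : ∃ w ∈ U, φ w ≠ 0) :
    ∃ r : ℝ, 0 < r ∧ Metric.sphere z₀ r ⊆ U ∧
      ∃ β : ℝ, 0 < β ∧ ∃ n₀ : ℕ, ∀ n ≥ n₀,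
        α * β ≤ ⨆ w : Metric.sphere z₀ r, ‖F n w * φ w‖ := by

  -- φ does not vanish in a punctured neighborhood of z₀
  have hφan : AnalyticOnNhd ℂ φ U := hφ.analyticOnNhd hU
  have hnot : ¬ (∀ᶠ w in 𝓝 z₀, φ w = 0) := by
    intro h
    obtain ⟨w, hwU, hwne⟩ := hφne
    exact hwne (hφan.eqOn_zero_of_preconnected_of_eventuallyEq_zero
      hUconn.isPreconnected hz₀ h hwU)
  have hne : ∀ᶠ w in 𝓝[≠] z₀, φ w ≠ 0 :=
    ((hφan z₀ hz₀).eventually_eq_zero_or_eventually_ne_zero).resolve_left hnot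
  -- choose ε : punctured ball where φ ≠ 0
  rw [eventually_nhdsWithin_iff, Metric.eventually_nhds_iff] at hne
  obtain ⟨ε, hε, hεne'⟩ := hne
  have hεne : ∀ w, dist w z₀ < ε → w ≠ z₀ → φ w ≠ 0 := fun w hw hwz => hεne' hw hwz
  -- choose ε' with closedBall ⊆ U
  obtain ⟨ε', hε', hball⟩ := Metric.isOpen_iff.mp hU z₀ hz₀
  set r : ℝ := min (ε / 2) (ε' / 2) with hr_def
  have hr : 0 < r := lt_min (by linarith) (by linarith)
  have hrε : r < ε := lt_of_le_of_lt (min_le_left _ _) (by linarith)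
  have hrε' : r < ε' := lt_of_le_of_lt (min_le_right _ _) (by linarith)
  have hcbU : Metric.closedBall z₀ r ⊆ U := fun w hw =>
    hball (lt_of_le_of_lt (Metric.mem_closedBall.mp hw) hrε')
  have hsphU : Metric.sphere z₀ r ⊆ U := fun w hw => hcbU (Metric.sphere_subset_closedBall hw)
  refine ⟨r, hr, hsphU, ?_⟩
  -- φ nonzero on the sphere
  have hφsph : ∀ w ∈ Metric.sphere z₀ r, φ w ≠ 0 := by
    intro w hw
    have hdist : dist w z₀ = r := Metric.mem_sphere.mp hw
    refine hεne w (by rw [hdist]; exact hrε) ?_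
    intro hwz
    rw [hwz, dist_self] at hdist
    exact hr.ne' hdist.symm
  -- min of |φ| on sphere
  have hsph_compact : IsCompact (Metric.sphere z₀ r) := isCompact_sphere z₀ r
  have hsph_ne : (Metric.sphere z₀ r).Nonempty :=
    (NormedSpace.sphere_nonempty).mpr hr.le
  have hφcont : ContinuousOn (fun w => ‖φ w‖) (Metric.sphere z₀ r) :=
    (continuous_norm.comp_continuousOn ((hφ.mono hsphU).continuousOn))
  obtain ⟨w₀, hw₀, hw₀min'⟩ := hsph_compact.exists_isMinOn hsph_ne hφcont
  have hw₀min := isMinOn_iff.mp hw₀min'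
  set β : ℝ := ‖φ w₀‖ with hβ_def
  have hβ : 0 < β := by
    simpa [hβ_def] using (norm_pos_iff.mpr (hφsph w₀ hw₀))
  refine ⟨β, hβ, ?_⟩
  -- eventually z n ∈ ball z₀ r
  have hmem : ∀ᶠ n in atTop, z n ∈ Metric.ball z₀ r :=
    hlim (Metric.ball_mem_nhds z₀ hr)
  obtain ⟨n₀, hn₀⟩ := eventually_atTop.mp hmem
  refine ⟨n₀, fun n hn => ?_⟩
  -- max of |F n| on sphere
  have hFcont : ContinuousOn (fun w => ‖F n w‖) (Metric.sphere z₀ r) :=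
    (continuous_norm.comp_continuousOn (((hF n).mono hsphU).continuousOn))
  obtain ⟨w₁, hw₁, hw₁max'⟩ := hsph_compact.exists_isMaxOn hsph_ne hFcont
  have hw₁max := isMaxOn_iff.mp hw₁max'
  -- maximum modulus: ‖F n (z n)‖ ≤ ‖F n w₁‖
  have hcl : closure (Metric.ball z₀ r) = Metric.closedBall z₀ r := closure_ball z₀ hr.ne'
  have hdc : DiffContOnCl ℂ (F n) (Metric.ball z₀ r) := by
    apply DifferentiableOn.diffContOnCl
    rw [hcl]
    exact (hF n).mono hcbU
  have hmax : ‖F n (z n)‖ ≤ ‖F n w₁‖ := by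
    apply Complex.norm_le_of_forall_mem_frontier_norm_le Metric.isBounded_ball hdc
    · intro w hw
      rw [frontier_ball z₀ hr.ne'] at hw
      exact hw₁max w hw
    · exact subset_closure (hn₀ n hn)
  have hαw₁ : α ≤ ‖F n w₁‖ := le_trans (hbig n) hmax
  have hβw₁ : β ≤ ‖φ w₁‖ := hw₀min w₁ hw₁
  have key : α * β ≤ ‖F n w₁ * φ w₁‖ := by
    rw [norm_mul]
    exact mul_le_mul hαw₁ hβw₁ hβ.le (norm_nonneg _)
  refine le_trans key ?_
  -- le_ciSup
  have hbdd : BddAbove (Set.range fun w : Metric.sphere z₀ r => ‖F n w * φ w‖) := by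
    have hc : ContinuousOn (fun w => ‖F n w * φ w‖) (Metric.sphere z₀ r) :=
      continuous_norm.comp_continuousOn
        ((((hF n).mono hsphU).continuousOn).mul ((hφ.mono hsphU).continuousOn))
    have := (hsph_compact.image_of_continuousOn hc).bddAbove
    rwa [Set.image_eq_range] at this
  exact le_ciSup hbdd (⟨w₁, hw₁⟩ : Metric.sphere z₀ r)
end

section
/- Let Ω be a domain (nonempty open connected subset) in ℂ containing the closed unit disk, and let (z_n) be a sequence of pairwise distinct points of Ω with |z_n| > 1 for all n, which tends to the boundary of Ω (i.e., for each compact K ⊆ Ω there is n_0 with z_n ∉ K for all n ≥ n_0). Split (z_n) into pairwise disjoint subsequences: let σ : ℕ × ℕ → ℕ be a bijection and set a_{k,n} = z_{σ(k,n)}. Then for every k ∈ ℕ there exists a holomorphic function φ_k on Ω satisfying: |φ_k(z) − z^{k−1}| < 3^{−k} for all z with |z| ≤ 1; |φ_k(a_{k,n}) − n| < 1 for all n ∈ ℕ; and |φ_k(a_{j,n})| < 3^{−k} for all n, j ∈ ℕ with j ≠ k. -/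
open Filter Topology Metric Set

namespace Arakelian

/-- Bound-based holomorphic hull of `K` in `Ω`. -/
def hull (Ω K : Set ℂ) : Set ℂ :=
  {x | x ∈ Ω ∧ ∀ f : ℂ → ℂ, ∀ M : ℝ, DifferentiableOn ℂ f Ω →
      (∀ y ∈ K, ‖f y‖ ≤ M) → ‖f x‖ ≤ M}

lemma subset_hull {Ω K : Set ℂ} (hK : K ⊆ Ω) : K ⊆ hull Ω K :=
  fun x hx => ⟨hK hx, fun _f _M _ hb => hb x hx⟩

lemma hull_subset {Ω K : Set ℂ} : hull Ω K ⊆ Ω := fun _x hx => hx.1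

lemma hull_union_absorb {Ω K S : Set ℂ} (hS : S ⊆ hull Ω K) :
    hull Ω (K ∪ S) ⊆ hull Ω K := by
  intro x hx
  refine ⟨hx.1, fun f M hf hb => hx.2 f M hf fun y hy => ?_⟩
  rcases hy with hy | hy
  · exact hb y hy
  · exact (hS hy).2 f M hf hb

lemma hull_isCompact {Ω K : Set ℂ} (hΩ : IsOpen Ω) (hK : IsCompact K)
    (hKΩ : K ⊆ Ω) (hne : K.Nonempty) : IsCompact (hull Ω K) := by
  obtain ⟨R, hR⟩ : ∃ R, ∀ y ∈ K, ‖y‖ ≤ R :=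
    hK.exists_bound_of_continuousOn continuous_id.continuousOn
  obtain ⟨d, hd, hth⟩ := hK.exists_thickening_subset_open hΩ hKΩ
  -- distance fact
  have hdist : ∀ u ∈ hull Ω K, ∀ a, a ∉ Ω → d ≤ ‖u - a‖ := by
    intro u hu a ha
    have hKa : ∀ y ∈ K, d ≤ ‖y - a‖ := by
      intro y hy
      have h1 : a ∉ thickening d K := fun h => ha (hth h)
      rw [mem_thickening_iff] at h1
      push_neg at h1
      have := h1 y hy
      rwa [dist_comm, Complex.dist_eq] at this
    have hfd : DifferentiableOn ℂ (fun w => (w - a)⁻¹) Ω := by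
      apply DifferentiableOn.inv
      · exact (differentiable_id.sub_const a).differentiableOn
      · intro y hy
        exact sub_ne_zero.mpr (ne_of_mem_of_not_mem hy ha)
    have hbK : ∀ y ∈ K, ‖(y - a)⁻¹‖ ≤ d⁻¹ := by
      intro y hy
      rw [norm_inv]
      exact inv_anti₀ hd (hKa y hy)
    have hub := hu.2 _ _ hfd hbK
    rw [norm_inv] at hub
    have habs : 0 < ‖u - a‖ := by
      have : u ≠ a := ne_of_mem_of_not_mem hu.1 ha
      simpa using sub_ne_zero.mpr this
    have h1 : ‖u - a‖ * (‖u - a‖)⁻¹ = 1 := mul_inv_cancel₀ habs.ne'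
    have h2 : d * d⁻¹ = 1 := mul_inv_cancel₀ hd.ne'
    nlinarith [mul_le_mul_of_nonneg_left hub (mul_pos hd habs).le, h1, h2]
  -- closedness
  have hcl : IsClosed (hull Ω K) := by
    rw [← isSeqClosed_iff_isClosed]
    intro u x hu hux
    have hxd : ∀ a, a ∉ Ω → d ≤ ‖x - a‖ := by
      intro a ha
      have : Tendsto (fun n => ‖u n - a‖) atTop (𝓝 (‖x - a‖)) :=
        (continuous_norm.tendsto _).comp ((hux.sub_const a))
      exact le_of_tendsto_of_tendsto tendsto_const_nhds this
        (Eventually.of_forall fun n => hdist (u n) (hu n) a ha)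
    have hxΩ : x ∈ Ω := by
      by_contra hx
      have := hxd x hx
      simp at this
      exact absurd this (not_le.mpr hd)
    refine ⟨hxΩ, fun f M hf hb => ?_⟩
    have hc : ContinuousAt f x := (hf.differentiableAt (hΩ.mem_nhds hxΩ)).continuousAt
    have : Tendsto (fun n => ‖f (u n)‖) atTop (𝓝 (‖f x‖)) :=
      (continuous_norm.tendsto _).comp (hc.tendsto.comp hux)
    exact le_of_tendsto this (Eventually.of_forall fun n => (hu n).2 f M hf hb)
  -- boundedness
  have hbdd : Bornology.IsBounded (hull Ω K) := by
    apply (isBounded_closedBall (x := (0:ℂ)) (r := R)).subset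
    intro x hx
    have := hx.2 id R differentiable_id.differentiableOn (by
      intro y hy; simpa using hR y hy)
    simpa [Complex.dist_eq] using this
  exact Metric.isCompact_of_isClosed_isBounded hcl hbdd


lemma exists_peak {Ω K : Set ℂ} (hK : IsCompact K) (h0 : (0:ℂ) ∈ K)
    {x : ℂ} (hxΩ : x ∈ Ω) (hx : x ∉ hull Ω K)
    (S : Finset ℂ) (hxS : x ∉ S) {ε : ℝ} (hε : 0 < ε) :
    ∃ q : ℂ → ℂ, DifferentiableOn ℂ q Ω ∧ q x = 1 ∧ (∀ y ∈ S, q y = 0) ∧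
      ∀ y ∈ K, ‖q y‖ ≤ ε := by
  rw [hull, mem_setOf_eq] at hx
  have h1 : ¬ ∀ f : ℂ → ℂ, ∀ M : ℝ, DifferentiableOn ℂ f Ω →
      (∀ y ∈ K, ‖f y‖ ≤ M) → ‖f x‖ ≤ M :=
    fun h => hx ⟨hxΩ, h⟩
  push_neg at h1
  obtain ⟨f, M, hf, hb, hfx⟩ := h1
  have hM0 : 0 ≤ M := le_trans (norm_nonneg _) (hb 0 h0)
  have hfx0 : f x ≠ 0 := by
    intro h
    rw [h] at hfx
    simp at hfx
    exact absurd hfx (not_lt.mpr hM0)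
  set L : ℂ → ℂ := fun w => ∏ a ∈ S, (w - a) / (x - a) with hL
  have hLd : Differentiable ℂ L := by
    apply Differentiable.fun_finsetProd
    intro a _
    exact (differentiable_id.sub_const a).div_const _
  have hLx : L x = 1 := by
    rw [hL]
    apply Finset.prod_eq_one
    intro a ha
    exact div_self (sub_ne_zero.mpr (fun h => hxS (h ▸ ha)))
  have hLy : ∀ y ∈ S, L y = 0 := by
    intro y hy
    apply Finset.prod_eq_zero hy
    simp
  obtain ⟨C, hC⟩ : ∃ C, ∀ y ∈ K, ‖L y‖ ≤ C :=
    hK.exists_bound_of_continuousOn hLd.continuous.continuousOn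
  have hC0 : 0 ≤ C := le_trans (norm_nonneg _) (hC 0 h0)
  have hfxpos : 0 < ‖f x‖ := lt_of_le_of_lt hM0 hfx
  set r : ℝ := M / ‖f x‖ with hr
  have hr0 : 0 ≤ r := div_nonneg hM0 hfxpos.le
  have hr1 : r < 1 := (div_lt_one hfxpos).mpr hfx
  obtain ⟨N, hN⟩ : ∃ N : ℕ, r ^ N < ε / (C + 1) :=
    exists_pow_lt_of_lt_one (by positivity) hr1
  refine ⟨fun w => (f w / f x) ^ N * L w, ?_, ?_, ?_, ?_⟩
  · exact ((hf.div_const (f x)).pow N).mul hLd.differentiableOn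
  · show (f x / f x) ^ N * L x = 1
    rw [div_self hfx0, one_pow, hLx, mul_one]
  · intro y hy
    show (f y / f x) ^ N * L y = 0
    rw [hLy y hy, mul_zero]
  · intro y hy
    rw [norm_mul, norm_pow, norm_div]
    have hy1 : ‖f y‖ / ‖f x‖ ≤ r := by
      rw [hr]
      exact div_le_div_of_nonneg_right (hb y hy) hfxpos.le
    have hp : (‖f y‖ / ‖f x‖) ^ N ≤ r ^ N := by
      apply pow_le_pow_left₀ (by positivity) hy1
    calc (‖f y‖ / ‖f x‖) ^ N * ‖L y‖
        ≤ r ^ N * C := by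
          apply mul_le_mul hp (hC y hy) (norm_nonneg _) (by positivity)
      _ ≤ (ε / (C + 1)) * C := by
          apply mul_le_mul_of_nonneg_right hN.le hC0
      _ ≤ ε := by
          rw [div_mul_eq_mul_div]
          rw [div_le_iff₀ (by positivity)]
          nlinarith

lemma exists_interp {Ω K : Set ℂ} (hK : IsCompact K) (h0 : (0:ℂ) ∈ K)
    (M' : Finset ℕ) (x : ℕ → ℂ) (hinj : Set.InjOn x M')
    (hx : ∀ m ∈ M', x m ∈ Ω ∧ x m ∉ hull Ω K)
    (v : ℕ → ℂ) {ε : ℝ} (hε : 0 < ε) :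
    ∃ g : ℂ → ℂ, DifferentiableOn ℂ g Ω ∧ (∀ y ∈ K, ‖g y‖ ≤ ε) ∧
      ∀ m ∈ M', g (x m) = v m := by
  classical
  have key : ∀ m : ℕ, ∃ q : ℂ → ℂ, DifferentiableOn ℂ q Ω ∧
      (∀ y ∈ K, ‖q y‖ ≤ ε / (M'.card * (1 + ‖v m‖))) ∧
      (m ∈ M' → (q (x m) = 1 ∧ ∀ m' ∈ M', m' ≠ m → q (x m') = 0)) := by
    intro m
    by_cases hm : m ∈ M'
    · have hcard : (0:ℝ) < M'.card := by
        have := Finset.card_pos.mpr ⟨m, hm⟩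
        exact_mod_cast this
      have hεm : 0 < ε / (M'.card * (1 + ‖v m‖)) := by
        apply div_pos hε
        apply mul_pos hcard
        positivity
      have hxS : x m ∉ (M'.erase m).image x := by
        intro h
        obtain ⟨m', hm', heq⟩ := Finset.mem_image.mp h
        have := hinj (Finset.mem_coe.mpr (Finset.mem_of_mem_erase hm')) hm heq
        exact (Finset.ne_of_mem_erase hm') this
      obtain ⟨q, hq1, hq2, hq3, hq4⟩ := exists_peak hK h0 (hx m hm).1 (hx m hm).2
        ((M'.erase m).image x) hxS hεm
      refine ⟨q, hq1, hq4, fun _ => ⟨hq2, fun m' hm' hne => ?_⟩⟩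
      exact hq3 _ (Finset.mem_image.mpr ⟨m', Finset.mem_erase.mpr ⟨hne, hm'⟩, rfl⟩)
    · refine ⟨0, ?_, ?_, fun h => absurd h hm⟩
      · exact differentiableOn_const 0
      · intro y _
        simp only [Pi.zero_apply, norm_zero]
        positivity
  choose q hqd hqb hqv using key
  refine ⟨fun w => ∑ m ∈ M', v m * q m w, ?_, ?_, ?_⟩
  · apply DifferentiableOn.fun_sum
    intro m _
    exact (hqd m).const_mul _
  · intro y hy
    calc ‖∑ m ∈ M', v m * q m y‖
        ≤ ∑ m ∈ M', ‖v m * q m y‖ := norm_sum_le _ _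
      _ ≤ ∑ m ∈ M', ε / M'.card := by
          apply Finset.sum_le_sum
          intro m hm
          rw [norm_mul]
          have h1 : ‖q m y‖ ≤ ε / (M'.card * (1 + ‖v m‖)) :=
            hqb m y hy
          have hcard : (0:ℝ) < M'.card := by
            have := Finset.card_pos.mpr ⟨m, hm⟩
            exact_mod_cast this
          have h2 : ‖v m‖ * (ε / (M'.card * (1 + ‖v m‖))) ≤
              ε / M'.card := by
            rw [mul_div_assoc', div_le_div_iff₀ (by positivity) hcard]
            have habs : 0 ≤ ‖v m‖ := norm_nonneg _
            nlinarith
          calc ‖v m‖ * ‖q m y‖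
              ≤ ‖v m‖ * (ε / (M'.card * (1 + ‖v m‖))) := by
                apply mul_le_mul_of_nonneg_left h1 (norm_nonneg _)
            _ ≤ ε / M'.card := h2
      _ ≤ ε := by
          rcases M'.eq_empty_or_nonempty with h | h
          · simp [h]; exact hε.le
          · have hcard : (0:ℝ) < M'.card := by
              have := Finset.card_pos.mpr h
              exact_mod_cast this
            rw [Finset.sum_const, nsmul_eq_mul, mul_div_cancel₀ _ hcard.ne']
  · intro m hm
    show (∑ m' ∈ M', v m' * q m' (x m)) = v m
    rw [Finset.sum_eq_single_of_mem m hm]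
    · rw [((hqv m hm).1 : q m (x m) = 1), mul_one]
    · intro m' hm' hne
      rw [(hqv m' hm').2 m hm hne.symm, mul_zero]


def Bset (Ω : Set ℂ) (i : ℕ) : Set ℂ :=
  {w | ‖w‖ ≤ i + 1 ∧ ∀ y, y ∉ Ω → 1 / (i + 1 : ℝ) ≤ dist w y}

lemma Bset_subset {Ω : Set ℂ} {i : ℕ} : Bset Ω i ⊆ Ω := by
  intro w hw
  by_contra h
  have := hw.2 w h
  rw [dist_self] at this
  have hpos : (0:ℝ) < 1 / (i + 1 : ℝ) := by positivity
  linarith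

lemma Bset_isCompact {Ω : Set ℂ} {i : ℕ} : IsCompact (Bset Ω i) := by
  apply Metric.isCompact_of_isClosed_isBounded
  · have : Bset Ω i = {w : ℂ | ‖w‖ ≤ i + 1} ∩
        ⋂ (y : ℂ) (_ : y ∉ Ω), {w : ℂ | 1 / (i + 1 : ℝ) ≤ dist w y} := by
      ext w
      simp [Bset, mem_iInter]
    rw [this]
    apply IsClosed.inter
    · exact isClosed_le continuous_norm continuous_const
    · apply isClosed_iInter
      intro y
      apply isClosed_iInter
      intro _
      exact isClosed_le continuous_const (continuous_id.dist continuous_const)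
  · apply (isBounded_closedBall (x := (0:ℂ)) (r := (i+1:ℝ))).subset
    intro w hw
    simpa [Complex.dist_eq] using hw.1

lemma exists_Bset {Ω : Set ℂ} (hΩ : IsOpen Ω) {C : Set ℂ} (hC : IsCompact C)
    (hCΩ : C ⊆ Ω) : ∃ i : ℕ, C ⊆ Bset Ω i := by
  obtain ⟨R, hR⟩ : ∃ R, ∀ y ∈ C, ‖y‖ ≤ R :=
    hC.exists_bound_of_continuousOn continuous_id.continuousOn
  obtain ⟨d, hd, hth⟩ := hC.exists_thickening_subset_open hΩ hCΩ
  obtain ⟨i, hi⟩ := exists_nat_ge (max R (1/d))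
  refine ⟨i, fun w hw => ⟨?_, ?_⟩⟩
  · have h1 : ‖w‖ ≤ R := hR w hw
    have h2 : R ≤ i := le_trans (le_max_left _ _) hi
    calc ‖w‖ = ‖w‖ := rfl
      _ ≤ R := h1
      _ ≤ i + 1 := by linarith
  · intro y hy
    have hyd : d ≤ dist w y := by
      have h1 : y ∉ thickening d C := fun h => hy (hth h)
      rw [mem_thickening_iff] at h1
      push_neg at h1
      have := h1 w hw
      rwa [dist_comm]
    have h1d : 1 / d ≤ (i:ℝ) + 1 := by
      have := le_trans (le_max_right R (1/d)) hi
      linarith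
    have : 1 / ((i:ℝ) + 1) ≤ d := by
      rw [div_le_iff₀ (by positivity)]
      rw [one_div] at h1d
      calc (1:ℝ) = d * d⁻¹ := (mul_inv_cancel₀ hd.ne').symm
        _ ≤ d * ((i:ℝ)+1) := by
            apply mul_le_mul_of_nonneg_left h1d hd.le
    linarith


variable (Ω : Set ℂ) (z : ℕ → ℂ) (t : ℕ → ℂ) (δ : ℝ) (k : ℕ)

structure GS (s : ℕ) (K : Set ℂ) (F : ℂ → ℂ) : Prop where
  cpt : IsCompact K
  sub : K ⊆ Ω
  ball : Metric.closedBall (0:ℂ) 1 ⊆ K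
  diff : DifferentiableOn ℂ F Ω
  val : ∀ m, z m ∈ K → ‖F (z m) - t m‖ ≤ δ * (1/2 - (1/2)^s)
  disk : ∀ w ∈ Metric.closedBall (0:ℂ) 1, ‖F w - w^k‖ ≤ δ * (1 - (1/2)^s)
  inv : ∀ m, z m ∉ K → z m ∉ hull Ω K
  bsub : ∀ i, i < s → Bset Ω i ⊆ K

lemma GS.zero_mem {s K F} (h : GS Ω z t δ k s K F) : (0:ℂ) ∈ K :=
  h.ball (by simp)

lemma step_exists (hΩ : IsOpen Ω) (hz : ∀ n, z n ∈ Ω)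
    (hinj : Function.Injective z)
    (hbd : ∀ K ⊆ Ω, IsCompact K → ∃ n₀ : ℕ, ∀ n ≥ n₀, z n ∉ K)
    (hδ : 0 < δ) (s : ℕ) (K : Set ℂ) (F : ℂ → ℂ) (h : GS Ω z t δ k s K F) :
    ∃ (K' : Set ℂ) (F' : ℂ → ℂ), GS Ω z t δ k (s+1) K' F' ∧ K ⊆ K' ∧
      ∀ y ∈ K, ‖F' y - F y‖ ≤ δ * (1/2)^(s+1) := by
  classical
  set Kb : Set ℂ := K ∪ Bset Ω s with hKb
  have hKbc : IsCompact Kb := h.cpt.union Bset_isCompact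
  have hKbΩ : Kb ⊆ Ω := union_subset h.sub Bset_subset
  have hKbne : Kb.Nonempty := ⟨0, Or.inl (h.zero_mem Ω z t δ k)⟩
  set H : Set ℂ := hull Ω Kb with hH
  have hHc : IsCompact H := hull_isCompact hΩ hKbc hKbΩ hKbne
  obtain ⟨n₀, hn₀⟩ := hbd H hull_subset hHc
  set Mset : Finset ℕ := (Finset.range n₀).filter (fun m => z m ∈ H ∧ z m ∉ K) with hMset
  have hMmem : ∀ m, m ∈ Mset ↔ (z m ∈ H ∧ z m ∉ K) := by
    intro m
    rw [hMset, Finset.mem_filter, Finset.mem_range]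
    constructor
    · exact fun h => h.2
    · intro hm
      refine ⟨?_, hm⟩
      by_contra hcon
      push_neg at hcon
      exact hn₀ m hcon hm.1
  have hεpos : 0 < δ * (1/2:ℝ)^(s+1) := by positivity
  obtain ⟨g, hg1, hg2, hg3⟩ := exists_interp h.cpt (h.zero_mem Ω z t δ k) Mset z
    (hinj.injOn) (fun m hm => ⟨hz m, h.inv m ((hMmem m).1 hm).2⟩)
    (fun m => t m - F (z m)) hεpos
  set K' : Set ℂ := Kb ∪ z '' ↑Mset with hK'
  refine ⟨K', fun w => F w + g w, ?_, ?_, ?_⟩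
  · constructor
    · exact hKbc.union ((Mset.finite_toSet.image z).isCompact)
    · exact union_subset hKbΩ (by rintro _ ⟨m, _, rfl⟩; exact hz m)
    · exact h.ball.trans ((subset_union_left).trans subset_union_left)
    · exact h.diff.add hg1
    · -- val
      intro m hm
      by_cases hmK : z m ∈ K
      · have h1 := h.val m hmK
        have h2 := hg2 (z m) hmK
        calc ‖F (z m) + g (z m) - t m‖
            = ‖(F (z m) - t m) + g (z m)‖ := by ring_nf
          _ ≤ ‖F (z m) - t m‖ + ‖g (z m)‖ :=
              norm_add_le _ _
          _ ≤ δ * (1/2 - (1/2)^s) + δ * (1/2)^(s+1) := add_le_add h1 h2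
          _ = δ * (1/2 - (1/2)^(s+1)) := by ring
      · have hmH : z m ∈ H := by
          rcases hm with hm | hm
          · exact subset_hull hKbΩ hm
          · obtain ⟨m', hm', heq⟩ := hm
            have : m' = m := hinj heq
            subst this
            exact ((hMmem m').1 hm').1
        have hmM : m ∈ Mset := (hMmem m).2 ⟨hmH, hmK⟩
        rw [hg3 m hmM]
        have : F (z m) + (t m - F (z m)) - t m = 0 := by ring
        rw [this, norm_zero]
        have hp : ((1:ℝ)/2)^(s+1) ≤ 1/2 := by
          calc ((1:ℝ)/2)^(s+1) ≤ (1/2)^1 := by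
                apply pow_le_pow_of_le_one (by norm_num) (by norm_num)
                omega
            _ = 1/2 := pow_one _
        nlinarith
    · -- disk
      intro w hw
      have h1 := h.disk w hw
      have h2 := hg2 w (h.ball hw)
      calc ‖F w + g w - w^k‖
          = ‖(F w - w^k) + g w‖ := by ring_nf
        _ ≤ ‖F w - w^k‖ + ‖g w‖ := norm_add_le _ _
        _ ≤ δ * (1 - (1/2)^s) + δ * (1/2)^(s+1) := add_le_add h1 h2
        _ = δ * (1 - (1/2)^(s+1)) := by ring
    · -- inv
      intro m hm hcon
      have h1 : hull Ω K' ⊆ H := by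
        rw [hK']
        apply hull_union_absorb
        rintro _ ⟨m', hm', rfl⟩
        exact ((hMmem m').1 hm').1
      have hmH : z m ∈ H := h1 hcon
      have hmK : z m ∉ K := fun hk => hm (Or.inl (Or.inl hk))
      have : m ∈ Mset := (hMmem m).2 ⟨hmH, hmK⟩
      exact hm (Or.inr ⟨m, by simpa using this, rfl⟩)
    · -- bsub
      intro i hi
      rcases Nat.lt_succ_iff_lt_or_eq.mp hi with hi | hi
      · exact (h.bsub i hi).trans ((subset_union_left).trans subset_union_left)
      · subst hi
        exact (subset_union_right).trans subset_union_left
  · exact (subset_union_left).trans subset_union_left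
  · intro y hy
    simpa using hg2 y hy


lemma init_GS (hD : Metric.closedBall (0:ℂ) 1 ⊆ Ω)
    (hmod : ∀ n, 1 < ‖z n‖) (hδ : 0 < δ) :
    GS Ω z t δ k 0 (Metric.closedBall (0:ℂ) 1) (fun w => w^k) := by
  constructor
  · exact isCompact_closedBall 0 1
  · exact hD
  · exact subset_rfl
  · exact (differentiable_pow k).differentiableOn
  · intro m hm
    exfalso
    rw [mem_closedBall_zero_iff] at hm
    exact absurd hm (not_le.mpr (hmod m))
  · intro w _
    simp
  · intro m _ hcon
    have h1 := hcon.2 id 1 differentiable_id.differentiableOn (by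
      intro y hy
      rw [mem_closedBall_zero_iff] at hy
      simpa using hy)
    simp only [id_eq] at h1
    exact absurd h1 (not_le.mpr (hmod m))
  · intro i hi
    omega


lemma main (hΩ : IsOpen Ω) (hD : Metric.closedBall (0:ℂ) 1 ⊆ Ω)
    (hz : ∀ n, z n ∈ Ω) (hinj : Function.Injective z)
    (hmod : ∀ n, 1 < ‖z n‖)
    (hbd : ∀ K ⊆ Ω, IsCompact K → ∃ n₀ : ℕ, ∀ n ≥ n₀, z n ∉ K)
    (hδ : 0 < δ) :
    ∃ φ : ℂ → ℂ, DifferentiableOn ℂ φ Ω ∧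
      (∀ w ∈ Metric.closedBall (0:ℂ) 1, ‖φ w - w ^ k‖ ≤ δ) ∧
      (∀ m, ‖φ (z m) - t m‖ ≤ δ) := by
  classical
  have step : ∀ s (p : Set ℂ × (ℂ → ℂ)), GS Ω z t δ k s p.1 p.2 →
      ∃ p' : Set ℂ × (ℂ → ℂ), GS Ω z t δ k (s+1) p'.1 p'.2 ∧ p.1 ⊆ p'.1 ∧
        ∀ y ∈ p.1, ‖p'.2 y - p.2 y‖ ≤ δ * (1/2)^(s+1) := by
    intro s p hp
    obtain ⟨K', F', h1, h2, h3⟩ := step_exists Ω z t δ k hΩ hz hinj hbd hδ s p.1 p.2 hp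
    exact ⟨(K', F'), h1, h2, h3⟩
  choose nxt hn1 hn2 hn3 using step
  obtain ⟨T, hT0, hTs⟩ : ∃ T : ∀ s : ℕ, {p : Set ℂ × (ℂ → ℂ) // GS Ω z t δ k s p.1 p.2},
      T 0 = ⟨(Metric.closedBall (0:ℂ) 1, fun w => w^k), init_GS Ω z t δ k hD hmod hδ⟩ ∧
      ∀ s, T (s+1) = ⟨nxt s (T s).1 (T s).2, hn1 s (T s).1 (T s).2⟩ := by
    refine ⟨fun s => Nat.rec ⟨(Metric.closedBall (0:ℂ) 1, fun w => w^k),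
      init_GS Ω z t δ k hD hmod hδ⟩ (fun s ih => ⟨nxt s ih.1 ih.2, hn1 s ih.1 ih.2⟩) s,
      rfl, fun s => rfl⟩
  have hGS : ∀ s, GS Ω z t δ k s (T s).1.1 (T s).1.2 := fun s => (T s).2
  have hmono : ∀ s, (T s).1.1 ⊆ (T (s+1)).1.1 := by
    intro s
    rw [hTs s]
    exact hn2 s (T s).1 (T s).2
  have hbnd : ∀ s, ∀ y ∈ (T s).1.1,
      ‖(T (s+1)).1.2 y - (T s).1.2 y‖ ≤ δ * (1/2)^(s+1) := by
    intro s
    rw [hTs s]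
    exact hn3 s (T s).1 (T s).2
  have hmonoLe : ∀ j s, j ≤ s → (T j).1.1 ⊆ (T s).1.1 := by
    intro j s hjs
    induction s, hjs using Nat.le_induction with
    | base => exact subset_rfl
    | succ s hjs ih => exact ih.trans (hmono s)
  have tele : ∀ j y, y ∈ (T j).1.1 → ∀ a, j ≤ a → ∀ b, a ≤ b →
      ‖(T b).1.2 y - (T a).1.2 y‖ ≤ δ * ((1/2)^a - (1/2)^b) := by
    intro j y hy a ha b hab
    induction b, hab using Nat.le_induction with
    | base => simp
    | succ b hab ih =>
      have hyb : y ∈ (T b).1.1 := hmonoLe j b (ha.trans hab) hy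
      calc ‖(T (b+1)).1.2 y - (T a).1.2 y‖
          = ‖((T (b+1)).1.2 y - (T b).1.2 y) + ((T b).1.2 y - (T a).1.2 y)‖ := by
            ring_nf
        _ ≤ ‖(T (b+1)).1.2 y - (T b).1.2 y‖ +
            ‖(T b).1.2 y - (T a).1.2 y‖ := norm_add_le _ _
        _ ≤ δ * (1/2)^(b+1) + δ * ((1/2)^a - (1/2)^b) := add_le_add (hbnd b y hyb) ih
        _ = δ * ((1/2)^a - (1/2)^(b+1)) := by ring
  have cover : ∀ w, w ∈ Ω → ∃ j, w ∈ (T j).1.1 := by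
    intro w hw
    obtain ⟨i, hi⟩ := exists_Bset hΩ isCompact_singleton (singleton_subset_iff.mpr hw)
    exact ⟨i+1, (hGS (i+1)).bsub i (lt_add_one i) (hi rfl)⟩
  -- pointwise limit
  have hcauchy : ∀ w, w ∈ Ω → CauchySeq (fun s => (T s).1.2 w) := by
    intro w hw
    obtain ⟨j, hj⟩ := cover w hw
    rw [Metric.cauchySeq_iff']
    intro ε hε
    obtain ⟨N₁, hN₁⟩ : ∃ N : ℕ, ((1:ℝ)/2) ^ N < ε / δ :=
      exists_pow_lt_of_lt_one (div_pos hε hδ) (by norm_num)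
    refine ⟨max j N₁, fun n hn => ?_⟩
    rw [Complex.dist_eq]
    calc ‖(T n).1.2 w - (T (max j N₁)).1.2 w‖
        ≤ δ * ((1/2)^(max j N₁) - (1/2)^n) := tele j w hj _ (le_max_left _ _) n hn
      _ ≤ δ * (1/2)^(max j N₁) := by
          have : (0:ℝ) ≤ (1/2:ℝ)^n := by positivity
          nlinarith
      _ ≤ δ * (1/2)^N₁ := by
          have := pow_le_pow_of_le_one (by norm_num : (0:ℝ) ≤ 1/2) (by norm_num)
            (le_max_right j N₁)
          nlinarith
      _ < ε := by
          have := (lt_div_iff₀ hδ).mp hN₁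
          nlinarith [this]
  have hφ : ∀ w : ℂ, ∃ c : ℂ, w ∈ Ω → Tendsto (fun s => (T s).1.2 w) atTop (𝓝 c) := by
    intro w
    by_cases hw : w ∈ Ω
    · obtain ⟨l, hl⟩ := cauchySeq_tendsto_of_complete (hcauchy w hw)
      exact ⟨l, fun _ => hl⟩
    · exact ⟨0, fun h => absurd h hw⟩
  choose φ hφ using hφ
  -- limit bound
  have hlim : ∀ j w, w ∈ (T j).1.1 → ‖φ w - (T j).1.2 w‖ ≤ δ * (1/2)^j := by
    intro j w hw
    have hwΩ : w ∈ Ω := (hGS j).sub hw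
    have h1 : Tendsto (fun b => ‖(T b).1.2 w - (T j).1.2 w‖) atTop
        (𝓝 (‖φ w - (T j).1.2 w‖)) :=
      (continuous_norm.tendsto _).comp ((hφ w hwΩ).sub_const _)
    apply le_of_tendsto h1
    filter_upwards [eventually_ge_atTop j] with b hb
    calc ‖(T b).1.2 w - (T j).1.2 w‖
        ≤ δ * ((1/2)^j - (1/2)^b) := tele j w hw j le_rfl b hb
      _ ≤ δ * (1/2)^j := by
          have : (0:ℝ) ≤ (1/2:ℝ)^b := by positivity
          nlinarith
  refine ⟨φ, ?_, ?_, ?_⟩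
  · -- differentiability
    have hTLU : TendstoLocallyUniformlyOn (fun s => (T s).1.2) φ atTop Ω := by
      rw [tendstoLocallyUniformlyOn_iff_forall_isCompact hΩ]
      intro C hCΩ hC
      rw [Metric.tendstoUniformlyOn_iff]
      intro ε hε
      obtain ⟨i, hi⟩ := exists_Bset hΩ hC hCΩ
      obtain ⟨N₁, hN₁⟩ : ∃ N : ℕ, ((1:ℝ)/2) ^ N < ε / δ :=
        exists_pow_lt_of_lt_one (div_pos hε hδ) (by norm_num)
      filter_upwards [eventually_ge_atTop (max (i+1) N₁)] with s hs
      intro y hy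
      have hyK : y ∈ (T s).1.1 := by
        apply hmonoLe (i+1) s (le_trans (le_max_left _ _) hs)
        exact (hGS (i+1)).bsub i (lt_add_one i) (hi hy)
      rw [Complex.dist_eq]
      calc ‖φ y - (T s).1.2 y‖
          ≤ δ * (1/2)^s := hlim s y hyK
        _ ≤ δ * (1/2)^N₁ := by
            have := pow_le_pow_of_le_one (by norm_num : (0:ℝ) ≤ 1/2) (by norm_num)
              (le_trans (le_max_right (i+1) N₁) hs)
            nlinarith
        _ < ε := by
            have := (lt_div_iff₀ hδ).mp hN₁
            nlinarith [this]
    exact hTLU.differentiableOn (Eventually.of_forall fun s => (hGS s).diff) hΩ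
  · -- disk
    intro w hw
    have hw0 : w ∈ (T 0).1.1 := by rw [hT0]; exact hw
    have := hlim 0 w hw0
    rw [hT0] at this
    simpa using this
  · -- values
    intro m
    obtain ⟨j, hj⟩ := cover (z m) (hz m)
    have h1 : Tendsto (fun s => ‖(T s).1.2 (z m) - t m‖) atTop
        (𝓝 (‖φ (z m) - t m‖)) :=
      (continuous_norm.tendsto _).comp ((hφ (z m) (hz m)).sub_const _)
    have h2 : ‖φ (z m) - t m‖ ≤ δ * (1/2) := by
      apply le_of_tendsto h1
      filter_upwards [eventually_ge_atTop j] with s hs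
      calc ‖(T s).1.2 (z m) - t m‖
          ≤ δ * (1/2 - (1/2)^s) := (hGS s).val m (hmonoLe j s hs hj)
        _ ≤ δ * (1/2) := by
            have : (0:ℝ) ≤ (1/2:ℝ)^s := by positivity
            nlinarith
    nlinarith

end Arakelian

open Arakelian in
/-- (Arakelian-type approximation.)  Let `Ω` be a domain containing the
closed unit disc and let `(z_n)` be pairwise distinct points of `Ω` of modulus `> 1`
tending to the boundary of `Ω`.  Split `(z_n)` into pairwise disjoint subsequences
`a_{k,n} = z_{σ(k,n)}` by a bijection `σ : ℕ × ℕ ≃ ℕ`.  Then for each `k` there is a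
holomorphic function `φ_k` on `Ω` with `|φ_k(w) − w^k| < 3^{−(k+1)}` on the closed unit
disc, `|φ_k(a_{k,n}) − (n+1)| < 1` for all `n`, and `|φ_k(a_{j,n})| < 3^{−(k+1)}` whenever
`j ≠ k`. -/
theorem exists_arakelian_functions
    (Ω : Set ℂ) (hΩ : IsOpen Ω) (hΩconn : IsConnected Ω)
    (hD : Metric.closedBall (0 : ℂ) 1 ⊆ Ω)
    (z : ℕ → ℂ) (hz : ∀ n, z n ∈ Ω) (hinj : Function.Injective z)
    (hmod : ∀ n, 1 < ‖z n‖)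
    (hbd : ∀ K ⊆ Ω, IsCompact K → ∃ n₀ : ℕ, ∀ n ≥ n₀, z n ∉ K)
    (σ : ℕ × ℕ ≃ ℕ) :
    ∀ k : ℕ, ∃ φ : ℂ → ℂ, DifferentiableOn ℂ φ Ω ∧
      (∀ w : ℂ, ‖w‖ ≤ 1 → ‖φ w - w ^ k‖ < 1 / 3 ^ (k + 1)) ∧
      (∀ n : ℕ, ‖φ (z (σ (k, n))) - (n + 1 : ℂ)‖ < 1) ∧
      (∀ j n : ℕ, j ≠ k → ‖φ (z (σ (j, n)))‖ < 1 / 3 ^ (k + 1)) := by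
  intro k
  classical
  set t : ℕ → ℂ := fun m => if (σ.symm m).1 = k then ((σ.symm m).2 + 1 : ℂ) else 0 with ht
  set δ : ℝ := 1 / 3 ^ (k + 2) with hδdef
  have hδ : 0 < δ := by positivity
  have hδlt : δ < 1 / 3 ^ (k + 1) := by
    rw [hδdef]
    apply div_lt_div_of_pos_left one_pos (by positivity)
    apply pow_lt_pow_right₀ (by norm_num)
    omega
  have hδ1 : δ < 1 := by
    have : (1:ℝ) / 3 ^ (k+1) ≤ 1 := by
      rw [div_le_one (by positivity)]
      exact one_le_pow₀ (by norm_num)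
    linarith
  obtain ⟨φ, h1, h2, h3⟩ := main Ω z t δ k hΩ hD hz hinj hmod hbd hδ
  refine ⟨φ, h1, ?_, ?_, ?_⟩
  · intro w hw
    have := h2 w (by rwa [mem_closedBall_zero_iff])
    linarith
  · intro n
    have := h3 (σ (k, n))
    rw [ht] at this
    simp only [Equiv.symm_apply_apply, if_pos rfl] at this
    calc ‖φ (z (σ (k, n))) - (n + 1 : ℂ)‖ ≤ δ := this
      _ < 1 := hδ1
  · intro j n hj
    have := h3 (σ (j, n))
    rw [ht] at this
    simp only [Equiv.symm_apply_apply] at this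
    rw [if_neg hj, sub_zero] at this
    linarith
end

section
/- Let Ω be a nonempty open subset of ℂ and let H(Ω) be the topological vector space of holomorphic functions on Ω with the topology of uniform convergence on compact subsets of Ω. Let (f_n) be a sequence in H(Ω) and f ∈ H(Ω), and suppose that (f_n) converges to f weakly, i.e., Λ(f_n) → Λ(f) for every continuous linear functional Λ : H(Ω) → ℂ. Then f_n → f uniformly on every compact subset of Ω. Consequently, S_uc = S_w, where S_w = {(f_n) ∈ H(Ω)^ℕ : f_n → 0 weakly}. -/
open Filter Topology

set_option synthInstance.maxHeartbeats 1000000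
set_option maxHeartbeats 1000000

noncomputable section AuxProof
open Metric
variable {Ω : Set ℂ}

/-- Inclusion of `Hol Ω` into `C(Ω, ℂ)` as a continuous linear map. -/
def inclCLM (Ω : Set ℂ) : Hol Ω →L[ℂ] C(Ω, ℂ) where
  toFun f := (f : C(Ω, ℂ))
  map_add' _ _ := rfl
  map_smul' _ _ := rfl
  cont := continuous_subtype_val

example (z : Ω) : Continuous fun f : C(Ω, ℂ) => f z := continuous_eval_const z

/-- Evaluation at a point as a continuous linear functional on `C(Ω, ℂ)`. -/
def evalCLM (z : Ω) : C(Ω, ℂ) →L[ℂ] ℂ where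
  toFun f := f z
  map_add' _ _ := rfl
  map_smul' _ _ := rfl
  cont := continuous_eval_const z

section SumFun
variable {K : Set Ω} (hK : IsCompact K) {z : ℕ → Ω} (hz : ∀ k, z k ∈ K)
  {c : ℕ → ℝ} (hc : Summable c) (hc0 : ∀ k, 0 ≤ c k)

include hK hz hc hc0 in
theorem sumFun_summable (f : C(Ω, ℂ)) : Summable fun k => ‖(c k : ℂ) * f (z k)‖ := by
  rcases Set.eq_empty_or_nonempty K with rfl | hne
  · exact absurd (hz 0) (Set.notMem_empty _)
  obtain ⟨C, hC⟩ : ∃ C, ∀ x ∈ K, ‖f x‖ ≤ C := by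
    obtain ⟨x0, _, hx0⟩ := hK.exists_isMaxOn hne (f.continuous.norm.continuousOn)
    exact ⟨‖f x0‖, hx0⟩
  have h1 : ∀ k, ‖(c k : ℂ) * f (z k)‖ ≤ c k * C := fun k => by
    rw [norm_mul, Complex.norm_real, Real.norm_of_nonneg (hc0 k)]
    exact mul_le_mul_of_nonneg_left (hC _ (hz k)) (hc0 k)
  exact Summable.of_nonneg_of_le (fun k => norm_nonneg _) h1 (hc.mul_right C)

include hK hz hc hc0 in
theorem sumFun_summable' (f : C(Ω, ℂ)) : Summable fun k => (c k : ℂ) * f (z k) :=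
  (sumFun_summable hK hz hc hc0 f).of_norm

include hK hz hc hc0 in
theorem sumFun_sub_le (f g : C(Ω, ℂ)) {δ : ℝ} (hδ : ∀ x ∈ K, ‖f x - g x‖ ≤ δ) (hδ0 : 0 ≤ δ) :
    ‖(∑' k, (c k : ℂ) * f (z k)) - ∑' k, (c k : ℂ) * g (z k)‖ ≤ (∑' k, c k) * δ := by
  have hsf := sumFun_summable' hK hz hc hc0 f
  have hsg := sumFun_summable' hK hz hc hc0 g
  rw [← Summable.tsum_sub hsf hsg]
  have h2 : ∀ k, ‖(c k : ℂ) * f (z k) - (c k : ℂ) * g (z k)‖ ≤ c k * δ := by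
    intro k
    rw [← mul_sub, norm_mul, Complex.norm_real, Real.norm_of_nonneg (hc0 k)]
    exact mul_le_mul_of_nonneg_left (by simpa using hδ (z k) (hz k)) (hc0 k)
  have hsn : Summable fun k => ‖(c k : ℂ) * f (z k) - (c k : ℂ) * g (z k)‖ :=
    Summable.of_nonneg_of_le (fun k => norm_nonneg _) h2 (hc.mul_right δ)
  calc ‖∑' k, ((c k : ℂ) * f (z k) - (c k : ℂ) * g (z k))‖
      ≤ ∑' k, ‖(c k : ℂ) * f (z k) - (c k : ℂ) * g (z k)‖ := norm_tsum_le_tsum_norm hsn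
    _ ≤ ∑' k, c k * δ := Summable.tsum_le_tsum h2 hsn (hc.mul_right δ)
    _ = (∑' k, c k) * δ := by rw [tsum_mul_right]

/-- `f ↦ ∑ₖ cₖ f (z k)` as a continuous linear functional on `C(Ω, ℂ)`. -/
def sumCLM : C(Ω, ℂ) →L[ℂ] ℂ where
  toFun f := ∑' k, (c k : ℂ) * f (z k)
  map_add' f g := by
    show (∑' k, (c k : ℂ) * (f + g) (z k)) = _
    rw [← Summable.tsum_add (sumFun_summable' hK hz hc hc0 f) (sumFun_summable' hK hz hc hc0 g)]
    congr 1; funext k; rw [ContinuousMap.add_apply]; ring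
  map_smul' a f := by
    show (∑' k, (c k : ℂ) * (a • f) (z k)) = a * ∑' k, (c k : ℂ) * f (z k)
    rw [← tsum_mul_left]
    congr 1; funext k; rw [ContinuousMap.smul_apply, smul_eq_mul]; ring
  cont := by
    rw [continuous_iff_continuousAt]
    intro f₀
    have huc : ∀ S : Set Ω, IsCompact S →
        TendstoUniformlyOn (fun (g : C(Ω, ℂ)) a => g a) f₀ (𝓝 f₀) S :=
      ContinuousMap.tendsto_iff_forall_isCompact_tendstoUniformlyOn.mp tendsto_id
    have hucK := (Metric.tendstoUniformlyOn_iff).mp (huc K hK)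
    rw [ContinuousAt, Metric.tendsto_nhds]
    intro ε hε
    set C : ℝ := ∑' k, c k with hCdef
    have hC0 : 0 ≤ C := tsum_nonneg hc0
    have hδ : 0 < ε / (C + 1) := by positivity
    filter_upwards [hucK _ hδ] with g hg
    rw [dist_eq_norm]
    calc ‖(∑' k, (c k : ℂ) * g (z k)) - ∑' k, (c k : ℂ) * f₀ (z k)‖
        ≤ C * (ε / (C + 1)) := by
          refine sumFun_sub_le hK hz hc hc0 g f₀ (fun x hx => ?_) hδ.le
          simpa [dist_eq_norm, norm_sub_rev] using (hg x hx).le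
      _ = (C / (C + 1)) * ε := by ring
      _ < 1 * ε := by
          refine mul_lt_mul_of_pos_right ((div_lt_one (by positivity)).mpr (by linarith)) hε
      _ = ε := one_mul ε

theorem sumCLM_apply (f : C(Ω, ℂ)) : sumCLM hK hz hc hc0 f = ∑' k, (c k : ℂ) * f (z k) := rfl

end SumFun

theorem quarter_tsum : ∑' j : ℕ, (1/4 : ℝ)^j = 4/3 := by
  rw [tsum_geometric_of_lt_one (by norm_num) (by norm_num)]; norm_num

theorem quarter_summable : Summable fun j : ℕ => (1/4 : ℝ)^j :=
  summable_geometric_of_lt_one (by norm_num) (by norm_num)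

theorem geom_tail (k : ℕ) :
    ∑' j : ℕ, (if k < j then (1/4 : ℝ)^j else 0) = (1/3) * (1/4)^k := by
  have hf : Summable fun j : ℕ => (1/4 : ℝ)^j := quarter_summable
  have hA : Summable fun j : ℕ => (if k < j then (1/4 : ℝ)^j else 0) := by
    refine Summable.of_nonneg_of_le (fun j => by positivity) (fun j => ?_) hf
    split
    · exact le_rfl
    · positivity
  have hB : Summable fun j : ℕ => (if k < j then 0 else (1/4 : ℝ)^j) :=
    summable_of_ne_finset_zero (s := Finset.range (k+1)) (fun j hj => by
      have hkj : k < j := by by_contra h; exact hj (Finset.mem_range.mpr (by omega))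
      simp [hkj])
  have hsplit : (∑' j : ℕ, (1/4 : ℝ)^j) =
      (∑' j : ℕ, (if k < j then (1/4 : ℝ)^j else 0)) +
      ∑' j : ℕ, (if k < j then 0 else (1/4 : ℝ)^j) := by
    rw [← Summable.tsum_add hA hB]
    congr 1; funext j; split <;> simp
  have hBval : (∑' j : ℕ, (if k < j then 0 else (1/4 : ℝ)^j)) =
      ∑ j ∈ Finset.range (k+1), (1/4 : ℝ)^j := by
    rw [tsum_eq_sum (s := Finset.range (k+1)) (fun j hj => by
      have hkj : k < j := by by_contra h; exact hj (Finset.mem_range.mpr (by omega))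
      simp [hkj])]
    refine Finset.sum_congr rfl fun j hj => if_neg (by simp at hj; omega)
  have hgeo : (∑' j : ℕ, (1/4 : ℝ)^j) = 4/3 := by
    rw [tsum_geometric_of_lt_one (by norm_num) (by norm_num)]; norm_num
  have hps : (∑ j ∈ Finset.range (k+1), (1/4 : ℝ)^j) = ((1/4 : ℝ)^(k+1) - 1)/((1/4) - 1) :=
    geom_sum_eq (by norm_num) (k+1)
  rw [hgeo, hBval, hps] at hsplit
  have : (1/4 : ℝ)^(k+1) = (1/4) * (1/4)^k := by rw [pow_succ]; ring
  rw [this] at hsplit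
  have h4 : (1 / 4 * (1 / 4 : ℝ) ^ k - 1) / (1 / 4 - 1) = -(1/3) * (1/4)^k + 4/3 := by
    field_simp; ring
  rw [h4] at hsplit
  linarith

/-- History-carrying recursion gadget. -/
def ghH (G : ℕ → (ℕ → ℕ) → ℕ) : ℕ → ℕ → ℕ
  | 0 => fun _ => 0
  | (k+1) => fun j => if j = k then G k (ghH G k) else ghH G k j

def ghN (G : ℕ → (ℕ → ℕ) → ℕ) (k : ℕ) : ℕ := G k (ghH G k)

theorem ghH_eq (G : ℕ → (ℕ → ℕ) → ℕ) : ∀ k j, j < k → ghH G k j = ghN G j := by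
  intro k
  induction k with
  | zero => exact fun j hj => absurd hj (Nat.not_lt_zero j)
  | succ k ih =>
    intro j hj
    show (if j = k then G k (ghH G k) else ghH G k j) = ghN G j
    by_cases hjk : j = k
    · subst hjk; rw [if_pos rfl]; rfl
    · rw [if_neg hjk]; exact ih j (by omega)

/-- Evaluation at a point of `Ω` as a continuous linear functional on `Hol Ω`. -/
def evalHol (z : Ω) : Hol Ω →L[ℂ] ℂ := (evalCLM z).comp (inclCLM Ω)

@[simp] theorem evalHol_apply (z : Ω) (f : Hol Ω) : evalHol z f = (f : C(Ω, ℂ)) z := rfl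

theorem bounded_of_weak_null (h : ℕ → Hol Ω)
    (hw : ∀ Λ : Hol Ω →L[ℂ] ℂ, Tendsto (fun n => Λ (h n)) atTop (𝓝 (0 : ℂ)))
    (K : Set Ω) (hK : IsCompact K) :
    ∃ M, ∀ n, ∀ z ∈ K, ‖(h n : C(Ω, ℂ)) z‖ ≤ M := by
  by_contra hcon
  push_neg at hcon
  have hne : K.Nonempty := by
    obtain ⟨n, z, hz, -⟩ := hcon 0
    exact ⟨z, hz⟩
  have hpt : ∀ z : Ω, Tendsto (fun n => (h n : C(Ω, ℂ)) z) atTop (𝓝 0) := fun z => hw (evalHol z)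
  -- maximizers on K
  have hmax : ∀ n, ∃ x ∈ K, ∀ y ∈ K, ‖(h n : C(Ω, ℂ)) y‖ ≤ ‖(h n : C(Ω, ℂ)) x‖ := fun n => by
    obtain ⟨x, hx, hmax⟩ := hK.exists_isMaxOn hne ((h n : C(Ω, ℂ)).continuous.norm.continuousOn)
    exact ⟨x, hx, fun y hy => hmax hy⟩
  choose zm hzmK hzm using hmax
  set s : ℕ → ℝ := fun n => ‖(h n : C(Ω, ℂ)) (zm n)‖ with hs_def
  have hs0 : ∀ n, 0 ≤ s n := fun n => norm_nonneg _
  have hunb : ∀ M, ∃ n, M < s n := by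
    intro M
    obtain ⟨n, z, hzK, hMz⟩ := hcon M
    exact ⟨n, lt_of_lt_of_le hMz (hzm n z hzK)⟩
  -- step existence
  have hstep : ∀ (k : ℕ) (prev : ℕ → ℕ), ∃ m,
      ((4:ℝ)^k * (3*k+6) ≤ s m ∧ ∀ j < k, ‖(h m : C(Ω, ℂ)) (zm (prev j))‖ ≤ 1) := by
    intro k prev
    have hev : ∀ᶠ m in atTop, ∀ j ∈ Finset.range k, ‖(h m : C(Ω, ℂ)) (zm (prev j))‖ ≤ 1 := by
      rw [Finset.eventually_all]
      intro j _
      have := Metric.tendsto_nhds.mp (hpt (zm (prev j))) 1 one_pos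
      filter_upwards [this] with m hm
      rw [dist_zero_right] at hm
      exact hm.le
    obtain ⟨N, hN⟩ := eventually_atTop.mp hev
    have hex : ∃ m, N ≤ m ∧ (4:ℝ)^k * (3*k+6) ≤ s m := by
      by_contra hh
      push_neg at hh
      set B : ℝ := (4:ℝ)^k * (3*k+6) + ∑ i ∈ Finset.range N, s i with hB_def
      obtain ⟨n, hn⟩ := hunb B
      have hBsum : ∀ i < N, s i ≤ ∑ i ∈ Finset.range N, s i := fun i hi =>
        Finset.single_le_sum (fun j _ => hs0 j) (Finset.mem_range.mpr hi)
      rcases lt_or_ge n N with hnN | hnN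
      · have : s n ≤ B := le_add_of_nonneg_of_le (by positivity) (hBsum n hnN)
        linarith
      · have h1 : s n < (4:ℝ)^k * (3*k+6) := hh n hnN
        have h2 : (0:ℝ) ≤ ∑ i ∈ Finset.range N, s i := Finset.sum_nonneg fun i _ => hs0 i
        rw [hB_def] at hn
        linarith
    obtain ⟨m, hmN, hm⟩ := hex
    exact ⟨m, hm, fun j hj => hN m hmN j (Finset.mem_range.mpr hj)⟩
  -- the recursion
  set G : ℕ → (ℕ → ℕ) → ℕ := fun k prev => Classical.choose (hstep k prev) with hG_def
  set nn : ℕ → ℕ := ghN G with hnn_def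
  have hspec : ∀ k, (4:ℝ)^k * (3*k+6) ≤ s (nn k) ∧
      ∀ j < k, ‖(h (nn k) : C(Ω, ℂ)) (zm (ghH G k j))‖ ≤ 1 :=
    fun k => Classical.choose_spec (hstep k (ghH G k))
  have hbig : ∀ k, (4:ℝ)^k * (3*k+6) ≤ s (nn k) := fun k => (hspec k).1
  have hsmall : ∀ k, ∀ j < k, ‖(h (nn k) : C(Ω, ℂ)) (zm (nn j))‖ ≤ 1 := by
    intro k j hj
    have := (hspec k).2 j hj
    rwa [ghH_eq G k j hj] at this
  -- the functional
  have hc : Summable fun k : ℕ => (1/4 : ℝ)^k := quarter_summable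
  have hc0 : ∀ k : ℕ, 0 ≤ (1/4 : ℝ)^k := fun k => by positivity
  have hzK : ∀ k : ℕ, zm (nn k) ∈ K := fun k => hzmK (nn k)
  set Λ : Hol Ω →L[ℂ] ℂ := (sumCLM hK hzK hc hc0).comp (inclCLM Ω) with hΛ_def
  have hΛ_apply : ∀ f : Hol Ω,
      Λ f = ∑' k, (((1/4 : ℝ)^k : ℝ) : ℂ) * (f : C(Ω, ℂ)) (zm (nn k)) := fun f => rfl
  -- key lower bound
  have hkey : ∀ k : ℕ, (k : ℝ) ≤ ‖Λ (h (nn k))‖ := by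
    intro k
    set m : ℕ := nn k with hm_def
    set a : ℕ → ℂ := fun j => (((1/4 : ℝ)^j : ℝ) : ℂ) * (h m : C(Ω, ℂ)) (zm (nn j)) with ha_def
    have hsa : Summable a := sumFun_summable' hK hzK hc hc0 (h m : C(Ω, ℂ))
    have hsplit : Λ (h m) = a k + ∑' j, if j = k then 0 else a j := by
      rw [hΛ_apply]; exact Summable.tsum_eq_add_tsum_ite hsa k
    have hak : ‖a k‖ = (1/4 : ℝ)^k * s m := by
      rw [ha_def]
      simp only [norm_mul, Complex.norm_real, Real.norm_of_nonneg (hc0 k)]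
      rfl
    -- bound for the rest
    set γ : ℕ → ℝ := fun j => (1/4 : ℝ)^j + s m * (if k < j then (1/4 : ℝ)^j else 0) with hγ_def
    have hγs : Summable γ := by
      apply Summable.add hc
      apply Summable.mul_left
      refine Summable.of_nonneg_of_le (fun j => by split <;> positivity)
        (fun j => by split <;> simp [hc0 j]) hc
    have hrest_term : ∀ j, ‖if j = k then 0 else a j‖ ≤ γ j := by
      intro j
      have hγ1 : (0:ℝ) ≤ s m * (if k < j then (1/4 : ℝ)^j else 0) := by
        have : (0:ℝ) ≤ (if k < j then (1/4 : ℝ)^j else 0) := by split <;> positivity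
        exact mul_nonneg (hs0 m) this
      by_cases hjk : j = k
      · rw [if_pos hjk, norm_zero, hγ_def]
        have := hc0 j
        simp only []
        linarith
      · rw [if_neg hjk]
        have hnorm : ‖a j‖ = (1/4 : ℝ)^j * ‖(h m : C(Ω, ℂ)) (zm (nn j))‖ := by
          rw [ha_def]
          simp only [norm_mul, Complex.norm_real, Real.norm_of_nonneg (hc0 j)]
        rcases lt_or_ge j k with hlt | hge
        · have hb := hsmall k j hlt
          rw [hnorm]
          have : (1/4 : ℝ)^j * ‖(h m : C(Ω, ℂ)) (zm (nn j))‖ ≤ (1/4 : ℝ)^j * 1 :=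
            mul_le_mul_of_nonneg_left hb (hc0 j)
          rw [hγ_def]; simp only []
          linarith
        · have hkj : k < j := lt_of_le_of_ne hge (fun e => hjk e.symm)
          have hb : ‖(h m : C(Ω, ℂ)) (zm (nn j))‖ ≤ s m := hzm m _ (hzmK (nn j))
          rw [hnorm, hγ_def]
          simp only [if_pos hkj]
          have : (1/4 : ℝ)^j * ‖(h m : C(Ω, ℂ)) (zm (nn j))‖ ≤ (1/4 : ℝ)^j * s m :=
            mul_le_mul_of_nonneg_left hb (hc0 j)
          have h0 : (0:ℝ) ≤ (1/4 : ℝ)^j := hc0 j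
          nlinarith
    have hrest_sum : Summable fun j => ‖if j = k then 0 else a j‖ := by
      refine Summable.of_nonneg_of_le (fun j => norm_nonneg _) hrest_term hγs
    have hrest : ‖∑' j, if j = k then 0 else a j‖ ≤ 4/3 + s m * ((1/3) * (1/4 : ℝ)^k) := by
      calc ‖∑' j, if j = k then 0 else a j‖ ≤ ∑' j, ‖if j = k then 0 else a j‖ :=
            norm_tsum_le_tsum_norm hrest_sum
        _ ≤ ∑' j, γ j := Summable.tsum_le_tsum hrest_term hrest_sum hγs
        _ = 4/3 + s m * ((1/3) * (1/4 : ℝ)^k) := by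
            have hA : Summable fun j : ℕ => (if k < j then (1/4 : ℝ)^j else 0) := by
              refine Summable.of_nonneg_of_le (fun j => by split <;> positivity)
                (fun j => by split <;> simp [hc0 j]) hc
            rw [hγ_def, Summable.tsum_add hc (hA.mul_left (s m)), tsum_mul_left, geom_tail k,
              quarter_tsum]
    -- put it together
    have h2 : ‖a k‖ ≤ ‖Λ (h m)‖ + ‖∑' j, if j = k then 0 else a j‖ := by
      rw [hsplit]
      simpa using norm_add_le (a k + ∑' j, if j = k then 0 else a j)
        (-∑' j, if j = k then 0 else a j)
    have hpow : (1/4 : ℝ)^k * (4:ℝ)^k = 1 := by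
      rw [← mul_pow]; norm_num
    have hX : 3*(k:ℝ)+6 ≤ (1/4 : ℝ)^k * s m := by
      have hmul := mul_le_mul_of_nonneg_left (hbig k) (hc0 k)
      rw [← mul_assoc, hpow, one_mul] at hmul
      exact hmul
    have hx : s m * ((1/3) * (1/4 : ℝ)^k) = (1/3) * ((1/4 : ℝ)^k * s m) := by ring
    rw [hak] at h2
    rw [hx] at hrest
    linarith
  -- contradiction with boundedness of Λ (h n)
  have hb1 : ∀ᶠ n in atTop, ‖Λ (h n)‖ < 1 := by
    filter_upwards [Metric.tendsto_nhds.mp (hw Λ) 1 one_pos] with n hn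
    rwa [dist_zero_right] at hn
  obtain ⟨N, hN⟩ := eventually_atTop.mp hb1
  set B : ℝ := 1 + ∑ i ∈ Finset.range N, ‖Λ (h i)‖ with hB_def
  have hB : ∀ n, ‖Λ (h n)‖ ≤ B := by
    intro n
    rcases lt_or_ge n N with hnN | hnN
    · have h1 : ‖Λ (h n)‖ ≤ ∑ i ∈ Finset.range N, ‖Λ (h i)‖ :=
        Finset.single_le_sum (f := fun i => ‖Λ (h i)‖) (fun i _ => norm_nonneg _)
          (Finset.mem_range.mpr hnN)
      linarith
    · have h2 : (0:ℝ) ≤ ∑ i ∈ Finset.range N, ‖Λ (h i)‖ :=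
        Finset.sum_nonneg fun i _ => norm_nonneg _
      have := (hN n hnN).le
      linarith
  have hk := hkey (Nat.ceil B + 1)
  have h1 : ((Nat.ceil B + 1 : ℕ) : ℝ) ≤ B := le_trans hk (hB _)
  have h2 : B ≤ (Nat.ceil B : ℝ) := Nat.le_ceil B
  push_cast at h1
  linarith

theorem tendstoUniformlyOn_of_pointwise (hΩ : IsOpen Ω) (h : ℕ → Hol Ω)
    (hpt : ∀ z : Ω, Tendsto (fun n => (h n : C(Ω, ℂ)) z) atTop (𝓝 0))
    (hbd : ∀ S : Set Ω, IsCompact S → ∃ M, ∀ n, ∀ z ∈ S, ‖(h n : C(Ω, ℂ)) z‖ ≤ M)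
    (K : Set Ω) (hK : IsCompact K) :
    TendstoUniformlyOn (fun n (z : Ω) => (h n : C(Ω, ℂ)) z) 0 atTop K := by
  -- choose holomorphic representatives
  have hrep : ∀ n, ∃ g : ℂ → ℂ, DifferentiableOn ℂ g Ω ∧
      ∀ z : Ω, (h n : C(Ω, ℂ)) z = g z := fun n => (h n).2
  choose g hg hge using hrep
  -- local Lipschitz bounds
  have hlip : ∀ w : ℂ, w ∈ Ω → ∃ r > 0, ∃ L ≥ (0:ℝ), ball w r ⊆ Ω ∧
      ∀ n, ∀ v ∈ ball w r, ‖g n v - g n w‖ ≤ L * ‖v - w‖ := by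
    intro w hw
    obtain ⟨r0, hr0, hball⟩ := Metric.isOpen_iff.mp hΩ w hw
    set r : ℝ := r0 / 3 with hr_def
    have hr : 0 < r := by positivity
    have hcb : closedBall w (2*r) ⊆ Ω := fun x hx => hball (by
      rw [mem_closedBall] at hx
      rw [mem_ball]
      calc dist x w ≤ 2*r := hx
        _ < r0 := by rw [hr_def]; linarith)
    -- uniform bound on the closed ball
    have hKb : IsCompact {x : Ω | (x : ℂ) ∈ closedBall w (2*r)} := by
      rw [Subtype.isCompact_iff]
      have : Subtype.val '' {x : Ω | (x : ℂ) ∈ closedBall w (2*r)} = closedBall w (2*r) ∩ Ω := by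
        ext x
        constructor
        · rintro ⟨y, hy, rfl⟩; exact ⟨hy, y.2⟩
        · rintro ⟨h1, h2⟩; exact ⟨⟨x, h2⟩, h1, rfl⟩
      rw [this, Set.inter_eq_self_of_subset_left hcb]
      exact isCompact_closedBall w (2*r)
    obtain ⟨M, hM⟩ := hbd _ hKb
    have hgM : ∀ n, ∀ x ∈ closedBall w (2*r), ‖g n x‖ ≤ M := by
      intro n x hx
      have hxΩ : x ∈ Ω := hcb hx
      have := hM n ⟨x, hxΩ⟩ hx
      rwa [hge n ⟨x, hxΩ⟩] at this
    have hM0 : 0 ≤ M := le_trans (norm_nonneg _) (hgM 0 w (mem_closedBall_self (by positivity)))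
    -- derivative bound on ball w r
    have hderiv : ∀ n, ∀ u ∈ ball w r, ‖deriv (g n) u‖ ≤ (2*M+1)/r := by
      intro n u hu
      have hub : ball u r ⊆ closedBall w (2*r) := fun x hx => by
        rw [mem_ball] at hx hu
        rw [mem_closedBall]
        calc dist x w ≤ dist x u + dist u w := dist_triangle x u w
          _ ≤ 2*r := by linarith
      refine Complex.norm_deriv_le_div_of_mapsTo_ball
        ((hg n).mono (fun x hx => hcb (hub hx))) ?_ hr
      intro x hx
      rw [mem_closedBall]; refine le_of_lt ?_
      calc dist (g n x) (g n u) ≤ ‖g n x‖ + ‖g n u‖ := by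
            rw [dist_eq_norm]; exact norm_sub_le _ _
        _ ≤ M + M := add_le_add (hgM n x (hub hx)) (hgM n u (hub (mem_ball_self hr)))
        _ < 2*M+1 := by linarith
    refine ⟨r, hr, (2*M+1)/r, by positivity, fun x hx => hcb (by
      rw [mem_ball] at hx
      rw [mem_closedBall]
      linarith), ?_⟩
    intro n v hv
    have hconv : Convex ℝ (ball w r) := convex_ball w r
    have hfd : ∀ x ∈ ball w r, HasFDerivWithinAt (g n)
        (ContinuousLinearMap.smulRight (1 : ℂ →L[ℂ] ℂ) (deriv (g n) x)) (ball w r) x := by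
      intro x hx
      have hxΩ : x ∈ Ω := hcb (by
        rw [mem_ball] at hx
        rw [mem_closedBall]
        linarith [hx])
      have : DifferentiableAt ℂ (g n) x :=
        ((hg n).differentiableAt (hΩ.mem_nhds hxΩ))
      exact (this.hasDerivAt.hasFDerivAt).hasFDerivWithinAt
    have hbound : ∀ x ∈ ball w r, ‖ContinuousLinearMap.smulRight (1 : ℂ →L[ℂ] ℂ)
        (deriv (g n) x)‖ ≤ (2*M+1)/r := by
      intro x hx
      rw [ContinuousLinearMap.norm_smulRight_apply, norm_one, one_mul]
      exact hderiv n x hx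
    have := hconv.norm_image_sub_le_of_norm_hasFDerivWithin_le hfd hbound
      (mem_ball_self hr) hv
    exact this
  -- ε-net argument
  set K' : Set ℂ := Subtype.val '' K with hK'_def
  have hK'c : IsCompact K' := hK.image continuous_subtype_val
  have hK'Ω : K' ⊆ Ω := by rintro x ⟨y, -, rfl⟩; exact y.2
  rw [Metric.tendstoUniformlyOn_iff]
  intro ε hε
  have hlip' : ∀ w : ℂ, ∃ r, 0 < r ∧ ∃ L, 0 ≤ L ∧
      (w ∈ Ω → ∀ n, ∀ v ∈ ball w r, ‖g n v - g n w‖ ≤ L * ‖v - w‖) := by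
    intro w
    by_cases hw : w ∈ Ω
    · obtain ⟨r, hr, L, hL, -, hlipw⟩ := hlip w hw
      exact ⟨r, hr, L, hL, fun _ => hlipw⟩
    · exact ⟨1, one_pos, 0, le_rfl, fun hw' => absurd hw' hw⟩
  choose rr hrr LL hLL hLip using hlip'
  set ρ : ℂ → ℝ := fun w => min (rr w) (ε / (2*(LL w + 1))) with hρ_def
  have hρ0 : ∀ w, 0 < ρ w := fun w => lt_min (hrr w) (by have := hLL w; positivity)
  have hcov : K' ⊆ ⋃ w ∈ K', ball w (ρ w) := fun w hw =>
    Set.mem_biUnion hw (mem_ball_self (hρ0 w))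
  obtain ⟨t, htK, htfin, htcov⟩ :=
    hK'c.elim_finite_subcover_image (fun w _ => isOpen_ball) hcov
  have hev : ∀ᶠ n in atTop, ∀ w ∈ t, ‖g n w‖ < ε/2 := by
    rw [eventually_all_finite htfin]
    intro w hw
    have hwΩ : w ∈ Ω := hK'Ω (htK hw)
    filter_upwards [Metric.tendsto_nhds.mp (hpt ⟨w, hwΩ⟩) (ε/2) (by positivity)] with n hn
    rw [dist_zero_right, hge n ⟨w, hwΩ⟩] at hn
    exact hn
  filter_upwards [hev] with n hn x hxK
  have hx' : (x : ℂ) ∈ K' := ⟨x, hxK, rfl⟩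
  obtain ⟨w, hwt, hxw⟩ := Set.mem_iUnion₂.mp (htcov hx')
  have hwΩ : w ∈ Ω := hK'Ω (htK hwt)
  have hxball : (x : ℂ) ∈ ball w (rr w) :=
    mem_ball.mpr (lt_of_lt_of_le (mem_ball.mp hxw) (min_le_left _ _))
  have h1 : ‖g n x - g n w‖ ≤ LL w * ‖(x : ℂ) - w‖ := hLip w hwΩ n x hxball
  have h2 : ‖(x : ℂ) - w‖ ≤ ε / (2*(LL w + 1)) := by
    have := mem_ball.mp hxw
    rw [dist_eq_norm] at this
    exact le_trans this.le (min_le_right _ _)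
  have h3 : LL w * ‖(x : ℂ) - w‖ ≤ ε/2 := by
    have hq : LL w / (LL w + 1) ≤ 1 :=
      (div_le_one (by have := hLL w; positivity)).mpr (by linarith [hLL w])
    have heq : LL w * (ε / (2*(LL w + 1))) = ε/2 * (LL w / (LL w + 1)) := by
      field_simp
    calc LL w * ‖(x : ℂ) - w‖ ≤ LL w * (ε / (2*(LL w + 1))) :=
          mul_le_mul_of_nonneg_left h2 (hLL w)
      _ = ε/2 * (LL w / (LL w + 1)) := heq
      _ ≤ ε/2 * 1 := mul_le_mul_of_nonneg_left hq (by positivity)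
      _ = ε/2 := mul_one _
  have h4 : ‖g n w‖ < ε/2 := hn w hwt
  have h5 : ‖(h n : C(Ω, ℂ)) x‖ < ε := by
    rw [hge n x]
    calc ‖g n x‖ ≤ ‖g n x - g n w‖ + ‖g n w‖ := by
          have := norm_add_le (g n x - g n w) (g n w)
          simpa using this
      _ < ε/2 + ε/2 := add_lt_add_of_le_of_lt (le_trans h1 h3) h4
      _ = ε := by ring
  rw [Pi.zero_apply, dist_zero_left]
  exact h5

end AuxProof

/-- In `H(Ω)`, weak convergence of a sequence implies uniform
convergence on every compact subset of `Ω`; consequently `S_uc = S_w`. -/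
theorem weak_convergence_iff_compact_convergence
    (Ω : Set ℂ) (hΩ : IsOpen Ω) (hne : Ω.Nonempty) :
    (∀ (f : ℕ → Hol Ω) (g : Hol Ω),
      (∀ Λ : Hol Ω →L[ℂ] ℂ, Tendsto (fun n => Λ (f n)) atTop (𝓝 (Λ g))) →
      ∀ K : Set Ω, IsCompact K →
        TendstoUniformlyOn (fun n (z : Ω) => (f n : C(Ω, ℂ)) z)
          (fun z : Ω => (g : C(Ω, ℂ)) z) atTop K) ∧
    Suc Ω = {F : HSeq Ω |
      ∀ Λ : Hol Ω →L[ℂ] ℂ, Tendsto (fun n => Λ (F n)) atTop (𝓝 (0 : ℂ))} := by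
  have main : ∀ (f : ℕ → Hol Ω) (g : Hol Ω),
      (∀ Λ : Hol Ω →L[ℂ] ℂ, Tendsto (fun n => Λ (f n)) atTop (𝓝 (Λ g))) →
      ∀ K : Set Ω, IsCompact K →
        TendstoUniformlyOn (fun n (z : Ω) => (f n : C(Ω, ℂ)) z)
          (fun z : Ω => (g : C(Ω, ℂ)) z) atTop K := by
    intro f g hw K hK
    set h : ℕ → Hol Ω := fun n => f n - g with hh_def
    have hw0 : ∀ Λ : Hol Ω →L[ℂ] ℂ, Tendsto (fun n => Λ (h n)) atTop (𝓝 (0 : ℂ)) := by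
      intro Λ
      have h1 := (hw Λ).sub_const (Λ g)
      rw [sub_self] at h1
      convert h1 using 2 with n
      rw [hh_def]
      exact map_sub Λ (f n) g
    have hpt : ∀ z : Ω, Tendsto (fun n => (h n : C(Ω, ℂ)) z) atTop (𝓝 0) :=
      fun z => hw0 (evalHol z)
    have hbd := bounded_of_weak_null h hw0
    have huc := tendstoUniformlyOn_of_pointwise hΩ h hpt hbd K hK
    rw [Metric.tendstoUniformlyOn_iff] at huc ⊢
    intro ε hε
    filter_upwards [huc ε hε] with n hn x hx
    have := hn x hx
    rw [Pi.zero_apply, dist_zero_left] at this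
    rw [dist_eq_norm]
    have hcoe : (h n : C(Ω, ℂ)) x = (f n : C(Ω, ℂ)) x - (g : C(Ω, ℂ)) x := by
      rw [hh_def]; simp
    rw [hcoe] at this
    rwa [norm_sub_rev] at this
  refine ⟨main, ?_⟩
  ext F
  simp only [Set.mem_setOf_eq]
  constructor
  · intro hF Λ
    have hconv : Tendsto (fun n => (F n : C(Ω, ℂ))) atTop (𝓝 (0 : C(Ω, ℂ))) := by
      rw [ContinuousMap.tendsto_iff_forall_isCompact_tendstoUniformlyOn]
      intro K hK
      have := hF K hK
      refine this.congr_right ?_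
      intro x _
      simp
    have htend : Tendsto F atTop (𝓝 (0 : Hol Ω)) := by
      rw [tendsto_subtype_rng]
      simpa using hconv
    have := (Λ.continuous.tendsto (0 : Hol Ω)).comp htend
    simpa [map_zero, Function.comp_def] using this
  · intro hF K hK
    have hw : ∀ Λ : Hol Ω →L[ℂ] ℂ,
        Tendsto (fun n => Λ (F n)) atTop (𝓝 (Λ (0 : Hol Ω))) := by
      intro Λ
      rw [map_zero]
      exact hF Λ
    have := main F 0 hw K hK
    refine this.congr_right ?_
    intro x _
    simp
end
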